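/- arXiv:2301.02569 — 3 statements merged into one kernel-verified Lean document; each statement's English description precedes it below -/
import Mathlib

section
/- For any graph G, the matched treedepth of G is at most 2·td(G) − 2, where td(G) is the treedepth of G. -/
open SimpleGraph

/-- An elimination tree (forest) of a graph `G`, encoded via its strict
ancestor relation `anc`: ancestors of each vertex form a chain, every edge of
`G` joins comparable vertices, and the vertex set of every subtree induces a
connected subgraph (so the subtrees of any node are exactly the connected
components left after deleting the node and its ancestors, as in the
recursive definition). -/
structure ElimTree {V : Type} (G : SimpleGraph V) where
  anc : V → V → Prop
  trans : ∀ a b c, anc a b → anc b c → anc a c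
  irrefl : ∀ a, ¬ anc a a
  chainAnc : ∀ a b c, anc a c → anc b c → a = b ∨ anc a b ∨ anc b a
  edgeComp : ∀ u v, G.Adj u v → anc u v ∨ anc v u
  subtreeConn : ∀ v, (G.induce {w | w = v ∨ anc v w}).Connected

/-- Depth: maximum number of vertices on a root-to-leaf path. -/
noncomputable def ElimTree.depth {V : Type} [Fintype V] {G : SimpleGraph V}
    (T : ElimTree G) : ℕ :=
  Finset.univ.sup fun v => {u | T.anc u v}.ncard + 1

/-- Treedepth: minimum depth of an elimination tree. -/
noncomputable def treedepth {V : Type} [Fintype V] (G : SimpleGraph V) : ℕ :=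
  sInf {d | ∃ T : ElimTree G, T.depth = d}

/-- The matched condition on a root-to-leaf path `(v₁, …, v_k)` (as a list):
if `k` is even, the pairs `v₁v₂, v₃v₄, …, v_{k-1}v_k` are edges (a matching);
if `k` is odd, there is a position `p` (0-based, odd) such that consecutive
pairs form edges, with the vertex at position `p` used twice. -/
def MatchedList {V : Type} (G : SimpleGraph V) (l : List V) : Prop :=
  (Even l.length ∧ ∀ (j : ℕ) (h : 2 * j + 1 < l.length),
      G.Adj (l.get ⟨2 * j, by omega⟩) (l.get ⟨2 * j + 1, h⟩)) ∨
  (Odd l.length ∧ ∃ p : ℕ, Odd p ∧ ∃ _hp : p + 1 < l.length,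
      (∀ (j : ℕ) (_h : 2 * j + 1 ≤ p),
        G.Adj (l.get ⟨2 * j, by omega⟩) (l.get ⟨2 * j + 1, by omega⟩)) ∧
      (∀ (b : ℕ) (h : p + 2 * b + 1 < l.length),
        G.Adj (l.get ⟨p + 2 * b, by omega⟩) (l.get ⟨p + 2 * b + 1, h⟩)))

/-- A matched elimination tree: every root-to-leaf path (enumerated in order
from the root) satisfies the matched condition. -/
def ElimTree.IsMatched {V : Type} {G : SimpleGraph V} (T : ElimTree G) : Prop :=
  ∀ v : V, (∀ w, ¬ T.anc v w) →
    ∀ l : List V, l.Pairwise T.anc → (∀ u, u ∈ l ↔ (T.anc u v ∨ u = v)) →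
      MatchedList G l

/-- Matched treedepth: minimum depth of a matched elimination tree. -/
noncomputable def mtd {V : Type} [Fintype V] (G : SimpleGraph V) : ℕ :=
  sInf {d | ∃ T : ElimTree G, T.IsMatched ∧ T.depth = d}


namespace MTDAux
variable {V : Type}

/-- Walks of `G` staying inside a set `t`. -/
inductive SW (G : SimpleGraph V) (t : Set V) : V → V → Prop
  | refl {v} (hv : v ∈ t) : SW G t v v
  | cons {u v w} (hu : u ∈ t) (h : G.Adj u v) (hw : SW G t v w) : SW G t u w

variable {G : SimpleGraph V} {t s : Set V}

lemma SW.mem_left {u v : V} (h : SW G t u v) : u ∈ t := by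
  cases h with
  | refl hv => exact hv
  | cons hu _ _ => exact hu

lemma SW.mem_right {u v : V} (h : SW G t u v) : v ∈ t := by
  induction h with
  | refl hv => exact hv
  | cons _ _ _ ih => exact ih

lemma SW.trans' {u v w : V} (h : SW G t u v) (h' : SW G t v w) : SW G t u w := by
  induction h with
  | refl _ => exact h'
  | cons hu hadj _ ih => exact SW.cons hu hadj (ih h')

lemma SW.symm' {u v : V} (h : SW G t u v) : SW G t v u := by
  induction h with
  | refl hv => exact SW.refl hv
  | cons hu hadj hw ih =>
      exact ih.trans' (SW.cons hw.mem_left hadj.symm (SW.refl hu))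

/-- The connected component of `u` inside `t`. -/
def comp (G : SimpleGraph V) (t : Set V) (u : V) : Set V := {v | SW G t u v}

lemma mem_comp_self {u : V} (hu : u ∈ t) : u ∈ comp G t u := SW.refl hu

lemma comp_subset {u : V} : comp G t u ⊆ t := fun _ h => SW.mem_right h

lemma comp_eq_of_mem {u v : V} (h : v ∈ comp G t u) : comp G t u = comp G t v := by
  ext w
  exact ⟨fun hw => (SW.symm' h).trans' hw, fun hw => SW.trans' h hw⟩

lemma mem_comp_of_adj {u v : V} (hu : u ∈ t) (hv : v ∈ t) (h : G.Adj u v) :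
    v ∈ comp G t u := SW.cons hu h (SW.refl hv)

/-- `s` induces a connected subgraph. -/
def Conn (G : SimpleGraph V) (s : Set V) : Prop := (G.induce s).Connected

lemma walk_sw : ∀ {a b : s}, (G.induce s).Walk a b → SW G s a b := by
  intro a b w
  induction w with
  | nil => exact SW.refl (Subtype.coe_prop _)
  | cons hadj _ ih => exact SW.cons (Subtype.coe_prop _) hadj ih

lemma Conn.sw (h : Conn G s) {u v : V} (hu : u ∈ s) (hv : v ∈ s) : SW G s u v := by
  obtain ⟨w⟩ := h.preconnected ⟨u, hu⟩ ⟨v, hv⟩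
  exact walk_sw w

lemma conn_of_sw (hne : s.Nonempty) (h : ∀ u v, u ∈ s → v ∈ s → SW G s u v) :
    Conn G s := by
  have hpre : (G.induce s).Preconnected := by
    rintro ⟨u, hu⟩ ⟨v, hv⟩
    have hw := h u v hu hv
    clear h
    induction hw with
    | refl hv => rfl
    | @cons a b c ha hadj hw ih =>
        exact (SimpleGraph.Adj.reachable
          (show (G.induce s).Adj ⟨a, ha⟩ ⟨b, hw.mem_left⟩ from hadj)).trans (ih hw.mem_left hv)
  have : Nonempty s := ⟨⟨hne.choose, hne.choose_spec⟩⟩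
  exact ⟨hpre⟩

lemma sw_comp_aux {u : V} : ∀ {a v : V}, SW G t a v → SW G t u a → SW G (comp G t u) a v := by
  intro a v ha
  induction ha with
  | refl hv => intro h2; exact SW.refl h2
  | @cons a b c ha hadj hw ih =>
      intro h2
      have step : SW G t a b := SW.cons ha hadj (SW.refl hw.mem_left)
      have h3 : SW G t u b := h2.trans' step
      exact SW.cons h2 hadj (ih h3)

lemma sw_comp {u v : V} (h : SW G t u v) : SW G (comp G t u) u v :=
  sw_comp_aux h (SW.refl h.mem_left)

lemma conn_comp {u : V} (hu : u ∈ t) : Conn G (comp G t u) := by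
  refine conn_of_sw ⟨u, mem_comp_self hu⟩ (fun a b ha hb => ?_)
  have h1 : SW G (comp G t u) u a := sw_comp ha
  have h2 : SW G (comp G t u) u b := sw_comp hb
  exact h1.symm'.trans' h2

lemma conn_singleton (x : V) : Conn G {x} :=
  conn_of_sw ⟨x, rfl⟩ (fun a b ha hb => by
    rcases ha with rfl; rcases hb with rfl; exact SW.refl rfl)

/-- Each component of `s \ {x}` contains a neighbour of `x`. -/
lemma exists_adj_of_comp (hconn : Conn G s) {x v : V} (hx : x ∈ s) (hv : v ∈ s \ {x}) :
    ∃ z, G.Adj x z ∧ SW G (s \ {x}) z v := by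
  have key : ∀ u w, SW G s u w → w ≠ x →
      (∃ z, G.Adj x z ∧ SW G (s \ {x}) z w) ∨ (u ≠ x ∧ SW G (s \ {x}) u w) := by
    intro u w h
    induction h with
    | refl hv => intro hne; exact Or.inr ⟨hne, SW.refl ⟨hv, hne⟩⟩
    | @cons a b c ha hadj hw ih =>
        intro hne
        rcases ih hne with h1 | ⟨hbx, h2⟩
        · exact Or.inl h1
        · by_cases hax : a = x
          · subst hax; exact Or.inl ⟨b, hadj, h2⟩
          · exact Or.inr ⟨hax, SW.cons ⟨ha, hax⟩ hadj h2⟩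
  have hw := hconn.sw hx hv.1
  rcases key x v hw hv.2 with h1 | ⟨hxx, _⟩
  · exact h1
  · exact absurd rfl hxx

/-- Connected set with two points: every point has a neighbour inside. -/
lemma exists_adj_mem (hconn : Conn G s) {x y : V} (hx : x ∈ s) (hy : y ∈ s) (hne : y ≠ x) :
    ∃ z, z ∈ s ∧ G.Adj x z := by
  obtain ⟨z, hz1, hz2⟩ := exists_adj_of_comp hconn hx ⟨hy, hne⟩
  exact ⟨z, (hz2.mem_left).1, hz1⟩

section WithDefs
variable {V : Type} {G : SimpleGraph V} {s t : Set V}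

/-! ### List lemmas -/

lemma pairwise_nodup {R : V → V → Prop} (hirr : ∀ a, ¬ R a a) {l : List V}
    (hp : l.Pairwise R) : l.Nodup :=
  hp.imp (fun {a b} (h : R a b) (heq : a = b) => hirr b (heq ▸ h))

lemma eq_singleton_list {l : List V} {v : V} (hnd : l.Nodup) (hm : ∀ u, u ∈ l ↔ u = v) :
    l = [v] := by
  cases l with
  | nil => exact absurd ((hm v).mpr rfl) List.not_mem_nil
  | cons a l' =>
      have ha : a = v := (hm a).mp List.mem_cons_self
      subst ha
      have h0 : l' = [] := by
        rw [List.eq_nil_iff_forall_not_mem]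
        intro u hu
        have h1 := (hm u).mp (List.mem_cons_of_mem _ hu)
        subst h1
        exact (List.nodup_cons.mp hnd).1 hu
      rw [h0]

lemma head_extract {R : V → V → Prop} (hirr : ∀ a, ¬ R a a) {l : List V} {M : Set V} {r : V}
    (hp : l.Pairwise R) (hm : ∀ u, u ∈ l ↔ u ∈ M) (hr : r ∈ M)
    (hmin : ∀ u, ¬ R u r) (hall : ∀ u ∈ M, u ≠ r → R r u) :
    ∃ l', l = r :: l' ∧ l'.Pairwise R ∧ ∀ u, u ∈ l' ↔ (u ∈ M ∧ u ≠ r) := by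
  cases l with
  | nil => exact absurd ((hm r).mpr hr) List.not_mem_nil
  | cons a l' =>
      obtain ⟨hal', hpl'⟩ := List.pairwise_cons.mp hp
      by_cases hae : a = r
      · subst hae
        refine ⟨l', rfl, hpl', fun u => ⟨fun hu => ?_, fun ⟨hu1, hu2⟩ => ?_⟩⟩
        · refine ⟨(hm u).mp (List.mem_cons_of_mem _ hu), fun he => ?_⟩
          subst he
          exact hirr _ (hal' _ hu)
        · rcases List.mem_cons.mp ((hm u).mpr hu1) with he | h
          · exact absurd he hu2
          · exact h
      · exfalso
        rcases List.mem_cons.mp ((hm r).mpr hr) with he | h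
        · exact hae he.symm
        · exact hmin a (hal' r h)

/-! ### MatchedList constructors -/

lemma get_congr {l : List V} {m n : ℕ} (h : m = n) (hm : m < l.length) :
    l.get ⟨m, hm⟩ = l.get ⟨n, h ▸ hm⟩ := by subst h; rfl

lemma matched_pair {w x : V} (h : G.Adj w x) : MatchedList G [w, x] := by
  refine Or.inl ⟨⟨1, rfl⟩, fun j hj => ?_⟩
  have hj0 : j = 0 := by simp at hj; omega
  subst hj0
  exact h

lemma not_matched_singleton (w : V) : ¬ MatchedList G [w] := by
  rintro (⟨⟨k, hk⟩, -⟩ | ⟨-, p, -, hlt, -⟩)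
  · simp at hk; omega
  · simp at hlt

lemma matched_three {w x y : V} (h1 : G.Adj w x) (h2 : G.Adj x y) :
    MatchedList G [w, x, y] := by
  refine Or.inr ⟨⟨1, rfl⟩, 1, ⟨0, rfl⟩, by simp, fun j hj => ?_, fun b hb => ?_⟩
  · have hj0 : j = 0 := by omega
    subst hj0
    exact h1
  · have hb0 : b = 0 := by simp at hb; omega
    subst hb0
    have e1 : 1 + 2 * 0 = 1 := by norm_num
    have e2 : 1 + 2 * 0 + 1 = 2 := by norm_num
    rw [get_congr e1, get_congr e2]
    exact h2

lemma matched_cons2 {w x : V} (hwx : G.Adj w x) {l : List V} (hl : MatchedList G l) :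
    MatchedList G (w :: x :: l) := by
  rcases hl with ⟨⟨k, hk⟩, hp⟩ | ⟨⟨k, hk⟩, p, hpo, hp1, hhead, htail⟩
  · refine Or.inl ⟨⟨k + 1, by simp; omega⟩, fun j hj => ?_⟩
    simp only [List.length_cons] at hj
    cases j with
    | zero => exact hwx
    | succ j' =>
        have e1 : 2 * (j' + 1) = 2 * j' + 2 := by ring
        have e2 : 2 * (j' + 1) + 1 = (2 * j' + 1) + 2 := by ring
        rw [get_congr e1, get_congr e2]
        have hlt : 2 * j' + 1 < l.length := by omega
        have := hp j' hlt
        exact this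
  · refine Or.inr ⟨⟨k + 1, by simp; omega⟩, p + 2, ?_, ?_, fun j hj => ?_, fun b hb => ?_⟩
    · obtain ⟨m, hm⟩ := hpo; exact ⟨m + 1, by omega⟩
    · simp only [List.length_cons]; omega
    · cases j with
      | zero => exact hwx
      | succ j' =>
          have e1 : 2 * (j' + 1) = 2 * j' + 2 := by ring
          have e2 : 2 * (j' + 1) + 1 = (2 * j' + 1) + 2 := by ring
          rw [get_congr e1, get_congr e2]
          exact hhead j' (by omega)
    · simp only [List.length_cons] at hb
      have e1 : p + 2 + 2 * b = (p + 2 * b) + 2 := by ring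
      have e2 : p + 2 + 2 * b + 1 = (p + 2 * b + 1) + 2 := by ring
      rw [get_congr e1, get_congr e2]
      exact htail b (by omega)

end WithDefs

/-! ### Relative treedepth -/

variable {V : Type} {G : SimpleGraph V} {s t : Set V}

def RTD (G : SimpleGraph V) (s : Set V) (e : ℕ) : Prop :=
  ∃ anc : V → V → Prop,
    (∀ a b, anc a b → a ∈ s ∧ b ∈ s) ∧
    (∀ a b c, anc a b → anc b c → anc a c) ∧
    (∀ a, ¬ anc a a) ∧
    (∀ a b c, anc a c → anc b c → a = b ∨ anc a b ∨ anc b a) ∧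
    (∀ u v, u ∈ s → v ∈ s → G.Adj u v → anc u v ∨ anc v u) ∧
    (∀ v ∈ s, {u | anc u v}.ncard + 1 ≤ e)

variable [Fintype V]

lemma RTD.mono {e : ℕ} (hsub : t ⊆ s) (h : RTD G s e) : RTD G t e := by
  obtain ⟨anc, hsupp, htr, hirr, hch, hedge, hdep⟩ := h
  refine ⟨fun a b => anc a b ∧ a ∈ t ∧ b ∈ t,
    fun a b h => ⟨h.2.1, h.2.2⟩,
    fun a b c h1 h2 => ⟨htr _ _ _ h1.1 h2.1, h1.2.1, h2.2.2⟩,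
    fun a h => hirr a h.1,
    fun a b c h1 h2 => ?_,
    fun u v hu hv hadj => ?_,
    fun v hv => ?_⟩
  · rcases hch _ _ _ h1.1 h2.1 with h | h | h
    · exact Or.inl h
    · exact Or.inr (Or.inl ⟨h, h1.2.1, h2.2.1⟩)
    · exact Or.inr (Or.inr ⟨h, h2.2.1, h1.2.1⟩)
  · rcases hedge u v (hsub hu) (hsub hv) hadj with h | h
    · exact Or.inl ⟨h, hu, hv⟩
    · exact Or.inr ⟨h, hv, hu⟩
  · show {u | anc u v ∧ u ∈ t ∧ v ∈ t}.ncard + 1 ≤ e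
    have hsub2 : {u | anc u v ∧ u ∈ t ∧ v ∈ t} ⊆ {u | anc u v} := fun u h => h.1
    have := Set.ncard_le_ncard hsub2 (Set.toFinite _)
    have h2 := hdep v (hsub hv)
    omega

omit [Fintype V] in
lemma RTD.pos {e : ℕ} (h : RTD G s e) (hne : s.Nonempty) : 1 ≤ e := by
  obtain ⟨anc, -, -, -, -, -, hdep⟩ := h
  have := hdep hne.choose hne.choose_spec
  omega

lemma RTD.root {e : ℕ} (h : RTD G s e) (hconn : Conn G s) (hne : s.Nonempty) :
    ∃ r ∈ s, RTD G (s \ {r}) (e - 1) := by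
  classical
  obtain ⟨anc, hsupp, htr, hirr, hch, hedge, hdep⟩ := h
  -- minimal elements of ancestor chains
  have hmin : ∀ v ∈ s, ∃ m, (anc m v ∨ m = v) ∧ ∀ a, ¬ anc a m := by
    intro v hv
    obtain ⟨m, hm1, hm2⟩ := Set.exists_min_image (insert v {u | anc u v})
      (fun u => {a | anc a u}.ncard) (Set.toFinite _) ⟨v, Set.mem_insert _ _⟩
    refine ⟨m, ?_, fun a ha => ?_⟩
    · rcases hm1 with h | h
      · exact Or.inr h
      · exact Or.inl h
    · have ham : a ∈ insert v {u | anc u v} := by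
        rcases hm1 with h | h
        · subst h; exact Or.inr ha
        · exact Or.inr (htr _ _ _ ha h)
      have hlt : {x | anc x a}.ncard < {x | anc x m}.ncard := by
        refine Set.ncard_lt_ncard ⟨fun x hx => htr _ _ _ hx ha, ?_⟩ (Set.toFinite _)
        intro hsub
        exact hirr a (hsub ha)
      have := hm2 a ham
      omega
  choose! f hf1 hf2 using hmin
  -- roots of adjacent vertices agree
  have huniq : ∀ v, v ∈ s → ∀ m1 m2, (anc m1 v ∨ m1 = v) → (∀ a, ¬ anc a m1) →
      (anc m2 v ∨ m2 = v) → (∀ a, ¬ anc a m2) → m1 = m2 := by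
    intro v hv m1 m2 h1 h1m h2 h2m
    rcases h1 with h1 | h1 <;> rcases h2 with h2 | h2
    · rcases hch _ _ _ h1 h2 with h | h | h
      · exact h
      · exact absurd h (h2m m1)
      · exact absurd h (h1m m2)
    · subst h2; exact absurd h1 (h2m m1)
    · subst h1; exact absurd h2 (h1m m2)
    · rw [h1, h2]
  have hanc_root : ∀ u v, u ∈ s → v ∈ s → anc u v → f u = f v := by
    intro u v hu hv h
    have h1 : anc (f u) v ∨ f u = v := by
      rcases hf1 u hu with h' | h'
      · exact Or.inl (htr _ _ _ h' h)
      · rw [h']; exact Or.inl h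
    exact huniq v hv (f u) (f v) h1 (hf2 u hu) (hf1 v hv) (hf2 v hv)
  have hadj_root : ∀ u v, u ∈ s → v ∈ s → G.Adj u v → f u = f v := by
    intro u v hu hv hadj
    rcases hedge u v hu hv hadj with h | h
    · exact hanc_root u v hu hv h
    · exact (hanc_root v u hv hu h).symm
  have hsw_root : ∀ u v, SW G s u v → f u = f v := by
    intro u v hsw
    induction hsw with
    | refl _ => rfl
    | @cons a b c ha hadj hw ih => exact (hadj_root a b ha hw.mem_left hadj).trans ih
  obtain ⟨v₀, hv₀⟩ := hne
  set r := f v₀ with hr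
  have hrs : r ∈ s := by
    rcases hf1 v₀ hv₀ with h | h
    · exact (hsupp _ _ h).1
    · rw [hr, h]; exact hv₀
  have hroot : ∀ v ∈ s, v ≠ r → anc r v := by
    intro v hv hvne
    have : f v = r := (hsw_root v₀ v (hconn.sw hv₀ hv)).symm
    rcases hf1 v hv with h | h
    · rw [this] at h; exact h
    · rw [this] at h; exact absurd h.symm hvne
  refine ⟨r, hrs, fun a b => anc a b ∧ a ∈ s \ {r} ∧ b ∈ s \ {r},
    fun a b h => ⟨h.2.1, h.2.2⟩,
    fun a b c h1 h2 => ⟨htr _ _ _ h1.1 h2.1, h1.2.1, h2.2.2⟩,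
    fun a h => hirr a h.1,
    fun a b c h1 h2 => ?_,
    fun u v hu hv hadj => ?_,
    fun v hv => ?_⟩
  · rcases hch _ _ _ h1.1 h2.1 with h | h | h
    · exact Or.inl h
    · exact Or.inr (Or.inl ⟨h, h1.2.1, h2.2.1⟩)
    · exact Or.inr (Or.inr ⟨h, h2.2.1, h1.2.1⟩)
  · rcases hedge u v hu.1 hv.1 hadj with h | h
    · exact Or.inl ⟨h, hu, hv⟩
    · exact Or.inr ⟨h, hv, hu⟩
  · show {u | anc u v ∧ u ∈ s \ {r} ∧ v ∈ s \ {r}}.ncard + 1 ≤ e - 1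
    have hrv : r ∈ {u | anc u v} := hroot v hv.1 (fun h => hv.2 h)
    have hsub2 : {u | anc u v ∧ u ∈ s \ {r} ∧ v ∈ s \ {r}} ⊆ {u | anc u v} \ {r} := by
      intro u h
      exact ⟨h.1, h.2.1.2⟩
    have h1 := Set.ncard_le_ncard hsub2 (Set.toFinite _)
    have h2 : ({u | anc u v} \ {r}).ncard = {u | anc u v}.ncard - 1 :=
      Set.ncard_diff_singleton_of_mem hrv
    have h3 := hdep v hv.1
    have h4 : 1 ≤ {u | anc u v}.ncard := by
      have : ({r} : Set V) ⊆ {u | anc u v} := by simp [hrv]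
      have := Set.ncard_le_ncard this (Set.toFinite _)
      simpa using this
    omega

/-! ### Core property and gluing -/

/-- The structural part of a (matched) elimination forest on `s` with depth bound `k`. -/
def Core (G : SimpleGraph V) (s : Set V) (k : ℕ) (anc : V → V → Prop) : Prop :=
  (∀ a b, anc a b → a ∈ s ∧ b ∈ s) ∧
  (∀ a b c, anc a b → anc b c → anc a c) ∧
  (∀ a, ¬ anc a a) ∧
  (∀ a b c, anc a c → anc b c → a = b ∨ anc a b ∨ anc b a) ∧
  (∀ u v, u ∈ s → v ∈ s → G.Adj u v → anc u v ∨ anc v u) ∧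
  (∀ v ∈ s, Conn G {w | w = v ∨ anc v w}) ∧
  (∀ v ∈ s, {u | anc u v}.ncard + 1 ≤ k)

lemma glue {x : V} {k : ℕ} (hx : x ∈ s) (hconn : Conn G s)
    (F : Set V → (V → V → Prop))
    (hF : ∀ v ∈ s \ {x}, Core G (comp G (s \ {x}) v) k (F (comp G (s \ {x}) v))) :
    ∃ anc : V → V → Prop, Core G s (k + 1) anc ∧ (∀ v ∈ s, v ≠ x → anc x v) ∧
      (∀ v ∈ s, (∀ w, ¬ anc v w) → ∀ l : List V, l.Pairwise anc →
        (∀ u, u ∈ l ↔ (anc u v ∨ u = v)) →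
        (v = x ∧ l = [x]) ∨
        (v ∈ s \ {x} ∧ ∃ l', l = x :: l' ∧
          l'.Pairwise (F (comp G (s \ {x}) v)) ∧
          (∀ u, u ∈ l' ↔ (F (comp G (s \ {x}) v) u v ∨ u = v)) ∧
          (∀ w, ¬ F (comp G (s \ {x}) v) v w))) := by
  classical
  set t := s \ {x} with ht
  set anc : V → V → Prop :=
    fun a b => (a = x ∧ b ∈ s ∧ b ≠ x) ∨ ∃ v ∈ t, F (comp G t v) a b with hanc
  have hts : t ⊆ s := Set.diff_subset
  have hsupp : ∀ v ∈ t, ∀ a b, F (comp G t v) a b →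
      a ∈ comp G t v ∧ b ∈ comp G t v := fun v hv => (hF v hv).1
  have htrans : ∀ v ∈ t, ∀ a b c, F (comp G t v) a b → F (comp G t v) b c →
      F (comp G t v) a c := fun v hv => (hF v hv).2.1
  have hirr : ∀ v ∈ t, ∀ a, ¬ F (comp G t v) a a := fun v hv => (hF v hv).2.2.1
  have hchain : ∀ v ∈ t, ∀ a b c, F (comp G t v) a c → F (comp G t v) b c →
      a = b ∨ F (comp G t v) a b ∨ F (comp G t v) b a := fun v hv => (hF v hv).2.2.2.1
  have hedge : ∀ v ∈ t, ∀ a b, a ∈ comp G t v → b ∈ comp G t v → G.Adj a b →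
      F (comp G t v) a b ∨ F (comp G t v) b a := fun v hv => (hF v hv).2.2.2.2.1
  -- transfer between components
  have htrf : ∀ {v v' a b : V}, v ∈ t → v' ∈ t → F (comp G t v') a b →
      (a ∈ comp G t v ∨ b ∈ comp G t v) → F (comp G t v) a b := by
    intro v v' a b hv hv' h hmem
    obtain ⟨ha, hb⟩ := hsupp v' hv' a b h
    have : comp G t v = comp G t v' := by
      rcases hmem with h1 | h1
      · rw [comp_eq_of_mem h1, ← comp_eq_of_mem ha]
      · rw [comp_eq_of_mem h1, ← comp_eq_of_mem hb]
    rw [this]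
    exact h
  have hancx : ∀ b, ¬ (∃ v ∈ t, F (comp G t v) x b) := by
    rintro b ⟨v, hv, h⟩
    exact ((hsupp v hv x b h).1.mem_right).2 rfl
  have hancx2 : ∀ a, ¬ anc a x := by
    rintro a (⟨-, -, h⟩ | ⟨v, hv, h⟩)
    · exact h rfl
    · exact ((hsupp v hv a x h).2.mem_right).2 rfl
  have hxanc : ∀ v ∈ s, v ≠ x → anc x v := fun v hv hne => Or.inl ⟨rfl, hv, hne⟩
  have hCore : Core G s (k + 1) anc := by
    refine ⟨?_, ?_, ?_, ?_, ?_, ?_, ?_⟩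
    · rintro a b (⟨rfl, hb, -⟩ | ⟨v, hv, h⟩)
      · exact ⟨hx, hb⟩
      · obtain ⟨ha, hb⟩ := hsupp v hv a b h
        exact ⟨hts ha.mem_right, hts hb.mem_right⟩
    · rintro a b c (⟨rfl, hb, hbx⟩ | ⟨v, hv, h1⟩) h2
      · rcases h2 with ⟨rfl, -, -⟩ | ⟨v, hv, h2⟩
        · exact absurd rfl hbx
        · have hc := (hsupp v hv _ _ h2).2.mem_right
          exact Or.inl ⟨rfl, hts hc, hc.2⟩
      · rcases h2 with ⟨rfl, -, -⟩ | ⟨v', hv', h2⟩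
        · exact absurd rfl ((hsupp v hv _ _ h1).2.mem_right).2
        · have h2' : F (comp G t v) _ _ :=
            htrf hv hv' h2 (Or.inl (hsupp v hv _ _ h1).2)
          exact Or.inr ⟨v, hv, htrans v hv _ _ _ h1 h2'⟩
    · rintro a (⟨rfl, -, h⟩ | ⟨v, hv, h⟩)
      · exact h rfl
      · exact hirr v hv a h
    · rintro a b c (⟨rfl, -, -⟩ | ⟨v, hv, h1⟩) (⟨rfl, -, -⟩ | ⟨v', hv', h2⟩)
      · exact Or.inl rfl
      · have hb := (hsupp v' hv' _ _ h2).1.mem_right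
        exact Or.inr (Or.inl (Or.inl ⟨rfl, hts hb, hb.2⟩))
      · have ha := (hsupp v hv _ _ h1).1.mem_right
        exact Or.inr (Or.inr (Or.inl ⟨rfl, hts ha, ha.2⟩))
      · have h2' : F (comp G t v) _ _ :=
          htrf hv hv' h2 (Or.inr (hsupp v hv _ _ h1).2)
        rcases hchain v hv _ _ _ h1 h2' with h | h | h
        · exact Or.inl h
        · exact Or.inr (Or.inl (Or.inr ⟨v, hv, h⟩))
        · exact Or.inr (Or.inr (Or.inr ⟨v, hv, h⟩))
    · intro u v hu hv hadj
      by_cases hux : u = x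
      · subst hux
        exact Or.inl (hxanc v hv (fun h => hadj.ne (h ▸ rfl)))
      · by_cases hvx : v = x
        · subst hvx
          exact Or.inr (hxanc u hu (fun h => hadj.ne' (h ▸ rfl)))
        · have hut : u ∈ t := ⟨hu, hux⟩
          have hvt : v ∈ t := ⟨hv, hvx⟩
          have hvc : v ∈ comp G t u := mem_comp_of_adj hut hvt hadj
          rcases hedge u hut u v (mem_comp_self hut) hvc hadj with h | h
          · exact Or.inl (Or.inr ⟨u, hut, h⟩)
          · exact Or.inr (Or.inr ⟨u, hut, h⟩)
    · intro v hv
      by_cases hvx : v = x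
      · subst hvx
        have hset : {w | w = v ∨ anc v w} = s := by
          ext w
          constructor
          · rintro (rfl | ⟨-, hw, -⟩ | ⟨v', hv', h⟩)
            · exact hv
            · exact hw
            · exact absurd ⟨v', hv', h⟩ (hancx w)
          · intro hw
            by_cases hwx : w = v
            · exact Or.inl hwx
            · exact Or.inr (Or.inl ⟨rfl, hw, hwx⟩)
        rw [hset]
        exact hconn
      · have hvt : v ∈ t := ⟨hv, hvx⟩
        have hset : {w | w = v ∨ anc v w} = {w | w = v ∨ F (comp G t v) v w} := by
          ext w
          constructor
          · rintro (rfl | ⟨rfl, -, -⟩ | ⟨v', hv', h⟩)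
            · exact Or.inl rfl
            · exact absurd rfl hvx
            · exact Or.inr (htrf hvt hv' h (Or.inl (mem_comp_self hvt)))
          · rintro (rfl | h)
            · exact Or.inl rfl
            · exact Or.inr (Or.inr ⟨v, hvt, h⟩)
        rw [hset]
        exact (hF v hvt).2.2.2.2.2.1 v (mem_comp_self hvt)
    · intro v hv
      by_cases hvx : v = x
      · subst hvx
        have hset : {u | anc u v} = ∅ := by
          ext u
          simp only [Set.mem_setOf_eq, Set.mem_empty_iff_false, iff_false]
          rintro (⟨-, -, h⟩ | h)
          · exact h rfl
          · exact hancx2 u (Or.inr h)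
        rw [hset]
        simp
      · have hvt : v ∈ t := ⟨hv, hvx⟩
        have hset : {u | anc u v} = insert x {u | F (comp G t v) u v} := by
          ext u
          constructor
          · rintro (⟨rfl, -, -⟩ | ⟨v', hv', h⟩)
            · exact Set.mem_insert _ _
            · exact Set.mem_insert_of_mem _
                (htrf hvt hv' h (Or.inr (mem_comp_self hvt)))
          · rintro (rfl | h)
            · exact hxanc v hv hvx
            · exact Or.inr ⟨v, hvt, h⟩
        have hxnot : x ∉ {u | F (comp G t v) u v} := by
          intro h
          exact ((hsupp v hvt _ _ h).1.mem_right).2 rfl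
        rw [hset, Set.ncard_insert_of_notMem hxnot (Set.toFinite _)]
        have := (hF v hvt).2.2.2.2.2.2 v (mem_comp_self hvt)
        omega
  refine ⟨anc, hCore, hxanc, ?_⟩
  -- leaf list decomposition
  intro v hv hleaf l hp hm
  by_cases hvx : v = x
  · subst hvx
    left
    refine ⟨rfl, eq_singleton_list (pairwise_nodup hCore.2.2.1 hp) (fun u => ?_)⟩
    rw [hm u]
    constructor
    · rintro (h | h)
      · exact absurd h (hancx2 u)
      · exact h
    · intro h; exact Or.inr h
  · have hvt : v ∈ t := ⟨hv, hvx⟩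
    right
    refine ⟨hvt, ?_⟩
    have hvD : v ∈ comp G t v := mem_comp_self hvt
    have hmemD : ∀ {a}, (anc a v ∨ a = v) → a ≠ x → a ∈ comp G t v := by
      rintro a (h | rfl) hax
      · rcases h with ⟨rfl, -, -⟩ | ⟨v', hv', h⟩
        · exact absurd rfl hax
        · exact (hsupp v hvt _ _ (htrf hvt hv' h (Or.inr hvD))).1
      · exact hvD
    have hall : ∀ u ∈ {u | anc u v ∨ u = v}, u ≠ x → anc x u := by
      rintro u (hu | rfl) hux
      · rcases hu with ⟨rfl, -, -⟩ | ⟨v', hv', h⟩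
        · exact absurd rfl hux
        · have := ((hsupp v' hv' _ _ h).1.mem_right)
          exact hxanc u (hts this) this.2
      · exact hxanc u hv hvx
    obtain ⟨l', hl', hpl', hml'⟩ := head_extract hCore.2.2.1 hp
      (M := {u | anc u v ∨ u = v}) hm (Or.inl (hxanc v hv hvx)) hancx2 hall
    have hmemF : ∀ u, u ∈ l' ↔ (F (comp G t v) u v ∨ u = v) := by
      intro u
      rw [hml' u]
      constructor
      · rintro ⟨h | rfl, hux⟩
        · rcases h with ⟨rfl, -, -⟩ | ⟨v', hv', h⟩
          · exact absurd rfl hux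
          · exact Or.inl (htrf hvt hv' h (Or.inr hvD))
        · exact Or.inr rfl
      · rintro (h | rfl)
        · have hu := (hsupp v hvt _ _ h).1.mem_right
          exact ⟨Or.inl (Or.inr ⟨v, hvt, h⟩), hu.2⟩
        · exact ⟨Or.inr rfl, hvx⟩
    refine ⟨l', hl', ?_, hmemF, fun w hw => hleaf w (Or.inr ⟨v, hvt, hw⟩)⟩
    refine List.Pairwise.imp_of_mem ?_ hpl'
    intro a b ha hb hab
    have haD : a ∈ comp G t v := by
      rcases (hmemF a).mp ha with h | rfl
      · exact (hsupp v hvt _ _ h).1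
      · exact hvD
    rcases hab with ⟨rfl, -, -⟩ | ⟨v', hv', h⟩
    · exact absurd rfl (haD.mem_right).2
    · exact htrf hvt hv' h (Or.inl haD)

/-! ### Main construction -/

def MatchedOut (G : SimpleGraph V) (s : Set V) (anc : V → V → Prop) : Prop :=
  ∀ v ∈ s, (∀ w, ¬ anc v w) → ∀ l : List V, l.Pairwise anc →
    (∀ u, u ∈ l ↔ (anc u v ∨ u = v)) → MatchedList G l

def PreOut (G : SimpleGraph V) (s : Set V) (x : V) (anc : V → V → Prop) : Prop :=
  ∀ v ∈ s, (∀ w, ¬ anc v w) → ∀ l : List V, l.Pairwise anc →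
    (∀ u, u ∈ l ↔ (anc u v ∨ u = v)) → ∀ w, G.Adj w x → MatchedList G (w :: l)

lemma main (n : ℕ) : ∀ s : Set V, s.ncard ≤ n →
    ((Conn G s → 2 ≤ s.ncard → ∀ d, RTD G s d →
        ∃ anc, Core G s (2 * d - 2) anc ∧ MatchedOut G s anc) ∧
     (Conn G s → ∀ x ∈ s, ∀ e, RTD G s e →
        ∃ anc, Core G s (2 * e - 1) anc ∧ (∀ v ∈ s, v ≠ x → anc x v) ∧
          PreOut G s x anc)) := by
  induction n with
  | zero =>
      intro s hs
      have hs0 : s = ∅ := by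
        rw [← Set.ncard_eq_zero (Set.toFinite s)]; omega
      subst hs0
      constructor
      · intro _ hcard
        simp at hcard
      · intro _ x hx
        exact absurd hx (Set.notMem_empty x)
  | succ n ih =>
      intro s hs
      constructor
      -- ===================== MT =====================
      · intro hconn hcard d hrtd
        have hne : s.Nonempty := Set.nonempty_of_ncard_ne_zero (by omega)
        obtain ⟨r, hr, hrtd'⟩ := hrtd.root hconn hne
        set t := s \ {r} with htdef
        have htcard : t.ncard = s.ncard - 1 := Set.ncard_diff_singleton_of_mem hr
        have htne : t.Nonempty := Set.nonempty_of_ncard_ne_zero (by omega)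
        have hd2 : 2 ≤ d := by
          have := hrtd'.pos htne
          omega
        have hsubD : ∀ D : Set V, ∃ (a : V → V → Prop) (x : V),
            (∃ v ∈ t, D = comp G t v) →
            (x ∈ D ∧ G.Adj r x ∧ Core G D (2 * (d - 1) - 1) a ∧
             PreOut G D x a) := by
          intro D
          by_cases hD : ∃ v ∈ t, D = comp G t v
          · obtain ⟨v, hv, rfl⟩ := hD
            obtain ⟨z, hzadj, hzsw⟩ := exists_adj_of_comp hconn hr hv
            have hzD : z ∈ comp G t v := hzsw.symm'
            have hDcard : (comp G t v).ncard ≤ n := by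
              have := Set.ncard_le_ncard (comp_subset (G := G) (t := t) (u := v)) (Set.toFinite t)
              omega
            obtain ⟨a, hC, -, hP⟩ := (ih (comp G t v) hDcard).2 (conn_comp hv) z hzD
              (d - 1) (hrtd'.mono (comp_subset (G := G) (t := t) (u := v)))
            exact ⟨a, z, fun _ => ⟨hzD, hzadj, hC, hP⟩⟩
          · exact ⟨fun _ _ => False, r, fun h => absurd h hD⟩
        choose F xF hFspec using hsubD
        obtain ⟨anc, hCore, hroot, hdec⟩ := glue hr hconn F
          (fun v hv => (hFspec (comp G t v) ⟨v, hv, rfl⟩).2.2.1)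
        have heq : 2 * (d - 1) - 1 + 1 = 2 * d - 2 := by omega
        rw [heq] at hCore
        refine ⟨anc, hCore, ?_⟩
        intro v hv hleaf l hp hm
        rcases hdec v hv hleaf l hp hm with ⟨rfl, -⟩ | ⟨hvt, l', rfl, hpl', hml', hleafD⟩
        · obtain ⟨y, hy⟩ := htne
          exact absurd (hroot y (Set.diff_subset hy) hy.2) (hleaf y)
        · have hspec := hFspec (comp G t v) ⟨v, hvt, rfl⟩
          exact hspec.2.2.2 v (mem_comp_self hvt) hleafD l' hpl' hml' r hspec.2.1
      -- ===================== AT =====================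
      · intro hconn x hx e hrtd
        have hne : s.Nonempty := ⟨x, hx⟩
        have he1 : 1 ≤ e := hrtd.pos hne
        set t := s \ {x} with htdef
        have htcard : t.ncard = s.ncard - 1 := Set.ncard_diff_singleton_of_mem hx
        have he2 : t.Nonempty → 2 ≤ e := by
          intro htne
          obtain ⟨r', hr', hrtd'⟩ := hrtd.root hconn hne
          have : (s \ {r'}).Nonempty := by
            have h1 : (s \ {r'}).ncard = s.ncard - 1 := Set.ncard_diff_singleton_of_mem hr'
            have h2 : 0 < t.ncard := (Set.ncard_pos (Set.toFinite t)).mpr htne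
            exact Set.nonempty_of_ncard_ne_zero (by omega)
          have := hrtd'.pos this
          omega
        have hsubD : ∀ D : Set V, ∃ a : V → V → Prop,
            (∃ v ∈ t, D = comp G t v) →
            (Core G D (2 * e - 2) a ∧
             (MatchedOut G D a ∨ ∃ w, D = {w} ∧ a = fun _ _ => False)) := by
          intro D
          by_cases hD : ∃ v ∈ t, D = comp G t v
          · obtain ⟨v, hv, rfl⟩ := hD
            have he2' : 2 ≤ e := he2 ⟨v, hv⟩
            have hDcard : (comp G t v).ncard ≤ n := by
              have := Set.ncard_le_ncard (comp_subset (G := G) (t := t) (u := v)) (Set.toFinite t)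
              omega
            rcases Nat.lt_or_ge (comp G t v).ncard 2 with hlt | hge
            · -- singleton component
              have h1 : (comp G t v).ncard = 1 := by
                have : 0 < (comp G t v).ncard :=
                  (Set.ncard_pos (Set.toFinite _)).mpr ⟨v, mem_comp_self hv⟩
                omega
              obtain ⟨w, hw⟩ := Set.ncard_eq_one.mp h1
              refine ⟨fun _ _ => False, fun _ => ⟨⟨?_, ?_, ?_, ?_, ?_, ?_, ?_⟩,
                Or.inr ⟨w, hw, rfl⟩⟩⟩
              · rintro a b ⟨⟩
              · rintro a b c ⟨⟩
              · rintro a ⟨⟩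
              · rintro a b c ⟨⟩
              · intro a b ha hb hadj
                rw [hw] at ha hb
                obtain rfl := Set.mem_singleton_iff.mp ha
                obtain rfl := Set.mem_singleton_iff.mp hb
                exact (G.loopless.irrefl _ hadj).elim
              · intro u hu
                have : {w' | w' = u ∨ False} = {u} := by ext w'; simp
                rw [this]
                exact conn_singleton u
              · intro u hu
                have : {u' : V | False} = ∅ := by ext u'; simp
                rw [this]
                simp
                omega
            · obtain ⟨a, hC, hM⟩ := (ih (comp G t v) hDcard).1 (conn_comp hv) hge e
                (hrtd.mono ((comp_subset (G := G) (t := t) (u := v)).trans Set.diff_subset))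
              exact ⟨a, fun _ => ⟨hC, Or.inl hM⟩⟩
          · exact ⟨fun _ _ => False, fun h => absurd h hD⟩
        choose F hFspec using hsubD
        obtain ⟨anc, hCore, hroot, hdec⟩ := glue hx hconn F
          (fun v hv => (hFspec (comp G t v) ⟨v, hv, rfl⟩).1)
        have heq : 2 * e - 2 + 1 = 2 * e - 1 := by omega
        rw [heq] at hCore
        refine ⟨anc, hCore, hroot, ?_⟩
        intro v hv hleaf l hp hm w hwadj
        rcases hdec v hv hleaf l hp hm with ⟨rfl, rfl⟩ | ⟨hvt, l', rfl, hpl', hml', hleafD⟩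
        · exact matched_pair hwadj
        · have hspec := hFspec (comp G t v) ⟨v, hvt, rfl⟩
          rcases hspec.2 with hM | ⟨w', hw', ha⟩
          · exact matched_cons2 hwadj
              (hM v (mem_comp_self hvt) hleafD l' hpl' hml')
          · have hvw : v = w' := by
              have h0 : v ∈ comp G t v := mem_comp_self hvt
              rw [hw'] at h0
              exact h0
            subst hvw
            have hml2 : ∀ u, u ∈ l' ↔ u = v := by
              intro u
              rw [hml' u, ha]
              simp
            have hl'eq : l' = [v] :=
              eq_singleton_list
                (pairwise_nodup (by rw [ha]; rintro a ⟨⟩) hpl') hml2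
            subst hl'eq
            obtain ⟨z, hzadj, hzsw⟩ := exists_adj_of_comp hconn hx hvt
            have hzv : z = v := by
              have h0 : z ∈ comp G t v := hzsw.symm'
              rw [hw'] at h0
              exact h0
            subst hzv
            exact matched_three hwadj hzadj

/-! ### Final assembly -/

lemma sw_first_edge {A : Set V} {w a : V} (h : SW G A w a) (hne : w ≠ a) :
    ∃ z, G.Adj w z := by
  cases h with
  | refl _ => exact absurd rfl hne
  | cons _ hadj _ => exact ⟨_, hadj⟩

lemma iso_no_matched (T : ElimTree G) (hM : T.IsMatched) (w : V)
    (hiso : ∀ u, ¬ G.Adj w u) : False := by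
  have h1 : ∀ a, ¬ T.anc a w := by
    intro a ha
    have hconn : Conn G {w' | w' = a ∨ T.anc a w'} := T.subtreeConn a
    have hsw : SW G _ w a := hconn.sw (Or.inr ha) (Or.inl rfl)
    have hne : w ≠ a := by
      rintro rfl
      exact T.irrefl w ha
    obtain ⟨z, hz⟩ := sw_first_edge hsw hne
    exact hiso z hz
  have h2 : ∀ b, ¬ T.anc w b := by
    intro b hb
    have hconn : Conn G {w' | w' = w ∨ T.anc w w'} := T.subtreeConn w
    have hsw : SW G _ w b := hconn.sw (Or.inl rfl) (Or.inr hb)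
    have hne : w ≠ b := by
      rintro rfl
      exact T.irrefl w hb
    obtain ⟨z, hz⟩ := sw_first_edge hsw hne
    exact hiso z hz
  have hml := hM w h2 [w] (by simp) (fun u => by
    constructor
    · intro hu
      rw [List.mem_singleton] at hu
      exact Or.inr hu
    · rintro (h | rfl)
      · exact absurd h (h1 u)
      · exact List.mem_singleton_self _)
  exact not_matched_singleton w hml

lemma rtd_univ (T : ElimTree G) : RTD G Set.univ T.depth :=
  ⟨T.anc, fun a b _ => ⟨trivial, trivial⟩, T.trans, T.irrefl, T.chainAnc,
    fun u v _ _ h => T.edgeComp u v h,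
    fun v _ => Finset.le_sup (f := fun v => {u | T.anc u v}.ncard + 1) (Finset.mem_univ v)⟩

lemma exists_matched (hniso : ∀ w : V, ∃ u, G.Adj w u) (d : ℕ)
    (hrtd : RTD G Set.univ d) :
    ∃ T : ElimTree G, T.IsMatched ∧ T.depth ≤ 2 * d - 2 := by
  classical
  set t : Set V := Set.univ with htdef
  have hsubD : ∀ D : Set V, ∃ a : V → V → Prop,
      (∃ v : V, D = comp G t v) → (Core G D (2 * d - 2) a ∧ MatchedOut G D a) := by
    intro D
    by_cases hD : ∃ v : V, D = comp G t v
    · obtain ⟨v, rfl⟩ := hD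
      have hv : v ∈ t := trivial
      obtain ⟨u, hu⟩ := hniso v
      have hcard : 2 ≤ (comp G t v).ncard := by
        have : 1 < (comp G t v).ncard := by
          rw [Set.one_lt_ncard_iff (Set.toFinite _)]
          exact ⟨u, v, mem_comp_of_adj hv trivial hu,
            mem_comp_self hv, hu.ne'⟩
        omega
      obtain ⟨a, hC, hM⟩ := (main (G := G) (comp G t v).ncard (comp G t v) le_rfl).1
        (conn_comp hv) hcard d (hrtd.mono (Set.subset_univ _))
      exact ⟨a, fun _ => ⟨hC, hM⟩⟩
    · exact ⟨fun _ _ => False, fun h => absurd h hD⟩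
  choose F hFspec using hsubD
  set anc : V → V → Prop := fun a b => ∃ v : V, F (comp G t v) a b with hancdef
  have hsupp : ∀ v : V, ∀ a b, F (comp G t v) a b → a ∈ comp G t v ∧ b ∈ comp G t v :=
    fun v => (hFspec (comp G t v) ⟨v, rfl⟩).1.1
  have htrf : ∀ {v v' a b : V}, F (comp G t v') a b →
      (a ∈ comp G t v ∨ b ∈ comp G t v) → F (comp G t v) a b := by
    intro v v' a b h hmem
    obtain ⟨ha, hb⟩ := hsupp v' a b h
    have heq : comp G t v = comp G t v' := by
      rcases hmem with h1 | h1
      · rw [comp_eq_of_mem h1, ← comp_eq_of_mem ha]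
      · rw [comp_eq_of_mem h1, ← comp_eq_of_mem hb]
    rw [heq]
    exact h
  refine ⟨⟨anc, ?_, ?_, ?_, ?_, ?_⟩, ?_, ?_⟩
  · -- trans
    rintro a b c ⟨v, h1⟩ ⟨v', h2⟩
    have h2' : F (comp G t v) b c := htrf h2 (Or.inl (hsupp v _ _ h1).2)
    exact ⟨v, (hFspec (comp G t v) ⟨v, rfl⟩).1.2.1 _ _ _ h1 h2'⟩
  · -- irrefl
    rintro a ⟨v, h⟩
    exact (hFspec (comp G t v) ⟨v, rfl⟩).1.2.2.1 a h
  · -- chain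
    rintro a b c ⟨v, h1⟩ ⟨v', h2⟩
    have h2' : F (comp G t v) b c := htrf h2 (Or.inr (hsupp v _ _ h1).2)
    rcases (hFspec (comp G t v) ⟨v, rfl⟩).1.2.2.2.1 _ _ _ h1 h2' with h | h | h
    · exact Or.inl h
    · exact Or.inr (Or.inl ⟨v, h⟩)
    · exact Or.inr (Or.inr ⟨v, h⟩)
  · -- edgeComp
    intro u v hadj
    have hvc : v ∈ comp G t u := mem_comp_of_adj trivial trivial hadj
    rcases (hFspec (comp G t u) ⟨u, rfl⟩).1.2.2.2.2.1 u v (mem_comp_self trivial)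
      hvc hadj with h | h
    · exact Or.inl ⟨u, h⟩
    · exact Or.inr ⟨u, h⟩
  · -- subtreeConn
    intro v
    have hset : {w | w = v ∨ anc v w} = {w | w = v ∨ F (comp G t v) v w} := by
      ext w
      constructor
      · rintro (rfl | ⟨v', h⟩)
        · exact Or.inl rfl
        · exact Or.inr (htrf h (Or.inl (mem_comp_self trivial)))
      · rintro (rfl | h)
        · exact Or.inl rfl
        · exact Or.inr ⟨v, h⟩
    rw [show (G.induce {w | w = v ∨ anc v w}).Connected ↔
        Conn G {w | w = v ∨ anc v w} from Iff.rfl, hset]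
    exact (hFspec (comp G t v) ⟨v, rfl⟩).1.2.2.2.2.2.1 v (mem_comp_self trivial)
  · -- IsMatched
    intro v hleaf l hp hm
    have hvD : v ∈ comp G t v := mem_comp_self trivial
    have hmemF : ∀ u, u ∈ l ↔ (F (comp G t v) u v ∨ u = v) := by
      intro u
      rw [hm u]
      constructor
      · rintro (⟨v', h⟩ | rfl)
        · exact Or.inl (htrf h (Or.inr hvD))
        · exact Or.inr rfl
      · rintro (h | rfl)
        · exact Or.inl ⟨v, h⟩
        · exact Or.inr rfl
    have hpF : l.Pairwise (F (comp G t v)) := by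
      refine List.Pairwise.imp_of_mem ?_ hp
      intro a b ha hb hab
      have haD : a ∈ comp G t v := by
        rcases (hmemF a).mp ha with h | rfl
        · exact (hsupp v _ _ h).1
        · exact hvD
      obtain ⟨v', h⟩ := hab
      exact htrf h (Or.inl haD)
    have hleafD : ∀ w, ¬ F (comp G t v) v w := fun w hw => hleaf w ⟨v, hw⟩
    exact (hFspec (comp G t v) ⟨v, rfl⟩).2 v hvD hleafD l hpF hmemF
  · -- depth bound
    show Finset.univ.sup (fun v => {u | anc u v}.ncard + 1) ≤ 2 * d - 2
    refine Finset.sup_le (fun v _ => ?_)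
    have hset : {u | anc u v} = {u | F (comp G t v) u v} := by
      ext u
      constructor
      · rintro ⟨v', h⟩
        exact htrf h (Or.inr (mem_comp_self trivial))
      · intro h
        exact ⟨v, h⟩
    rw [hset]
    exact (hFspec (comp G t v) ⟨v, rfl⟩).1.2.2.2.2.2.2 v (mem_comp_self trivial)

end MTDAux

/-- For any graph `G`, `mtd G ≤ 2 · td G − 2`. -/
theorem stmt1 {V : Type} [Fintype V] (G : SimpleGraph V) :
    mtd G ≤ 2 * treedepth G - 2 := by
  classical
  by_cases hS : {d | ∃ T : ElimTree G, T.IsMatched ∧ T.depth = d}.Nonempty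
  · obtain ⟨d0, T0, hT0m, -⟩ := hS
    have hniso : ∀ w : V, ∃ u, G.Adj w u := by
      intro w
      by_contra h
      push_neg at h
      exact MTDAux.iso_no_matched T0 hT0m w (by simpa using h)
    have htdne : {d | ∃ T : ElimTree G, T.depth = d}.Nonempty := ⟨T0.depth, T0, rfl⟩
    obtain ⟨T, hT⟩ := Nat.sInf_mem htdne
    have hrtd : MTDAux.RTD G Set.univ (treedepth G) := by
      rw [show treedepth G = sInf {d | ∃ T : ElimTree G, T.depth = d} from rfl, ← hT]
      exact MTDAux.rtd_univ T
    obtain ⟨T', hT'm, hT'd⟩ := MTDAux.exists_matched hniso _ hrtd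
    calc mtd G ≤ T'.depth := Nat.sInf_le ⟨T', hT'm, rfl⟩
    _ ≤ 2 * treedepth G - 2 := hT'd
  · rw [Set.not_nonempty_iff_eq_empty] at hS
    have : mtd G = 0 := by
      rw [show mtd G = sInf {d | ∃ T : ElimTree G, T.IsMatched ∧ T.depth = d} from rfl,
        hS, Nat.sInf_empty]
    omega
end

section
/- For any graph G, the matched treedepth of G is at most one more than the number of vertices in a smallest maximal matching in G. -/
open SimpleGraph

namespace MTDAux
variable {V : Type} (G : SimpleGraph V)

def Rl (S : Set V) (a b : V) : Prop := a ∈ S ∧ b ∈ S ∧ G.Adj a b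

def ReachIn (S : Set V) : V → V → Prop := Relation.ReflTransGen (Rl G S)

def ConnIn (S : Set V) : Prop := ∀ a ∈ S, ∀ b ∈ S, ReachIn G S a b

variable {G}

lemma Rl.symm {S : Set V} {a b : V} (h : Rl G S a b) : Rl G S b a :=
  ⟨h.2.1, h.1, h.2.2.symm⟩

lemma ReachIn.symm {S : Set V} {a b : V} (h : ReachIn G S a b) : ReachIn G S b a :=
  by letI : Std.Symm (Rl G S) := ⟨fun _ _ h => Rl.symm h⟩
     exact Std.Symm.symm (r := Relation.ReflTransGen (Rl G S)) _ _ h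

lemma ReachIn.trans {S : Set V} {a b c : V} (h : ReachIn G S a b) (h2 : ReachIn G S b c) :
    ReachIn G S a c := Relation.ReflTransGen.trans h h2

lemma ReachIn.mono {S T : Set V} (hST : S ⊆ T) {a b : V} (h : ReachIn G S a b) :
    ReachIn G T a b :=
  Relation.ReflTransGen.mono (r := Rl G S) (p := Rl G T)
    (fun _ _ hr => ⟨hST hr.1, hST hr.2.1, hr.2.2⟩) _ _ h

lemma reachIn_closed {S T : Set V} {a b : V} (h : ReachIn G S a b) (ha : a ∈ T)
    (hcl : ∀ z w, z ∈ T → Rl G S z w → w ∈ T) : ReachIn G T a b ∧ b ∈ T := by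
  induction h with
  | refl => exact ⟨Relation.ReflTransGen.refl, ha⟩
  | tail h1 h2 ih =>
      exact ⟨ih.1.tail ⟨ih.2, hcl _ _ ih.2 h2, h2.2.2⟩, hcl _ _ ih.2 h2⟩

lemma comp_conn {S : Set V} {b : V} (hb : b ∈ S) :
    ConnIn G {x | x ∈ S ∧ ReachIn G S b x} := by
  intro a ha c hc
  have hcl : ∀ z w, z ∈ {x | x ∈ S ∧ ReachIn G S b x} → Rl G S z w →
      w ∈ {x | x ∈ S ∧ ReachIn G S b x} := by
    intro z w hz hr
    exact ⟨hr.2.1, hz.2.tail hr⟩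
  have hac : ReachIn G S a c := (ha.2.symm).trans hc.2
  exact (reachIn_closed hac ha hcl).1

lemma comp_eq {S : Set V} {a b : V} (h : ReachIn G S a b) :
    {x | x ∈ S ∧ ReachIn G S a x} = {x | x ∈ S ∧ ReachIn G S b x} := by
  ext x
  exact ⟨fun hx => ⟨hx.1, (h.symm).trans hx.2⟩, fun hx => ⟨hx.1, h.trans hx.2⟩⟩

lemma reach_escape {S : Set V} {u b : V} (h : ReachIn G S u b) (hne : b ≠ u) :
    ∃ x, x ∈ S ∧ x ≠ u ∧ G.Adj u x ∧ ReachIn G (S \ {u}) x b := by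
  induction h with
  | refl => exact absurd rfl hne
  | @tail c d h1 h2 ih =>
      by_cases hcu : c = u
      · subst hcu
        exact ⟨d, h2.2.1, h2.2.2.ne', h2.2.2, Relation.ReflTransGen.refl⟩
      · obtain ⟨x, hxS, hxu, hadj, hxc⟩ := ih hcu
        have hdu : d ≠ u := hne
        exact ⟨x, hxS, hxu, hadj,
          hxc.tail ⟨⟨h2.1, hcu⟩, ⟨h2.2.1, hdu⟩, h2.2.2⟩⟩

lemma exists_adj_of_reach {S : Set V} {a b : V} (h : ReachIn G S a b) (hne : a ≠ b) :
    ∃ x y, x ∈ S ∧ y ∈ S ∧ G.Adj x y := by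
  rcases h.cases_head with h | ⟨c, hr, _⟩
  · exact absurd h hne
  · exact ⟨a, c, hr.1, hr.2.1, hr.2.2⟩

lemma connected_induce {S : Set V} (hne : S.Nonempty) (hconn : ConnIn G S) :
    (G.induce S).Connected := by
  have aux : ∀ a b, ReachIn G S a b → ∀ (ha : a ∈ S) (hb : b ∈ S),
      (G.induce S).Reachable ⟨a, ha⟩ ⟨b, hb⟩ := by
    intro a b h
    induction h with
    | refl => intro ha hb; exact Reachable.refl _
    | @tail c d h1 h2 ih =>
        intro ha hd
        have : (G.induce S).Adj ⟨c, h2.1⟩ ⟨d, hd⟩ := by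
          simp [h2.2.2]
        exact (ih ha h2.1).trans this.reachable
  have : Nonempty S := ⟨⟨hne.choose, hne.choose_spec⟩⟩
  rw [SimpleGraph.connected_iff]
  refine ⟨fun x y => ?_, this⟩
  exact aux x y (hconn x x.2 y y.2) x.2 y.2


section Lists
variable {R : V → V → Prop}

lemma strip_head (htr : ∀ a b c, R a b → R b c → R a c) (hirr : ∀ a, ¬ R a a)
    {l : List V} {u : V} (humem : u ∈ l) (hmin : ∀ x ∈ l, x ≠ u → R u x)
    (hp : l.Pairwise R) : ∃ l', l = u :: l' ∧ u ∉ l' := by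
  cases l with
  | nil => simp at humem
  | cons a l' =>
      rcases List.pairwise_cons.mp hp with ⟨hal, _⟩
      by_cases hau : a = u
      · subst hau
        refine ⟨l', rfl, fun hu => ?_⟩
        exact hirr a (hal a hu)
      · exfalso
        have hul : u ∈ l' := by
          rcases List.mem_cons.mp humem with h | h
          · exact (hau h.symm).elim
          · exact h
        have h1 : R u a := hmin a List.mem_cons_self hau
        exact hirr u (htr _ _ _ h1 (hal u hul))

lemma list_eq_singleton (hirr : ∀ a, ¬ R a a) {l : List V} {v : V}
    (hp : l.Pairwise R) (hmem : ∀ x, x ∈ l ↔ x = v) : l = [v] := by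
  cases l with
  | nil => exact absurd ((hmem v).mpr rfl) (by simp)
  | cons a l' =>
      have ha : a = v := (hmem a).mp List.mem_cons_self
      subst ha
      rcases List.pairwise_cons.mp hp with ⟨hal, _⟩
      cases l' with
      | nil => rfl
      | cons b l'' =>
          have hb : b = a := (hmem b).mp (by simp)
          subst hb
          exact absurd (hal b (by simp)) (hirr b)

end Lists
end MTDAux
namespace MTDAux
variable {V : Type} {G : SimpleGraph V}

noncomputable def mpartner (M : G.Subgraph) (x : V) : V :=
  letI := Classical.dec
  if h : ∃ y, M.Adj x y then h.choose else x

lemma mpartner_adj {M : G.Subgraph} (hM : M.IsMatching) {x : V} (hx : x ∈ M.verts) :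
    M.Adj x (mpartner M x) := by
  obtain ⟨w, hw, _⟩ := hM hx
  rw [mpartner]
  have h : ∃ y, M.Adj x y := ⟨w, hw⟩
  simp only [h, dite_true]
  exact h.choose_spec

lemma mpartner_eq {M : G.Subgraph} (hM : M.IsMatching) {x y : V} (hxy : M.Adj x y) :
    y = mpartner M x := by
  obtain ⟨w, _, hun⟩ := hM (M.edge_vert hxy)
  rw [hun y hxy, hun (mpartner M x) (mpartner_adj hM (M.edge_vert hxy))]

lemma mpartner_invol {M : G.Subgraph} (hM : M.IsMatching) {x : V} (hx : x ∈ M.verts) :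
    mpartner M (mpartner M x) = x :=
  ((mpartner_eq hM (mpartner_adj hM hx).symm)).symm

/-- The set of matched vertices whose matching edge touches `H`. -/
def Pset (M : G.Subgraph) (H : Set V) : Set V :=
  {x | x ∈ M.verts ∧ (x ∈ H ∨ mpartner M x ∈ H)}

lemma Pset_subset (M : G.Subgraph) (H : Set V) : Pset M H ⊆ M.verts := fun _ h => h.1

lemma Pset_mono (M : G.Subgraph) {H H' : Set V} (h : H ⊆ H') : Pset M H ⊆ Pset M H' :=
  fun _ hx => ⟨hx.1, hx.2.imp (fun h' => h h') (fun h' => h h')⟩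

/-- internal matched-path shape for lists inside the recursion -/
def GoodList (G : SimpleGraph V) (l : List V) : Prop :=
  (Even l.length ∧ ∀ (j : ℕ) (h : 2 * j + 1 < l.length),
      G.Adj (l.get ⟨2 * j, by omega⟩) (l.get ⟨2 * j + 1, h⟩)) ∨
  (Odd l.length ∧ 3 ≤ l.length ∧
      (∀ (j : ℕ) (_h : 2 * j + 1 < l.length - 1),
        G.Adj (l.get ⟨2 * j, by omega⟩) (l.get ⟨2 * j + 1, by omega⟩)) ∧
      ∃ (h : l.length - 1 < l.length),
        G.Adj (l.get ⟨l.length - 2, by omega⟩) (l.get ⟨l.length - 1, h⟩)) ∨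
  l.length = 1

lemma goodList_matchedList {l : List V} (hg : GoodList G l) (hne : l.length ≠ 1) :
    MatchedList G l := by
  rcases hg with ⟨he, hp⟩ | ⟨ho, h3, hinit, hlt, hlast⟩ | h1
  · exact Or.inl ⟨he, hp⟩
  · refine Or.inr ⟨ho, l.length - 2, ?_, ⟨by omega, ?_, ?_⟩⟩
    · rcases ho with ⟨m, hm⟩; exact ⟨m - 1, by omega⟩
    · intro j hj
      exact hinit j (by omega)
    · intro b hb
      have hb0 : b = 0 := by omega
      subst hb0
      have h2 : l.length - 2 + 2 * 0 = l.length - 2 := by omega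
      have h3' : l.length - 2 + 2 * 0 + 1 = l.length - 1 := by omega
      convert hlast using 2 <;> (apply Fin.ext; simp <;> omega)
  · exact absurd h1 hne

end MTDAux
namespace MTDAux

structure PT {V : Type} (G : SimpleGraph V) (M : G.Subgraph) (H : Set V) where
  anc : V → V → Prop
  root : V
  root_mem : root ∈ H
  supp : ∀ a b, anc a b → a ∈ H ∧ b ∈ H
  root_anc : ∀ b, b ∈ H → b ≠ root → anc root b
  tr : ∀ a b c, anc a b → anc b c → anc a c
  irr : ∀ a, ¬ anc a a
  chain : ∀ a b c, anc a c → anc b c → a = b ∨ anc a b ∨ anc b a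
  edge : ∀ x y, x ∈ H → y ∈ H → G.Adj x y → anc x y ∨ anc y x
  sub : ∀ v, v ∈ H → ConnIn G {w | w = v ∨ anc v w}
  dep : ∀ v, {a | anc a v}.ncard ≤ (Pset M H).ncard
  mat : ∀ v, v ∈ H → (∀ w, ¬ anc v w) →
    ∀ l : List V, l.Pairwise anc → (∀ x, x ∈ l ↔ (anc x v ∨ x = v)) → GoodList G l

end MTDAux
namespace MTDAux
variable {V : Type} {G : SimpleGraph V}

def Cset (G : SimpleGraph V) (H : Set V) (u : V) (b : V) : Set V :=
  {x | x ∈ H \ {u} ∧ ReachIn G (H \ {u}) b x}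

def Dset (G : SimpleGraph V) (M : G.Subgraph) (H : Set V) (u : V) (rfun : Set V → V)
    (b : V) : Set V :=
  {x | x ∈ Cset G H u b \ {rfun (Cset G H u b)} ∧
    ReachIn G (Cset G H u b \ {rfun (Cset G H u b)}) b x}

def FAnc (G : SimpleGraph V) (M : G.Subgraph) (K : Set V) (a b : V) : Prop :=
  ∃ (h : Nonempty (PT G M K)), (Classical.choice h).anc a b

lemma FAnc_iff {M : G.Subgraph} {K : Set V} (h : Nonempty (PT G M K)) {a b : V} :
    FAnc G M K a b ↔ (Classical.choice h).anc a b :=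
  ⟨fun ⟨_, hh⟩ => hh, fun hh => ⟨h, hh⟩⟩

lemma FAnc_congr {M : G.Subgraph} {K K' : Set V} (h : K = K') {a b : V} :
    FAnc G M K a b ↔ FAnc G M K' a b := by rw [h]

def ancStep (G : SimpleGraph V) (M : G.Subgraph) (H : Set V) (u : V)
    (rfun : Set V → V) (a b : V) : Prop :=
  b ∈ H ∧ b ≠ u ∧ a ≠ b ∧
    (a = u ∨ (a ∈ Cset G H u b ∧ (a = rfun (Cset G H u b) ∨
      (b ≠ rfun (Cset G H u b) ∧ FAnc G M (Dset G M H u rfun b) a b))))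

section Step
variable {M : G.Subgraph} {H : Set V} {u : V} {rfun : Set V → V} {a b c : V}

lemma Cset_mem (hb : b ∈ H \ {u}) : b ∈ Cset G H u b :=
  ⟨hb, Relation.ReflTransGen.refl⟩

lemma Cset_sub : Cset G H u b ⊆ H \ {u} := fun _ h => h.1

lemma Cset_eq (ha : a ∈ Cset G H u b) : Cset G H u a = Cset G H u b :=
  comp_eq ha.2.symm

lemma Cset_conn (hb : b ∈ H \ {u}) : ConnIn G (Cset G H u b) := comp_conn hb

lemma Dset_sub : Dset G M H u rfun b ⊆ Cset G H u b \ {rfun (Cset G H u b)} :=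
  fun _ h => h.1

lemma Dset_mem (hb : b ∈ H \ {u}) (hbr : b ≠ rfun (Cset G H u b)) :
    b ∈ Dset G M H u rfun b :=
  ⟨⟨Cset_mem hb, hbr⟩, Relation.ReflTransGen.refl⟩

lemma Dset_conn (hb : b ∈ H \ {u}) (hbr : b ≠ rfun (Cset G H u b)) :
    ConnIn G (Dset G M H u rfun b) := comp_conn ⟨Cset_mem hb, hbr⟩

lemma Dset_eq (ha : a ∈ Dset G M H u rfun b) :
    Dset G M H u rfun a = Dset G M H u rfun b := by
  have hC : Cset G H u a = Cset G H u b := Cset_eq (Dset_sub ha).1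
  unfold Dset
  rw [hC]
  exact comp_eq ha.2.symm

end Step
end MTDAux
namespace MTDAux
variable {V : Type} {G : SimpleGraph V} {M : G.Subgraph} {H : Set V} {u : V}
  {rfun : Set V → V} {a b c : V}

lemma FAnc_mem {K : Set V} (h : FAnc G M K a b) : a ∈ K ∧ b ∈ K := by
  obtain ⟨hn, hh⟩ := h
  exact (Classical.choice hn).supp a b hh

lemma FAnc_ne {K : Set V} (h : FAnc G M K a b) : a ≠ b := by
  obtain ⟨hn, hh⟩ := h
  intro hab
  subst hab
  exact (Classical.choice hn).irr a hh

lemma step_supp (huH : u ∈ H) (h : ancStep G M H u rfun a b) : a ∈ H ∧ b ∈ H := by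
  obtain ⟨hbH, _, _, hc⟩ := h
  rcases hc with rfl | ⟨haC, _⟩
  · exact ⟨huH, hbH⟩
  · exact ⟨(Cset_sub haC).1, hbH⟩

lemma step_root_anc (hb : b ∈ H) (hbu : b ≠ u) : ancStep G M H u rfun u b :=
  ⟨hb, hbu, fun h => hbu h.symm, Or.inl rfl⟩

lemma step_irr : ¬ ancStep G M H u rfun a a := fun h => h.2.2.1 rfl

/-- convenient constructor: `a` in the D-part. -/
lemma step_of_F (hb : b ∈ H \ {u}) (hbr : b ≠ rfun (Cset G H u b))
    (hF : FAnc G M (Dset G M H u rfun b) a b) : ancStep G M H u rfun a b :=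
  ⟨hb.1, hb.2, FAnc_ne hF, Or.inr ⟨(Dset_sub (FAnc_mem hF).1).1, Or.inr ⟨hbr, hF⟩⟩⟩

/-- convenient constructor: `a` the component root of `b`'s component. -/
lemma step_of_r (hb : b ∈ H \ {u}) (hbr : b ≠ rfun (Cset G H u b))
    (hrfun : ∀ b, b ∈ H \ {u} →
      rfun (Cset G H u b) ∈ Cset G H u b ∧ G.Adj u (rfun (Cset G H u b))) :
    ancStep G M H u rfun (rfun (Cset G H u b)) b :=
  ⟨hb.1, hb.2, fun h => hbr h.symm, Or.inr ⟨(hrfun b hb).1, Or.inl rfl⟩⟩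

section withH
variable (hrfun : ∀ b, b ∈ H \ {u} →
    rfun (Cset G H u b) ∈ Cset G H u b ∧ G.Adj u (rfun (Cset G H u b)))
  (hFD : ∀ b, b ∈ H \ {u} → b ≠ rfun (Cset G H u b) →
    Nonempty (PT G M (Dset G M H u rfun b)))

include hrfun hFD

lemma step_tr (hab : ancStep G M H u rfun a b) (hbc : ancStep G M H u rfun b c) :
    ancStep G M H u rfun a c := by
  obtain ⟨hbH, hbu, hanb, hcab⟩ := hab
  obtain ⟨hcH, hcu, hbnc, hcbc⟩ := hbc
  rcases hcab with rfl | ⟨haC, hsub⟩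
  · exact step_root_anc hcH hcu
  rcases hcbc with rfl | ⟨hbCc, hsub2⟩
  · exact absurd rfl hbu
  have hCbc : Cset G H u b = Cset G H u c := Cset_eq hbCc
  rcases hsub with har | ⟨hbr, hFab⟩
  · rcases hsub2 with hbr2 | ⟨hcr, hFbc⟩
    · exact absurd (by rw [har, hCbc, ← hbr2]) hanb
    · have har' : a = rfun (Cset G H u c) := by rw [har, hCbc]
      refine ⟨hcH, hcu, fun h => hcr (h ▸ har'), Or.inr ⟨?_, Or.inl har'⟩⟩
      rw [har']
      exact (hrfun c ⟨hcH, hcu⟩).1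
  · rcases hsub2 with hbr2 | ⟨hcr, hFbc⟩
    · exact absurd (by rw [hCbc] at hbr ⊢; exact hbr2) hbr
    · have hbD : b ∈ Dset G M H u rfun c := (FAnc_mem hFbc).1
      have hDbc : Dset G M H u rfun b = Dset G M H u rfun c := Dset_eq hbD
      have hND := hFD c ⟨hcH, hcu⟩ hcr
      have h1 : (Classical.choice hND).anc a b :=
        (FAnc_iff hND).mp ((FAnc_congr hDbc).mp hFab)
      have h2 : (Classical.choice hND).anc b c := (FAnc_iff hND).mp hFbc
      have h3 := (Classical.choice hND).tr a b c h1 h2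
      have haD : a ∈ Dset G M H u rfun c := ((Classical.choice hND).supp a c h3).1
      exact step_of_F ⟨hcH, hcu⟩ hcr ((FAnc_iff hND).mpr h3)

lemma step_chain (hac : ancStep G M H u rfun a c) (hbc : ancStep G M H u rfun b c) :
    a = b ∨ ancStep G M H u rfun a b ∨ ancStep G M H u rfun b a := by
  obtain ⟨hcH, hcu, hanc, hcac⟩ := hac
  obtain ⟨_, _, hbnc, hcbc⟩ := hbc
  rcases hcac with rfl | ⟨haC, hsub⟩
  · rcases hcbc with rfl | ⟨hbC, _⟩
    · exact Or.inl rfl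
    · exact Or.inr (Or.inl (step_root_anc (Cset_sub hbC).1 (Cset_sub hbC).2))
  rcases hcbc with rfl | ⟨hbC, hsub2⟩
  · exact Or.inr (Or.inr (step_root_anc (Cset_sub haC).1 (Cset_sub haC).2))
  by_cases hab : a = b
  · exact Or.inl hab
  rcases hsub with har | ⟨hcr, hFac⟩
  · rcases hsub2 with hbr | ⟨hcr, hFbc⟩
    · exact absurd (har.trans hbr.symm) hab
    · have hbD : b ∈ Dset G M H u rfun c := (FAnc_mem hFbc).1
      have hCb : Cset G H u b = Cset G H u c := Cset_eq hbC
      have hbr' : b ≠ rfun (Cset G H u b) := by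
        rw [hCb]
        exact fun h => ((Dset_sub hbD).2) h
      have har' : a = rfun (Cset G H u b) := by rw [hCb, ← har]
      exact Or.inr (Or.inl (har' ▸ step_of_r ⟨(Cset_sub hbC).1, (Cset_sub hbC).2⟩ hbr' hrfun))
  · rcases hsub2 with hbr | ⟨_, hFbc⟩
    · have hCa : Cset G H u a = Cset G H u c := Cset_eq haC
      have haD : a ∈ Dset G M H u rfun c := (FAnc_mem hFac).1
      have har' : a ≠ rfun (Cset G H u a) := by
        rw [hCa]
        exact fun h => ((Dset_sub haD).2) h
      have hbr' : b = rfun (Cset G H u a) := by rw [hCa, ← hbr]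
      exact Or.inr (Or.inr (hbr' ▸ step_of_r ⟨(Cset_sub haC).1, (Cset_sub haC).2⟩ har' hrfun))
    · have hND := hFD c ⟨hcH, hcu⟩ (by rename_i hcr _; exact hcr)
      have h1 : (Classical.choice hND).anc a c := (FAnc_iff hND).mp hFac
      have h2 : (Classical.choice hND).anc b c := (FAnc_iff hND).mp hFbc
      have haD : a ∈ Dset G M H u rfun c := ((Classical.choice hND).supp a c h1).1
      have hbD : b ∈ Dset G M H u rfun c := ((Classical.choice hND).supp b c h2).1
      rcases (Classical.choice hND).chain a b c h1 h2 with h | h | h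
      · exact Or.inl h
      · refine Or.inr (Or.inl (step_of_F ⟨(Cset_sub (Dset_sub hbD).1).1,
          (Cset_sub (Dset_sub hbD).1).2⟩ ?_ ?_))
        · have hCb : Cset G H u b = Cset G H u c := Cset_eq (Dset_sub hbD).1
          rw [hCb]
          exact fun hh => ((Dset_sub hbD).2) hh
        · exact (FAnc_congr (Dset_eq hbD)).mpr ((FAnc_iff hND).mpr h)
      · refine Or.inr (Or.inr (step_of_F ⟨(Cset_sub (Dset_sub haD).1).1,
          (Cset_sub (Dset_sub haD).1).2⟩ ?_ ?_))
        · have hCa : Cset G H u a = Cset G H u c := Cset_eq (Dset_sub haD).1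
          rw [hCa]
          exact fun hh => ((Dset_sub haD).2) hh
        · exact (FAnc_congr (Dset_eq haD)).mpr ((FAnc_iff hND).mpr h)

end withH
end MTDAux
namespace MTDAux
variable {V : Type} {G : SimpleGraph V} {M : G.Subgraph} {H : Set V} {u : V}
  {rfun : Set V → V} {a b c : V}

section withH
variable (hconn : ConnIn G H) (huH : u ∈ H)
  (hrfun : ∀ b, b ∈ H \ {u} →
    rfun (Cset G H u b) ∈ Cset G H u b ∧ G.Adj u (rfun (Cset G H u b)))
  (hFD : ∀ b, b ∈ H \ {u} → b ≠ rfun (Cset G H u b) →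
    Nonempty (PT G M (Dset G M H u rfun b)))

lemma step_anc_of_F {v : V} (hv : v ∈ H \ {u}) (hvr : v ≠ rfun (Cset G H u v))
    (hND : Nonempty (PT G M (Dset G M H u rfun v))) {x : V}
    (h : (Classical.choice hND).anc x v) : ancStep G M H u rfun x v :=
  step_of_F hv hvr ((FAnc_iff hND).mpr h)

lemma step_anc_to_F {v : V} (hv : v ∈ H \ {u}) (hvr : v ≠ rfun (Cset G H u v))
    (hND : Nonempty (PT G M (Dset G M H u rfun v))) {x : V} (hxu : x ≠ u)
    (hxr : x ≠ rfun (Cset G H u v)) (h : ancStep G M H u rfun x v) :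
    (Classical.choice hND).anc x v := by
  obtain ⟨_, _, hxv, hc⟩ := h
  rcases hc with h' | ⟨hxC, h'⟩
  · exact absurd h' hxu
  rcases h' with h' | ⟨_, hF⟩
  · exact absurd h' hxr
  · exact (FAnc_iff hND).mp hF

include hrfun hFD

lemma step_edge (hx : a ∈ H) (hy : b ∈ H) (hadj : G.Adj a b) :
    ancStep G M H u rfun a b ∨ ancStep G M H u rfun b a := by
  by_cases hau : a = u
  · subst hau; exact Or.inl (step_root_anc hy hadj.ne')
  by_cases hbu : b = u
  · subst hbu; exact Or.inr (step_root_anc hx hadj.ne)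
  have ha' : a ∈ H \ {u} := ⟨hx, hau⟩
  have hb' : b ∈ H \ {u} := ⟨hy, hbu⟩
  have hbCa : b ∈ Cset G H u a :=
    ⟨hb', Relation.ReflTransGen.single ⟨ha', hb', hadj⟩⟩
  have hCab : Cset G H u b = Cset G H u a := Cset_eq hbCa
  by_cases har : a = rfun (Cset G H u a)
  · by_cases hbr : b = rfun (Cset G H u b)
    · exact absurd (har.trans (by rw [hCab]) |>.trans hbr.symm) hadj.ne
    · have : a = rfun (Cset G H u b) := by rw [hCab, ← har]
      exact Or.inl (this ▸ step_of_r hb' hbr hrfun)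
  · by_cases hbr : b = rfun (Cset G H u b)
    · have : b = rfun (Cset G H u a) := by rw [← hCab, ← hbr]
      exact Or.inr (this ▸ step_of_r ha' har hrfun)
    · -- both inside the D-component
      have haD : a ∈ Dset G M H u rfun a := Dset_mem ha' har
      have hbr' : b ≠ rfun (Cset G H u a) := by rw [← hCab]; exact hbr
      have hbDa : b ∈ Dset G M H u rfun a :=
        ⟨⟨hbCa, hbr'⟩, Relation.ReflTransGen.single
          ⟨⟨Cset_mem ha', fun h => har h⟩, ⟨hbCa, hbr'⟩, hadj⟩⟩
      have hND := hFD a ha' har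
      have hDab : Dset G M H u rfun b = Dset G M H u rfun a := Dset_eq hbDa
      rcases (Classical.choice hND).edge a b haD hbDa hadj with h | h
      · exact Or.inl (step_of_F hb' hbr ((FAnc_congr hDab).mpr ((FAnc_iff hND).mpr h)))
      · exact Or.inr (step_of_F ha' har ((FAnc_iff hND).mpr h))

include hconn in
lemma step_sub : ∀ v, v ∈ H → ConnIn G {w | w = v ∨ ancStep G M H u rfun v w} := by
  intro v hv
  by_cases hvu : v = u
  · have hset : {w | w = v ∨ ancStep G M H u rfun v w} = H := by
      ext w
      simp only [Set.mem_setOf_eq]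
      constructor
      · rintro (rfl | hw)
        · exact hv
        · exact hw.1
      · intro hw
        rcases eq_or_ne w v with h | h
        · exact Or.inl h
        · exact Or.inr (by rw [hvu]; exact step_root_anc hw (fun hh => h (hh.trans hvu.symm)))
    rw [hset]
    exact hconn
  have hv' : v ∈ H \ {u} := ⟨hv, hvu⟩
  by_cases hvr : v = rfun (Cset G H u v)
  · have hset : {w | w = v ∨ ancStep G M H u rfun v w} = Cset G H u v := by
      ext w
      simp only [Set.mem_setOf_eq]
      constructor
      · rintro (rfl | hw)
        · exact Cset_mem hv'
        · obtain ⟨hwH, hwu, hvw, hc⟩ := hw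
          rcases hc with h' | ⟨hvC, h'⟩
          · exact absurd h' hvu
          have hCvw : Cset G H u v = Cset G H u w := Cset_eq hvC
          rcases h' with h' | ⟨hwr, hF⟩
          · rw [hCvw]; exact Cset_mem ⟨hwH, hwu⟩
          · exfalso
            have hvD : v ∈ Dset G M H u rfun w := (FAnc_mem hF).1
            exact (Dset_sub hvD).2 (by rw [← hCvw, ← hvr]; exact rfl)
      · intro hw
        by_cases hwv : w = v
        · exact Or.inl hwv
        · right
          have hw' : w ∈ H \ {u} := Cset_sub hw
          have hCwv : Cset G H u w = Cset G H u v := Cset_eq hw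
          have hwr : w ≠ rfun (Cset G H u w) := by
            rw [hCwv, ← hvr]; exact hwv
          have : v = rfun (Cset G H u w) := by rw [hCwv, ← hvr]
          exact this ▸ step_of_r hw' hwr hrfun
    rw [hset]
    exact Cset_conn hv'
  · have hND := hFD v hv' hvr
    have hvD : v ∈ Dset G M H u rfun v := Dset_mem hv' hvr
    have hset : {w | w = v ∨ ancStep G M H u rfun v w} =
        {w | w = v ∨ (Classical.choice hND).anc v w} := by
      ext w
      simp only [Set.mem_setOf_eq]
      constructor
      · rintro (rfl | hw)
        · exact Or.inl rfl
        · right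
          obtain ⟨hwH, hwu, hvw, hc⟩ := hw
          rcases hc with h' | ⟨hvC, h'⟩
          · exact absurd h' hvu
          have hCvw : Cset G H u v = Cset G H u w := Cset_eq hvC
          rcases h' with h' | ⟨hwr, hF⟩
          · exact absurd (h'.trans (congrArg rfun hCvw.symm)) hvr
          · have hvDw : v ∈ Dset G M H u rfun w := (FAnc_mem hF).1
            have hDwv : Dset G M H u rfun v = Dset G M H u rfun w := Dset_eq hvDw
            exact (FAnc_iff hND).mp ((FAnc_congr hDwv).mpr hF)
      · rintro (rfl | hw)
        · exact Or.inl rfl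
        · right
          have hwD : w ∈ Dset G M H u rfun v := ((Classical.choice hND).supp v w hw).2
          have hw' : w ∈ H \ {u} := Cset_sub (Dset_sub hwD).1
          have hCwv : Cset G H u w = Cset G H u v := Cset_eq (Dset_sub hwD).1
          have hwr : w ≠ rfun (Cset G H u w) := by
            rw [hCwv]; exact fun h => (Dset_sub hwD).2 h
          have hDvw : Dset G M H u rfun w = Dset G M H u rfun v := Dset_eq hwD
          exact step_of_F hw' hwr ((FAnc_congr hDvw).mpr ((FAnc_iff hND).mpr hw))
    rw [hset]
    exact (Classical.choice hND).sub v (Dset_mem hv' hvr)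

end withH
end MTDAux
namespace MTDAux
variable {V : Type} [Fintype V] {G : SimpleGraph V} {M : G.Subgraph} {H : Set V} {u : V}
  {rfun : Set V → V}

lemma step_dep (hM : M.IsMatching) (huH : u ∈ H) (huM : u ∈ M.verts)
    (hpuD : ∀ b, b ∈ H \ {u} → mpartner M u ∉ Dset G M H u rfun b)
    (hFD : ∀ b, b ∈ H \ {u} → b ≠ rfun (Cset G H u b) →
      Nonempty (PT G M (Dset G M H u rfun b))) :
    ∀ v, {a | ancStep G M H u rfun a v}.ncard ≤ (Pset M H).ncard := by
  have huP : u ∈ Pset M H := ⟨huM, Or.inl huH⟩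
  intro v
  by_cases hv : v ∈ H ∧ v ≠ u
  case neg =>
    have : {a | ancStep G M H u rfun a v} = ∅ := by
      ext a
      simp only [Set.mem_setOf_eq, Set.mem_empty_iff_false, iff_false]
      intro h
      exact hv ⟨h.1, h.2.1⟩
    rw [this, Set.ncard_empty]
    exact Nat.zero_le _
  obtain ⟨hvH, hvu⟩ := hv
  have hv' : v ∈ H \ {u} := ⟨hvH, hvu⟩
  by_cases hvr : v = rfun (Cset G H u v)
  · have hsub : {a | ancStep G M H u rfun a v} ⊆ {u} := by
      intro a ha
      obtain ⟨_, _, hav, hc⟩ := ha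
      rcases hc with rfl | ⟨haC, hc⟩
      · exact rfl
      rcases hc with har | ⟨hvr2, _⟩
      · exact absurd (har.trans hvr.symm) hav
      · exact absurd hvr (fun h => hvr2 h)
    have h1 : {a | ancStep G M H u rfun a v}.ncard ≤ ({u} : Set V).ncard :=
      Set.ncard_le_ncard hsub (Set.toFinite _)
    have h2 : (1 : ℕ) ≤ (Pset M H).ncard :=
      (Set.ncard_pos (Set.toFinite _)).mpr ⟨u, huP⟩
    rw [Set.ncard_singleton] at h1
    omega
  · have hND := hFD v hv' hvr
    have hsub : {a | ancStep G M H u rfun a v} ⊆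
        insert u (insert (rfun (Cset G H u v)) {a | (Classical.choice hND).anc a v}) := by
      intro a ha
      obtain ⟨_, _, hav, hc⟩ := ha
      rcases hc with rfl | ⟨haC, hc⟩
      · exact Set.mem_insert _ _
      rcases hc with har | ⟨_, hF⟩
      · exact Set.mem_insert_of_mem _ (har ▸ Set.mem_insert _ _)
      · exact Set.mem_insert_of_mem _ (Set.mem_insert_of_mem _ ((FAnc_iff hND).mp hF))
    have h1 := Set.ncard_le_ncard hsub (Set.toFinite _)
    have h2 := Set.ncard_insert_le u
      (insert (rfun (Cset G H u v)) {a | (Classical.choice hND).anc a v})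
    have h3 := Set.ncard_insert_le (rfun (Cset G H u v))
      {a | (Classical.choice hND).anc a v}
    have h4 := (Classical.choice hND).dep v
    -- the key decrement
    set pu := mpartner M u with hpu_def
    have hpadj : M.Adj u pu := mpartner_adj hM huM
    have hpuM : pu ∈ M.verts := M.edge_vert hpadj.symm
    have hGpu : G.Adj u pu := hpadj.adj_sub
    have hupu : u ≠ pu := hGpu.ne
    have hppu : mpartner M pu = u := (mpartner_eq hM hpadj.symm).symm
    have hDH : Dset G M H u rfun v ⊆ H := fun x hx => (Cset_sub (Dset_sub hx).1).1
    have hins : insert u (insert pu (Pset M (Dset G M H u rfun v))) ⊆ Pset M H := by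
      intro x hx
      rcases hx with rfl | hx
      · exact huP
      rcases hx with rfl | hx
      · exact ⟨hpuM, Or.inr (hppu ▸ huH)⟩
      · exact Pset_mono M hDH hx
    have huD : u ∉ Dset G M H u rfun v :=
      fun h => (Cset_sub (Dset_sub h).1).2 rfl
    have hunotin : u ∉ insert pu (Pset M (Dset G M H u rfun v)) := by
      intro h
      rcases h with h | h
      · exact hupu h
      · rcases h.2 with h' | h'
        · exact huD h'
        · exact hpuD v hv' h'
    have hpunotin : pu ∉ Pset M (Dset G M H u rfun v) := by
      intro h
      rcases h.2 with h' | h'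
      · exact hpuD v hv' h'
      · rw [hppu] at h'
        exact huD h'
    have h5 : (insert u (insert pu (Pset M (Dset G M H u rfun v)))).ncard =
        (Pset M (Dset G M H u rfun v)).ncard + 2 := by
      rw [Set.ncard_insert_of_notMem hunotin (Set.toFinite _),
        Set.ncard_insert_of_notMem hpunotin (Set.toFinite _)]
    have h6 := Set.ncard_le_ncard hins (Set.toFinite _)
    omega

end MTDAux
namespace MTDAux
variable {V : Type} {G : SimpleGraph V}

lemma get_congr_s2 {l : List V} {i j : ℕ} (hij : i = j) (hi : i < l.length) :
    l.get ⟨i, hi⟩ = l.get ⟨j, hij ▸ hi⟩ := by subst hij; rfl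

lemma goodList_cons_cons {l : List V} {x y : V} (hxy : G.Adj x y)
    (hg : GoodList G l)
    (hsing : ∀ (h : l.length = 1), G.Adj y (l.get ⟨0, by omega⟩)) :
    GoodList G (x :: y :: l) := by
  rcases hg with ⟨he, hp⟩ | ⟨ho, h3, hinit, hlt, hlast⟩ | h1
  · left
    refine ⟨by simpa using he.add (by decide : Even 2), ?_⟩
    intro j h
    match j with
    | 0 => exact hxy
    | (k+1) =>
        have hb : 2 * k + 1 < l.length := by
          simp only [List.length_cons] at h
          omega
        exact hp k hb
  · right; left
    have hlen : (x :: y :: l).length = l.length + 2 := by simp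
    refine ⟨by rw [hlen]; exact ho.add_even (by decide), by rw [hlen]; omega, ?_, ?_⟩
    · intro j h
      match j with
      | 0 => exact hxy
      | (k+1) =>
          have hb : 2 * k + 1 < l.length - 1 := by
            rw [hlen] at h
            omega
          exact hinit k hb
    · refine ⟨by rw [hlen]; omega, ?_⟩
      have e1 : (x :: y :: l).length - 2 = (l.length - 2) + 2 := by rw [hlen]; omega
      have e2 : (x :: y :: l).length - 1 = (l.length - 1) + 2 := by rw [hlen]; omega
      rw [get_congr_s2 e1, get_congr_s2 e2]
      exact hlast
  · right; left
    match l, h1, hsing with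
    | [z], _, hsing =>
        refine ⟨(by decide : Odd 3), (by decide : (3:ℕ) ≤ 3), ?_, ⟨(by decide : (2:ℕ) < 3), ?_⟩⟩
        · intro j h
          match j, h with
          | 0, _ => exact hxy
        · exact hsing rfl
end MTDAux
namespace MTDAux
variable {V : Type} {G : SimpleGraph V} {M : G.Subgraph} {H : Set V} {u : V}
  {rfun : Set V → V}

lemma step_mat (hconn : ConnIn G H) (huH : u ∈ H)
    (hbig : ∃ b, b ∈ H ∧ b ≠ u)
    (hrfun : ∀ b, b ∈ H \ {u} →
      rfun (Cset G H u b) ∈ Cset G H u b ∧ G.Adj u (rfun (Cset G H u b)))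
    (hFD : ∀ b, b ∈ H \ {u} → b ≠ rfun (Cset G H u b) →
      Nonempty (PT G M (Dset G M H u rfun b))) :
    ∀ v, v ∈ H → (∀ w, ¬ ancStep G M H u rfun v w) →
      ∀ l : List V, l.Pairwise (ancStep G M H u rfun) →
        (∀ x, x ∈ l ↔ (ancStep G M H u rfun x v ∨ x = v)) → GoodList G l := by
  have htr : ∀ a b c, ancStep G M H u rfun a b → ancStep G M H u rfun b c →
      ancStep G M H u rfun a c := fun _ _ _ hab hbc => step_tr hrfun hFD hab hbc
  have hirr : ∀ a, ¬ ancStep G M H u rfun a a := fun _ => step_irr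
  intro v hv hleaf l hp hmem
  have hvu : v ≠ u := by
    rintro rfl
    obtain ⟨b, hbH, hbu⟩ := hbig
    exact hleaf b (step_root_anc hbH hbu)
  have hv' : v ∈ H \ {u} := ⟨hv, hvu⟩
  have hul : u ∈ l := (hmem u).mpr (Or.inl (step_root_anc hv hvu))
  have humin : ∀ x ∈ l, x ≠ u → ancStep G M H u rfun u x := by
    intro x hx hxu
    rcases (hmem x).mp hx with h | rfl
    · exact step_root_anc (step_supp huH h).1 hxu
    · exact step_root_anc hv hxu
  obtain ⟨l₁, rfl, hul₁⟩ := strip_head htr hirr hul humin hp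
  have hp₁ : l₁.Pairwise (ancStep G M H u rfun) := (List.pairwise_cons.mp hp).2
  have hmem₁ : ∀ x, x ∈ l₁ ↔ ((ancStep G M H u rfun x v ∨ x = v) ∧ x ≠ u) := by
    intro x
    constructor
    · intro hx
      exact ⟨(hmem x).mp (List.mem_cons_of_mem _ hx), fun h => hul₁ (h ▸ hx)⟩
    · rintro ⟨h, hxu⟩
      rcases List.mem_cons.mp ((hmem x).mpr h) with h' | h'
      · exact absurd h' hxu
      · exact h'
  by_cases hvr : v = rfun (Cset G H u v)
  · have hl₁ : l₁ = [v] := by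
      apply list_eq_singleton hirr hp₁
      intro x
      rw [hmem₁]
      constructor
      · rintro ⟨h | rfl, hxu⟩
        · obtain ⟨_, _, hxv, hc⟩ := h
          rcases hc with rfl | ⟨hxC, hc⟩
          · exact absurd rfl hxu
          rcases hc with hxr | ⟨hvr2, _⟩
          · exact hxr.trans hvr.symm
          · exact (hvr2 hvr).elim
        · rfl
      · rintro rfl
        exact ⟨Or.inr rfl, hvu⟩
    subst hl₁
    left
    refine ⟨(by decide : Even 2), ?_⟩
    intro j h
    match j, h with
    | 0, _ =>
        show G.Adj u v
        rw [hvr]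
        exact (hrfun v hv').2
  · have hND := hFD v hv' hvr
    have hvD : v ∈ Dset G M H u rfun v := Dset_mem hv' hvr
    have hleafT : ∀ w, ¬ (Classical.choice hND).anc v w := by
      intro w hw
      have hwD : w ∈ Dset G M H u rfun v := ((Classical.choice hND).supp v w hw).2
      apply hleaf w
      have hw' : w ∈ H \ {u} := Cset_sub (Dset_sub hwD).1
      have hCwv : Cset G H u w = Cset G H u v := Cset_eq (Dset_sub hwD).1
      have hwr : w ≠ rfun (Cset G H u w) := by
        rw [hCwv]; exact fun h => (Dset_sub hwD).2 h
      have hDvw : Dset G M H u rfun w = Dset G M H u rfun v := Dset_eq hwD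
      exact step_of_F hw' hwr ((FAnc_congr hDvw).mpr ((FAnc_iff hND).mpr hw))
    have hrH : rfun (Cset G H u v) ∈ H \ {u} := Cset_sub (hrfun v hv').1
    have hrancv : ancStep G M H u rfun (rfun (Cset G H u v)) v := step_of_r hv' hvr hrfun
    have hrl₁ : rfun (Cset G H u v) ∈ l₁ := (hmem₁ _).mpr ⟨Or.inl hrancv, hrH.2⟩
    have hrmin : ∀ x ∈ l₁, x ≠ rfun (Cset G H u v) →
        ancStep G M H u rfun (rfun (Cset G H u v)) x := by
      intro x hx hxr
      rcases (hmem₁ x).mp hx with ⟨h | rfl, hxu⟩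
      · have hxT : (Classical.choice hND).anc x v := step_anc_to_F hv' hvr hND hxu hxr h
        have hxD : x ∈ Dset G M H u rfun v := ((Classical.choice hND).supp x v hxT).1
        have hx' : x ∈ H \ {u} := Cset_sub (Dset_sub hxD).1
        have hCxv : Cset G H u x = Cset G H u v := Cset_eq (Dset_sub hxD).1
        have hxr' : x ≠ rfun (Cset G H u x) := by rw [hCxv]; exact hxr
        have he : rfun (Cset G H u x) = rfun (Cset G H u v) := congrArg rfun hCxv
        exact he ▸ step_of_r hx' hxr' hrfun
      · exact hrancv
    obtain ⟨l₂, hl₁, hrl₂⟩ := strip_head htr hirr hrl₁ hrmin hp₁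
    subst hl₁
    have hp₂ : l₂.Pairwise (ancStep G M H u rfun) := (List.pairwise_cons.mp hp₁).2
    have hmem₂ : ∀ x, x ∈ l₂ ↔ ((Classical.choice hND).anc x v ∨ x = v) := by
      intro x
      constructor
      · intro hx
        have hxne : x ≠ rfun (Cset G H u v) := fun h => hrl₂ (h ▸ hx)
        rcases (hmem₁ x).mp (List.mem_cons_of_mem _ hx) with ⟨h | rfl, hxu⟩
        · exact Or.inl (step_anc_to_F hv' hvr hND hxu hxne h)
        · exact Or.inr rfl
      · intro hx
        have hxanc : (ancStep G M H u rfun x v ∨ x = v) ∧ x ≠ u ∧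
            x ≠ rfun (Cset G H u v) := by
          rcases hx with hx | rfl
          · have hxD : x ∈ Dset G M H u rfun v := ((Classical.choice hND).supp x v hx).1
            refine ⟨Or.inl (step_anc_of_F hv' hvr hND hx), ?_, ?_⟩
            · exact (Cset_sub (Dset_sub hxD).1).2
            · exact fun h => (Dset_sub hxD).2 h
          · exact ⟨Or.inr rfl, hvu, hvr⟩
        have : x ∈ rfun (Cset G H u v) :: l₂ := (hmem₁ x).mpr ⟨hxanc.1, hxanc.2.1⟩
        rcases List.mem_cons.mp this with h' | h'
        · exact absurd h' hxanc.2.2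
        · exact h'
    have hpT : l₂.Pairwise (Classical.choice hND).anc := by
      refine List.Pairwise.imp_of_mem ?_ hp₂
      intro x y hx hy hxy
      have hxD : x ∈ Dset G M H u rfun v := by
        rcases (hmem₂ x).mp hx with h | rfl
        · exact ((Classical.choice hND).supp x v h).1
        · exact hvD
      have hyD : y ∈ Dset G M H u rfun v := by
        rcases (hmem₂ y).mp hy with h | rfl
        · exact ((Classical.choice hND).supp y v h).1
        · exact hvD
      obtain ⟨hyH, hyu, hxyne, hc⟩ := hxy
      rcases hc with rfl | ⟨hxC, hc⟩
      · exact absurd rfl (Cset_sub (Dset_sub hxD).1).2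
      have hCyv : Cset G H u y = Cset G H u v := Cset_eq (Dset_sub hyD).1
      rcases hc with hxr | ⟨hyr, hF⟩
      · exact absurd (by rw [← hCyv]; exact hxr ▸ rfl) ((Dset_sub hxD).2)
      · have hDyv : Dset G M H u rfun y = Dset G M H u rfun v := Dset_eq hyD
        exact (FAnc_iff hND).mp ((FAnc_congr hDyv).mp hF)
    have hgood₂ := (Classical.choice hND).mat v hvD hleafT l₂ hpT hmem₂
    apply goodList_cons_cons (hrfun v hv').2 hgood₂
    intro hlen1
    have hv2 : v ∈ l₂ := (hmem₂ v).mpr (Or.inr rfl)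
    obtain ⟨z, hz⟩ := List.length_eq_one_iff.mp hlen1
    have hzv : z = v := by
      rw [hz] at hv2
      exact (List.mem_singleton.mp hv2).symm
    rw [hzv] at hz
    subst hz
    show G.Adj (rfun (Cset G H u v)) v
    have hnoT : ∀ x, ¬ (Classical.choice hND).anc x v := by
      intro x hx
      have hxm : x ∈ [v] := (hmem₂ x).mpr (Or.inl hx)
      simp only [List.mem_singleton] at hxm
      rw [hxm] at hx
      exact (Classical.choice hND).irr v hx
    have hDsing : ∀ w ∈ Dset G M H u rfun v, w = v := by
      intro w hw
      by_contra hwv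
      rcases eq_or_ne (Classical.choice hND).root v with hroot | hroot
      · apply hleafT w
        have h2 := (Classical.choice hND).root_anc w hw (fun h => hwv (h.trans hroot))
        rw [hroot] at h2
        exact h2
      · exact hnoT (Classical.choice hND).root
          ((Classical.choice hND).root_anc v hvD (fun h => hroot h.symm))
    have hreach : ReachIn G (Cset G H u v) (rfun (Cset G H u v)) v :=
      Cset_conn hv' _ (hrfun v hv').1 v (Cset_mem hv')
    obtain ⟨x, hxC, hxr, hadj, hxv⟩ := reach_escape hreach hvr
    have hxD : x ∈ Dset G M H u rfun v := ⟨⟨hxC, hxr⟩, hxv.symm⟩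
    have hxveq := hDsing x hxD
    rw [hxveq] at hadj
    exact hadj
end MTDAux
namespace MTDAux
variable {V : Type} {G : SimpleGraph V} {M : G.Subgraph}

noncomputable def rchoose (G : SimpleGraph V) (u pu : V) : Set V → V := fun K =>
  letI := Classical.dec (pu ∈ K)
  if pu ∈ K then pu else
    letI := Classical.dec (∃ x, x ∈ K ∧ G.Adj u x)
    if h : ∃ x, x ∈ K ∧ G.Adj u x then h.choose else u

lemma rchoose_of_mem {u pu : V} {K : Set V} (h : pu ∈ K) : rchoose G u pu K = pu := by
  unfold rchoose
  split
  · rfl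
  · next hn => exact absurd h hn

lemma rchoose_mem {u pu : V} {K : Set V} (hGpu : G.Adj u pu)
    (hex : ∃ x, x ∈ K ∧ G.Adj u x) :
    rchoose G u pu K ∈ K ∧ G.Adj u (rchoose G u pu K) := by
  unfold rchoose
  split
  · next h => exact ⟨h, hGpu⟩
  · next h =>
      exact ⟨hex.choose_spec.1, hex.choose_spec.2⟩

variable [Fintype V]

lemma buildPT (hM : M.IsMatching)
    (hmax : ∀ u v : V, G.Adj u v → u ∈ M.verts ∨ v ∈ M.verts) :
    ∀ (n : ℕ) (H : Set V), H.ncard ≤ n → H.Nonempty → ConnIn G H →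
      Nonempty (PT G M H) := by
  intro n
  induction n with
  | zero =>
      intro H hcard hne _
      have := (Set.ncard_pos (Set.toFinite H)).mpr hne
      omega
  | succ n IH =>
      intro H hcard hne hconn
      classical
      by_cases hsing : ∀ a ∈ H, ∀ b ∈ H, a = b
      · obtain ⟨v, hv⟩ := hne
        refine ⟨⟨fun _ _ => False, v, hv, fun a b h => h.elim,
          fun b hb hbv => absurd (hsing b hb v hv) hbv,
          fun a b c h _ => h.elim, fun a h => h, fun a b c h _ => h.elim,
          fun x y hx hy hadj => absurd (hsing x hx y hy) hadj.ne,
          ?_, ?_, ?_⟩⟩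
        · intro w hw a ha b hb
          have ha' : a = w := ha.elim id False.elim
          have hb' : b = w := hb.elim id False.elim
          rw [ha', hb']
          exact Relation.ReflTransGen.refl
        · intro w
          have : {a : V | False} = ∅ := Set.setOf_false
          rw [this, Set.ncard_empty]
          exact Nat.zero_le _
        · intro w hw _ l hp hmem
          right; right
          have hl : l = [w] := by
            refine list_eq_singleton (fun a h => h) hp ?_
            intro x
            rw [hmem x]
            simp
          rw [hl]
          rfl
      · push_neg at hsing
        obtain ⟨a0, ha0, b0, hb0, hab⟩ := hsing
        obtain ⟨x0, y0, hx0, hy0, hadj0⟩ := exists_adj_of_reach (hconn a0 ha0 b0 hb0) hab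
        have huex : ∃ u, u ∈ M.verts ∧ u ∈ H := by
          rcases hmax x0 y0 hadj0 with h | h
          · exact ⟨x0, h, hx0⟩
          · exact ⟨y0, h, hy0⟩
        obtain ⟨u, huM, huH⟩ := huex
        set pu := mpartner M u with hpu_def
        have hpadj : M.Adj u pu := mpartner_adj hM huM
        have hGpu : G.Adj u pu := hpadj.adj_sub
        set rfun : Set V → V := rchoose G u pu with hrfun_def
        have hrfun : ∀ b, b ∈ H \ {u} →
            rfun (Cset G H u b) ∈ Cset G H u b ∧ G.Adj u (rfun (Cset G H u b)) := by
          intro b hb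
          apply rchoose_mem hGpu
          obtain ⟨x, hxH, hxu, hadj, hxb⟩ := reach_escape (hconn u huH b hb.1) hb.2
          exact ⟨x, ⟨⟨hxH, hxu⟩, hxb.symm⟩, hadj⟩
        have hpuD : ∀ b, b ∈ H \ {u} → pu ∉ Dset G M H u rfun b := by
          intro b hb hmem
          have h1 : pu ∈ Cset G H u b := (Dset_sub hmem).1
          have h2 : rfun (Cset G H u b) = pu := rchoose_of_mem h1
          exact (Dset_sub hmem).2 (by rw [h2]; rfl)
        have hFD : ∀ b, b ∈ H \ {u} → b ≠ rfun (Cset G H u b) →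
            Nonempty (PT G M (Dset G M H u rfun b)) := by
          intro b hb hbr
          apply IH
          · have hsub : Dset G M H u rfun b ⊆ H \ {u} :=
              fun x hx => Cset_sub (Dset_sub hx).1
            have h1 := Set.ncard_le_ncard hsub (Set.toFinite _)
            have h2 : (H \ {u}).ncard = H.ncard - 1 :=
              Set.ncard_diff_singleton_of_mem huH
            have h3 : 1 ≤ H.ncard := (Set.ncard_pos (Set.toFinite _)).mpr ⟨u, huH⟩
            omega
          · exact ⟨b, Dset_mem hb hbr⟩
          · exact Dset_conn hb hbr
        have hbig : ∃ b, b ∈ H ∧ b ≠ u := by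
          by_cases h : a0 = u
          · exact ⟨b0, hb0, fun hb => hab (by rw [h, hb])⟩
          · exact ⟨a0, ha0, h⟩
        exact ⟨⟨ancStep G M H u rfun, u, huH,
          fun a b h => step_supp huH h,
          fun b hb hbu => step_root_anc hb hbu,
          fun a b c hab hbc => step_tr hrfun hFD hab hbc,
          fun a => step_irr,
          fun a b c hac hbc => step_chain hrfun hFD hac hbc,
          fun x y hx hy h => step_edge hrfun hFD hx hy h,
          step_sub hconn hrfun hFD,
          step_dep hM huH huM hpuD hFD,
          step_mat hconn huH hbig hrfun hFD⟩⟩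

end MTDAux
namespace MTDAux
variable {V : Type} {G : SimpleGraph V}

lemma isolated_reach {S : Set V} {v u : V} (hv : ∀ w, ¬ G.Adj v w) (hvS : v ∈ S)
    (huS : u ∈ S) (h : (G.induce S).Reachable ⟨v, hvS⟩ ⟨u, huS⟩) : v = u := by
  obtain ⟨W⟩ := h
  cases W with
  | nil => rfl
  | cons h' _ => exact absurd h' (by intro hh; exact hv _ hh)

end MTDAux

theorem stmt2' {V : Type} [Fintype V] (G : SimpleGraph V)
    (M : G.Subgraph) (hM : M.IsMatching)
    (hmax : ∀ u v : V, G.Adj u v → u ∈ M.verts ∨ v ∈ M.verts) :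
    mtd G ≤ M.verts.ncard + 1 := by
  classical
  open MTDAux in
  by_cases hiso : ∃ v : V, ∀ w, ¬ G.Adj v w
  · -- there is an isolated vertex: no matched elimination tree exists
    have hempty : {d | ∃ T : ElimTree G, T.IsMatched ∧ T.depth = d} = ∅ := by
      ext d
      simp only [Set.mem_setOf_eq, Set.mem_empty_iff_false, iff_false]
      rintro ⟨T, hTm, _⟩
      obtain ⟨v, hv⟩ := hiso
      have hnoanc : ∀ u, ¬ T.anc u v := by
        intro u hu
        have hconn := T.subtreeConn u
        have hvS : v ∈ {w | w = u ∨ T.anc u w} := Or.inr hu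
        have huS : u ∈ {w | w = u ∨ T.anc u w} := Or.inl rfl
        have hne : u ≠ v := fun h => T.irrefl u (by rw [h] at hu ⊢; exact hu)
        exact hne (MTDAux.isolated_reach hv hvS huS (hconn.preconnected _ _)).symm
      have hnodesc : ∀ w, ¬ T.anc v w := by
        intro w hw
        have hconn := T.subtreeConn v
        have hwS : w ∈ {x | x = v ∨ T.anc v x} := Or.inr hw
        have hvS : v ∈ {x | x = v ∨ T.anc v x} := Or.inl rfl
        have hne : v ≠ w := fun h => T.irrefl v (by rw [h] at hw ⊢; exact hw)
        exact hne (MTDAux.isolated_reach hv hvS hwS (hconn.preconnected _ _))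
      have hml := hTm v hnodesc [v] (by simp)
        (by intro x; simp only [List.mem_singleton]
            constructor
            · rintro rfl; exact Or.inr rfl
            · rintro (h | rfl)
              · exact absurd h (hnoanc x)
              · rfl)
      rcases hml with ⟨he, _⟩ | ⟨_, p, _, hml2⟩
      · simp at he
      · obtain ⟨hp2, _⟩ := hml2
        simp only [List.length_singleton] at hp2
        omega
    rw [mtd, hempty, Nat.sInf_empty]
    exact Nat.zero_le _
  · push_neg at hiso
    have hcomp : ∀ c : G.ConnectedComponent, Nonempty (MTDAux.PT G M c.supp) := by
      intro c
      apply MTDAux.buildPT hM hmax (Fintype.card V)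
      · refine le_trans (Set.ncard_le_ncard (Set.subset_univ _) (Set.toFinite _)) ?_
        rw [Set.ncard_univ, Nat.card_eq_fintype_card]
      · obtain ⟨v, hvc⟩ := c.exists_rep
        exact ⟨v, by rw [SimpleGraph.ConnectedComponent.mem_supp_iff]; exact hvc⟩
      · intro a ha b hb
        rw [SimpleGraph.ConnectedComponent.mem_supp_iff] at ha hb
        have hre : G.Reachable a b := SimpleGraph.ConnectedComponent.exact (ha.trans hb.symm)
        have hru : MTDAux.ReachIn G Set.univ a b := by
          have hr := (SimpleGraph.reachable_iff_reflTransGen a b).mp hre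
          exact Relation.ReflTransGen.mono (r := G.Adj) (p := MTDAux.Rl G Set.univ)
            (fun x y h => ⟨Set.mem_univ x, Set.mem_univ y, h⟩) _ _ hr
        refine (MTDAux.reachIn_closed hru ?_ ?_).1
        · rw [SimpleGraph.ConnectedComponent.mem_supp_iff]; exact ha
        · intro z w hz hr
          rw [SimpleGraph.ConnectedComponent.mem_supp_iff] at hz ⊢
          rw [← hz]
          exact SimpleGraph.ConnectedComponent.sound hr.2.2.symm.reachable
    let F : ∀ c : G.ConnectedComponent, MTDAux.PT G M c.supp :=
      fun c => Classical.choice (hcomp c)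
    have hmemsupp : ∀ a : V, a ∈ (G.connectedComponentMk a).supp := by
      intro a
      rw [SimpleGraph.ConnectedComponent.mem_supp_iff]
    have hsuppeq : ∀ {a b : V}, b ∈ (G.connectedComponentMk a).supp →
        G.connectedComponentMk b = G.connectedComponentMk a := by
      intro a b hb
      rwa [SimpleGraph.ConnectedComponent.mem_supp_iff] at hb
    suffices hsuff : ∃ T : ElimTree G, T.IsMatched ∧ T.depth ≤ M.verts.ncard + 1 by
      obtain ⟨T, hm, hd⟩ := hsuff
      exact le_trans (Nat.sInf_le ⟨T, hm, rfl⟩) hd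
    refine ⟨⟨fun a b => (F (G.connectedComponentMk a)).anc a b, ?_, ?_, ?_, ?_, ?_⟩, ?_, ?_⟩
    · -- trans
      intro a b c hab hbc
      have he : G.connectedComponentMk b = G.connectedComponentMk a :=
        hsuppeq ((F (G.connectedComponentMk a)).supp a b hab).2
      rw [he] at hbc
      exact (F (G.connectedComponentMk a)).tr a b c hab hbc
    · -- irrefl
      intro a
      exact (F (G.connectedComponentMk a)).irr a
    · -- chainAnc
      intro a b c hac hbc
      have he : G.connectedComponentMk c = G.connectedComponentMk a :=
        hsuppeq ((F (G.connectedComponentMk a)).supp a c hac).2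
      have he2 : G.connectedComponentMk c = G.connectedComponentMk b :=
        hsuppeq ((F (G.connectedComponentMk b)).supp b c hbc).2
      have he3 : G.connectedComponentMk b = G.connectedComponentMk a := he2.symm.trans he
      rw [he3] at hbc
      rcases (F (G.connectedComponentMk a)).chain a b c hac hbc with h | h | h
      · exact Or.inl h
      · exact Or.inr (Or.inl h)
      · right; right
        show (F (G.connectedComponentMk b)).anc b a
        rw [he3]
        exact h
    · -- edgeComp
      intro x y hadj
      have he : G.connectedComponentMk y = G.connectedComponentMk x :=
        SimpleGraph.ConnectedComponent.sound hadj.symm.reachable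
      have hy : y ∈ (G.connectedComponentMk x).supp := by
        rw [SimpleGraph.ConnectedComponent.mem_supp_iff]
        exact he
      rcases (F (G.connectedComponentMk x)).edge x y (hmemsupp x) hy hadj with h | h
      · exact Or.inl h
      · right
        show (F (G.connectedComponentMk y)).anc y x
        rw [he]
        exact h
    · -- subtreeConn
      intro v
      exact MTDAux.connected_induce ⟨v, Or.inl rfl⟩
        ((F (G.connectedComponentMk v)).sub v (hmemsupp v))
    · -- IsMatched
      intro v hleaf l hp hmem
      have hancv : ∀ x, (F (G.connectedComponentMk x)).anc x v ↔
          (F (G.connectedComponentMk v)).anc x v := by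
        intro x
        constructor
        · intro h
          have he : G.connectedComponentMk v = G.connectedComponentMk x :=
            hsuppeq ((F (G.connectedComponentMk x)).supp x v h).2
          rw [← he] at h
          exact h
        · intro h
          have he : G.connectedComponentMk x = G.connectedComponentMk v :=
            hsuppeq ((F (G.connectedComponentMk v)).supp x v h).1
          rw [he]
          exact h
      have hmemF : ∀ x, x ∈ l ↔ ((F (G.connectedComponentMk v)).anc x v ∨ x = v) :=
        fun x => (hmem x).trans (or_congr_left (hancv x))
      have hpF : l.Pairwise (F (G.connectedComponentMk v)).anc := by
        refine List.Pairwise.imp_of_mem ?_ hp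
        intro x y hx hy hxy
        have hxc : G.connectedComponentMk x = G.connectedComponentMk v := by
          rcases (hmemF x).mp hx with h | rfl
          · exact hsuppeq ((F (G.connectedComponentMk v)).supp x v h).1
          · rfl
        have hxy' : (F (G.connectedComponentMk x)).anc x y := hxy
        rw [hxc] at hxy'
        exact hxy'
      have hgood := (F (G.connectedComponentMk v)).mat v (hmemsupp v) hleaf l hpF hmemF
      refine MTDAux.goodList_matchedList hgood ?_
      intro hlen1
      have hnoanc : ∀ x, ¬ (F (G.connectedComponentMk v)).anc x v := by
        intro x hx
        have hxl : x ∈ l := (hmemF x).mpr (Or.inl hx)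
        obtain ⟨z, hz⟩ := List.length_eq_one_iff.mp hlen1
        rw [hz] at hxl
        have hvl : v ∈ l := (hmemF v).mpr (Or.inr rfl)
        rw [hz] at hvl
        simp only [List.mem_singleton] at hxl hvl
        rw [hxl, ← hvl] at hx
        exact (F (G.connectedComponentMk v)).irr v hx
      obtain ⟨w, hw⟩ := hiso v
      have hwsupp : w ∈ (G.connectedComponentMk v).supp := by
        rw [SimpleGraph.ConnectedComponent.mem_supp_iff]
        exact SimpleGraph.ConnectedComponent.sound hw.symm.reachable
      rcases eq_or_ne (F (G.connectedComponentMk v)).root v with hroot | hroot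
      · have := (F (G.connectedComponentMk v)).root_anc w hwsupp
          (fun h => hw.ne' (by rw [h, hroot]))
        rw [hroot] at this
        exact hleaf w this
      · exact hnoanc _ ((F (G.connectedComponentMk v)).root_anc v (hmemsupp v)
          (fun h => hroot h.symm))
    · -- depth bound
      rw [ElimTree.depth]
      refine Finset.sup_le ?_
      intro v _
      show {a | (F (G.connectedComponentMk a)).anc a v}.ncard + 1 ≤ M.verts.ncard + 1
      have hset : {a | (F (G.connectedComponentMk a)).anc a v} =
          {a | (F (G.connectedComponentMk v)).anc a v} := by
        ext a
        simp only [Set.mem_setOf_eq]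
        constructor
        · intro h
          have he : G.connectedComponentMk v = G.connectedComponentMk a :=
            hsuppeq ((F (G.connectedComponentMk a)).supp a v h).2
          rw [← he] at h
          exact h
        · intro h
          have he : G.connectedComponentMk a = G.connectedComponentMk v :=
            hsuppeq ((F (G.connectedComponentMk v)).supp a v h).1
          rw [he]
          exact h
      have h1 := (F (G.connectedComponentMk v)).dep v
      have h2 := Set.ncard_le_ncard
        (MTDAux.Pset_subset M ((G.connectedComponentMk v).supp)) (Set.toFinite _)
      have h3 : {a | (F (G.connectedComponentMk a)).anc a v}.ncard ≤ M.verts.ncard := by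
        rw [hset]
        exact le_trans h1 h2
      omega

/-- The matched treedepth of `G` is at most one more than the number of
vertices of any (in particular, a smallest) maximal matching of `G`. -/
theorem stmt2 {V : Type} [Fintype V] (G : SimpleGraph V)
    (M : G.Subgraph) (hM : M.IsMatching)
    (hmax : ∀ u v : V, G.Adj u v → u ∈ M.verts ∨ v ∈ M.verts) :
    mtd G ≤ M.verts.ncard + 1 :=
  stmt2' G M hM hmax
end

section
/- Let G be a connected graph with treedepth exactly 3. Then the matched treedepth of G equals 3 if and only if G contains no induced subgraph isomorphic to C_4 (the 4-cycle), P_6 (the path on 6 vertices), or T_{3,3} (the (3,3)-tadpole graph, i.e., a triangle with a path of 3 edges attached to one of its vertices). -/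
open SimpleGraph

/-- `G` contains an induced subgraph isomorphic to `H`. -/
def HasInducedSubgraphIso {V W : Type} (G : SimpleGraph V) (H : SimpleGraph W) : Prop :=
  ∃ S : Set V, Nonempty (H ≃g G.induce S)

/-- Chordal: no induced cycles of length more than 3. -/
def IsChordal {V : Type} (G : SimpleGraph V) : Prop :=
  ∀ n : ℕ, 4 ≤ n → ¬ HasInducedSubgraphIso G (SimpleGraph.cycleGraph n)

/-- The clique number of a graph. -/
noncomputable def cliqueNumber {V : Type} (G : SimpleGraph V) : ℕ :=
  sSup {n | ∃ s : Finset V, G.IsNClique n s}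

/-- A minimum chordal completion: a chordal supergraph on the same vertex set
minimizing the size of the largest clique. -/
def IsMinChordalCompletion {V : Type} (G Gt : SimpleGraph V) : Prop :=
  G ≤ Gt ∧ IsChordal Gt ∧
    ∀ G'' : SimpleGraph V, G ≤ G'' → IsChordal G'' → cliqueNumber Gt ≤ cliqueNumber G''

/-- A special minimum chordal completion: additionally, no independent set of
size 3 in `G` induces a clique in the completion. -/
def IsSpecialMCC {V : Type} (G Gt : SimpleGraph V) : Prop :=
  IsMinChordalCompletion G Gt ∧
    ∀ a b c : V, a ≠ b → b ≠ c → a ≠ c →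
      ¬G.Adj a b → ¬G.Adj b c → ¬G.Adj a c →
      ¬(Gt.Adj a b ∧ Gt.Adj b c ∧ Gt.Adj a c)

/-- The `(3,3)`-tadpole: a triangle `0,1,2` with a pendant path `2-3-4-5`. -/
def tadpole33 : SimpleGraph (Fin 6) :=
  SimpleGraph.fromEdgeSet {s(0, 1), s(1, 2), s(0, 2), s(2, 3), s(3, 4), s(4, 5)}

namespace MTDAux

variable {V : Type} {G : SimpleGraph V}

def tadAdj : Fin 6 → Fin 6 → Bool := fun i j =>
  (i.val, j.val) ∈ [(0,1),(1,0),(1,2),(2,1),(0,2),(2,0),(2,3),(3,2),(3,4),(4,3),(4,5),(5,4)]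
lemma tadpole33_adj_iff (i j : Fin 6) : tadpole33.Adj i j ↔ tadAdj i j = true := by
  fin_cases i <;> fin_cases j <;>
    simp [tadpole33, Sym2.eq, Sym2.rel_iff', tadAdj] <;> decide
lemma cons_val_five {α : Type*} (a b c d e f : α) : ![a,b,c,d,e,f] (5 : Fin 6) = f := rfl
variable {V : Type} {G : SimpleGraph V}
lemma hasT33_of {t0 t1 t2 t3 t4 t5 : V}
    (h01 : t0 ≠ t1) (h02 : t0 ≠ t2) (h03 : t0 ≠ t3) (h04 : t0 ≠ t4) (h05 : t0 ≠ t5)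
    (h12 : t1 ≠ t2) (h13 : t1 ≠ t3) (h14 : t1 ≠ t4) (h15 : t1 ≠ t5)
    (h23 : t2 ≠ t3) (h24 : t2 ≠ t4) (h25 : t2 ≠ t5)
    (h34 : t3 ≠ t4) (h35 : t3 ≠ t5) (h45 : t4 ≠ t5)
    (e01 : G.Adj t0 t1) (e12 : G.Adj t1 t2) (e02 : G.Adj t0 t2)
    (e23 : G.Adj t2 t3) (e34 : G.Adj t3 t4) (e45 : G.Adj t4 t5)
    (n03 : ¬ G.Adj t0 t3) (n04 : ¬ G.Adj t0 t4) (n05 : ¬ G.Adj t0 t5)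
    (n13 : ¬ G.Adj t1 t3) (n14 : ¬ G.Adj t1 t4) (n15 : ¬ G.Adj t1 t5)
    (n24 : ¬ G.Adj t2 t4) (n25 : ¬ G.Adj t2 t5) (n35 : ¬ G.Adj t3 t5) :
    ∃ f : Fin 6 → V, Function.Injective f ∧
      ∀ i j, G.Adj (f i) (f j) ↔ tadpole33.Adj i j := by
  have e10 := e01.symm; have e21 := e12.symm; have e20 := e02.symm
  have e32 := e23.symm; have e43 := e34.symm; have e54 := e45.symm
  have n30 : ¬ G.Adj t3 t0 := fun h => n03 h.symm
  have n40 : ¬ G.Adj t4 t0 := fun h => n04 h.symm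
  have n50 : ¬ G.Adj t5 t0 := fun h => n05 h.symm
  have n31 : ¬ G.Adj t3 t1 := fun h => n13 h.symm
  have n41 : ¬ G.Adj t4 t1 := fun h => n14 h.symm
  have n51 : ¬ G.Adj t5 t1 := fun h => n15 h.symm
  have n42 : ¬ G.Adj t4 t2 := fun h => n24 h.symm
  have n52 : ¬ G.Adj t5 t2 := fun h => n25 h.symm
  have n53 : ¬ G.Adj t5 t3 := fun h => n35 h.symm
  refine ⟨![t0, t1, t2, t3, t4, t5], ?_, ?_⟩
  · intro i j h
    fin_cases i <;> fin_cases j <;>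
      simp_all [Matrix.cons_val_four, cons_val_five]
  · intro i j
    fin_cases i <;> fin_cases j <;>
      simp_all [Matrix.cons_val_four, cons_val_five, tadpole33_adj_iff, tadAdj,
        G.irrefl] <;> decide

lemma hasP6_of {v1 v2 v3 v4 v5 v6 : V}
    (h12 : v1 ≠ v2) (h13 : v1 ≠ v3) (h14 : v1 ≠ v4) (h15 : v1 ≠ v5) (h16 : v1 ≠ v6)
    (h23 : v2 ≠ v3) (h24 : v2 ≠ v4) (h25 : v2 ≠ v5) (h26 : v2 ≠ v6)
    (h34 : v3 ≠ v4) (h35 : v3 ≠ v5) (h36 : v3 ≠ v6)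
    (h45 : v4 ≠ v5) (h46 : v4 ≠ v6) (h56 : v5 ≠ v6)
    (e12 : G.Adj v1 v2) (e23 : G.Adj v2 v3) (e34 : G.Adj v3 v4)
    (e45 : G.Adj v4 v5) (e56 : G.Adj v5 v6)
    (n13 : ¬ G.Adj v1 v3) (n14 : ¬ G.Adj v1 v4) (n15 : ¬ G.Adj v1 v5)
    (n16 : ¬ G.Adj v1 v6) (n24 : ¬ G.Adj v2 v4) (n25 : ¬ G.Adj v2 v5)
    (n26 : ¬ G.Adj v2 v6) (n35 : ¬ G.Adj v3 v5) (n36 : ¬ G.Adj v3 v6)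
    (n46 : ¬ G.Adj v4 v6) :
    ∃ f : Fin 6 → V, Function.Injective f ∧
      ∀ i j, G.Adj (f i) (f j) ↔ (pathGraph 6).Adj i j := by
  have e21 := e12.symm; have e32 := e23.symm; have e43 := e34.symm
  have e54 := e45.symm; have e65 := e56.symm
  have n31 : ¬ G.Adj v3 v1 := fun h => n13 h.symm
  have n41 : ¬ G.Adj v4 v1 := fun h => n14 h.symm
  have n51 : ¬ G.Adj v5 v1 := fun h => n15 h.symm
  have n61 : ¬ G.Adj v6 v1 := fun h => n16 h.symm
  have n42 : ¬ G.Adj v4 v2 := fun h => n24 h.symm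
  have n52 : ¬ G.Adj v5 v2 := fun h => n25 h.symm
  have n62 : ¬ G.Adj v6 v2 := fun h => n26 h.symm
  have n53 : ¬ G.Adj v5 v3 := fun h => n35 h.symm
  have n63 : ¬ G.Adj v6 v3 := fun h => n36 h.symm
  have n64 : ¬ G.Adj v6 v4 := fun h => n46 h.symm
  refine ⟨![v1, v2, v3, v4, v5, v6], ?_, ?_⟩
  · intro i j h
    fin_cases i <;> fin_cases j <;>
      simp_all [Matrix.cons_val_four, cons_val_five, pathGraph_adj]
  · intro i j
    fin_cases i <;> fin_cases j <;>
      simp_all [Matrix.cons_val_four, cons_val_five, pathGraph_adj, G.irrefl] <;> decide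


lemma hasC4_of {a b c d : V} (hab : a ≠ b) (hac : a ≠ c) (had : a ≠ d)
    (hbc : b ≠ c) (hbd : b ≠ d) (hcd : c ≠ d)
    (eab : G.Adj a b) (ebc : G.Adj b c) (ecd : G.Adj c d) (eda : G.Adj d a)
    (nac : ¬ G.Adj a c) (nbd : ¬ G.Adj b d) :
    ∃ f : Fin 4 → V, Function.Injective f ∧
      ∀ i j, G.Adj (f i) (f j) ↔ (cycleGraph 4).Adj i j := by
  refine ⟨![a, b, c, d], ?_, ?_⟩
  · intro i j h
    fin_cases i <;> fin_cases j <;> simp_all <;> tauto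
  · have eba := eab.symm; have ecb := ebc.symm; have edc := ecd.symm
    have ead := eda.symm
    have nca : ¬ G.Adj c a := fun h => nac h.symm
    have ndb : ¬ G.Adj d b := fun h => nbd h.symm
    intro i j
    fin_cases i <;> fin_cases j <;>
      simp_all [cycleGraph_adj, G.irrefl] <;> decide

end MTDAux

namespace MTDAux

lemma hasIso_iff {V : Type} {n : ℕ} (G : SimpleGraph V) (H : SimpleGraph (Fin n)) :
    HasInducedSubgraphIso G H ↔
      ∃ f : Fin n → V, Function.Injective f ∧
        ∀ i j, G.Adj (f i) (f j) ↔ H.Adj i j := by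
  constructor
  · rintro ⟨S, ⟨e⟩⟩
    refine ⟨fun i => (e i).1, ?_, ?_⟩
    · intro i j h
      exact e.toEquiv.injective (Subtype.ext h)
    · intro i j
      rw [← e.map_rel_iff]
      exact Iff.rfl
  · rintro ⟨f, hf, hAdj⟩
    refine ⟨Set.range f, ⟨⟨(Equiv.ofInjective f hf), ?_⟩⟩⟩
    intro i j
    simp only [Equiv.ofInjective_apply, comap_adj, Function.Embedding.coe_subtype]
    exact hAdj i j

variable {V : Type} {G : SimpleGraph V}

/-- The structural data of a depth-3 elimination forest with root `r`,
centers `M` and center assignment `md` for the leaves. -/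
structure PreSpec (G : SimpleGraph V) (r : V) (M : Set V) (md : V → V) : Prop where
  hrM : r ∉ M
  hmem : ∀ v, v ≠ r → v ∉ M → md v ∈ M
  hadj : ∀ v, v ≠ r → v ∉ M → G.Adj (md v) v
  hedge : ∀ u v, G.Adj u v → u = r ∨ v = r ∨
    (u ∈ M ∧ v ∉ M ∧ v ≠ r ∧ u = md v) ∨ (v ∈ M ∧ u ∉ M ∧ u ≠ r ∧ v = md u)

namespace PreSpec

variable {r : V} {M : Set V} {md : V → V}

lemma noMM (h : PreSpec G r M md) {u v : V} (hu : u ∈ M) (hv : v ∈ M) :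
    ¬ G.Adj u v := by
  intro ha
  rcases h.hedge u v ha with rfl | rfl | ⟨_, hv', _⟩ | ⟨_, hu', _⟩
  · exact h.hrM hu
  · exact h.hrM hv
  · exact hv' hv
  · exact hu' hu

lemma leaf_nbr (h : PreSpec G r M md) {u v : V} (hvr : v ≠ r) (hvM : v ∉ M)
    (hur : u ≠ r) (ha : G.Adj u v) : u = md v := by
  rcases h.hedge u v ha with rfl | rfl | ⟨_, _, _, hu⟩ | ⟨hv, _, _, _⟩
  · exact absurd rfl hur
  · exact absurd rfl hvr
  · exact hu
  · exact absurd hv hvM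

lemma noLeafLeaf (h : PreSpec G r M md) {u v : V} (hur : u ≠ r) (huM : u ∉ M)
    (hvr : v ≠ r) (hvM : v ∉ M) : ¬ G.Adj u v := fun ha =>
  huM (h.leaf_nbr hvr hvM hur ha ▸ h.hmem v hvr hvM)

lemma center (h : PreSpec G r M md) {x y z : V} (hxz : x ≠ z) (hxr : x ≠ r)
    (hzr : z ≠ r) (hyr : y ≠ r) (a1 : G.Adj x y) (a2 : G.Adj y z) : y ∈ M := by
  by_contra hyM
  have hx := h.leaf_nbr hyr hyM hxr a1
  have hz := h.leaf_nbr hyr hyM hzr a2.symm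
  exact hxz (hx.trans hz.symm)

/-- An edge with both ends different from the root has one end a center and
the other a leaf below it. -/
lemma edge_cases (h : PreSpec G r M md) {u v : V} (hur : u ≠ r) (hvr : v ≠ r)
    (ha : G.Adj u v) :
    (u ∈ M ∧ v ∉ M ∧ u = md v) ∨ (v ∈ M ∧ u ∉ M ∧ v = md u) := by
  rcases h.hedge u v ha with rfl | rfl | ⟨h1, h2, _, h3⟩ | ⟨h1, h2, _, h3⟩
  · exact absurd rfl hur
  · exact absurd rfl hvr
  · exact Or.inl ⟨h1, h2, h3⟩
  · exact Or.inr ⟨h1, h2, h3⟩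

end PreSpec

section Forward

variable {r : V} {M : Set V} {md : V → V}

/-- Core: if `b-c-d` is a path avoiding the root `r` with `b ≠ d`, then `c`
is a center, hence adjacent to the root. -/
lemma root_adj_center (h : PreSpec G r M md) (hC : ∀ m ∈ M, G.Adj r m)
    {b c d : V} (hbr : b ≠ r) (hdr : d ≠ r) (hcr : c ≠ r) (hbd : b ≠ d)
    (ebc : G.Adj b c) (ecd : G.Adj c d) : G.Adj r c :=
  hC c (h.center hbd hbr hdr hcr ebc ecd)

lemma noC4_core (h : PreSpec G r M md) (hC : ∀ m ∈ M, G.Adj r m)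
    {a b c d : V} (hac : a ≠ c) (hbd : b ≠ d)
    (eab : G.Adj a b) (ebc : G.Adj b c) (ecd : G.Adj c d) (eda : G.Adj d a)
    (nac : ¬ G.Adj a c) (nbd : ¬ G.Adj b d) : False := by
  have hab := eab.ne
  have hbc := ebc.ne
  have hcd := ecd.ne
  have hda := eda.ne
  by_cases har : a = r
  · subst har
    refine nac (root_adj_center h hC ?_ ?_ ?_ hbd ebc ecd) <;> tauto
  by_cases hbr : b = r
  · subst hbr
    refine nbd (root_adj_center h hC ?_ ?_ ?_ ?_ ecd eda) <;> tauto
  by_cases hcr : c = r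
  · subst hcr
    refine nac ((root_adj_center h hC ?_ ?_ ?_ ?_ eda eab).symm) <;> tauto
  by_cases hdr : d = r
  · subst hdr
    refine nbd (root_adj_center h hC ?_ ?_ ?_ hac eab ebc).symm <;> tauto
  rcases h.edge_cases har hbr eab with ⟨haM, hbM, hmd⟩ | ⟨hbM, haM, hmd⟩
  · have := h.leaf_nbr hbr hbM hcr ebc.symm
    exact hac (hmd.trans this.symm)
  · have := h.leaf_nbr har haM hdr eda
    exact hbd (hmd.trans this.symm)

lemma noP6_core (h : PreSpec G r M md) (hC : ∀ m ∈ M, G.Adj r m)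
    {v1 v2 v3 v4 v5 v6 : V}
    (h13 : v1 ≠ v3) (h14 : v1 ≠ v4) (h15 : v1 ≠ v5) (h16 : v1 ≠ v6)
    (h24 : v2 ≠ v4) (h25 : v2 ≠ v5) (h26 : v2 ≠ v6)
    (h35 : v3 ≠ v5) (h36 : v3 ≠ v6) (h46 : v4 ≠ v6)
    (e12 : G.Adj v1 v2) (e23 : G.Adj v2 v3) (e34 : G.Adj v3 v4)
    (e45 : G.Adj v4 v5) (e56 : G.Adj v5 v6)
    (n24' : ¬ G.Adj v2 v4) (n35' : ¬ G.Adj v3 v5) : False := by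
  have h23 := e23.ne
  have h34 := e34.ne
  have h45 := e45.ne
  have h56 := e56.ne
  have h12 := e12.ne
  by_cases h3r : v3 = r
  · subst h3r
    refine n35' (root_adj_center h hC ?_ ?_ ?_ h46 e45 e56) <;> tauto
  by_cases h4r : v4 = r
  · subst h4r
    refine n24' ((root_adj_center h hC ?_ ?_ ?_ h13 e12 e23)).symm <;> tauto
  by_cases h2r : v2 = r
  · subst h2r
    have hm4 : v4 ∈ M := h.center h35 h3r ?_ h4r e34 e45
    · have hm5 : v5 ∈ M := h.center h46 h4r ?_ ?_ e45 e56
      · exact h.noMM hm4 hm5 e45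
      · tauto
      · tauto
    · tauto
  by_cases h5r : v5 = r
  · subst h5r
    have hm2 : v2 ∈ M := h.center h13 ?_ h3r h2r e12 e23
    · have hm3 : v3 ∈ M := h.center h24 h2r h4r h3r e23 e34
      exact h.noMM hm2 hm3 e23
    · tauto
  · have hm3 : v3 ∈ M := h.center h24 h2r h4r h3r e23 e34
    have hm4 : v4 ∈ M := h.center h35 h3r h5r h4r e34 e45
    exact h.noMM hm3 hm4 e34

lemma noT33_core (h : PreSpec G r M md) (hC : ∀ m ∈ M, G.Adj r m)
    {t0 t1 t2 t3 t4 t5 : V}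
    (h02 : t0 ≠ t2) (h03 : t0 ≠ t3) (h04 : t0 ≠ t4) (h05 : t0 ≠ t5)
    (h12 : t1 ≠ t2) (h13 : t1 ≠ t3) (h14 : t1 ≠ t4) (h15 : t1 ≠ t5)
    (h24 : t2 ≠ t4) (h25 : t2 ≠ t5) (h35 : t3 ≠ t5)
    (e01 : G.Adj t0 t1) (e12 : G.Adj t1 t2) (e02 : G.Adj t0 t2)
    (e23 : G.Adj t2 t3) (e34 : G.Adj t3 t4) (e45 : G.Adj t4 t5)
    (n24' : ¬ G.Adj t2 t4) : False := by
  have h01 := e01.ne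
  have h23 := e23.ne
  have h34 := e34.ne
  have h45 := e45.ne
  by_cases h2r : t2 = r
  · subst h2r
    refine n24' (root_adj_center h hC ?_ ?_ ?_ h35 e34 e45) <;> tauto
  by_cases h0r : t0 = r
  · subst h0r
    have hm2 : t2 ∈ M := h.center h13 ?_ ?_ h2r e12 e23
    · have hm3 : t3 ∈ M := h.center h24 h2r ?_ ?_ e23 e34
      · exact h.noMM hm2 hm3 e23
      · tauto
      · tauto
    · tauto
    · tauto
  by_cases h1r : t1 = r
  · subst h1r
    have hm2 : t2 ∈ M := h.center h03 ?_ ?_ h2r e02 e23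
    · have hm3 : t3 ∈ M := h.center h24 h2r ?_ ?_ e23 e34
      · exact h.noMM hm2 hm3 e23
      · tauto
      · tauto
    · tauto
    · tauto
  · rcases h.edge_cases h0r h1r e01 with ⟨h0M, h1M, hmd⟩ | ⟨h1M, h0M, hmd⟩
    · have := h.leaf_nbr h1r h1M h2r e12.symm
      exact h02 (hmd.trans this.symm)
    · have := h.leaf_nbr h0r h0M h2r e02.symm
      exact h12 (hmd.trans this.symm)

end Forward

end MTDAux

namespace MTDAux

open scoped Classical

variable {V : Type} {G : SimpleGraph V} {r : V} {M : Set V} {md : V → V}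

lemma PreSpec.noCenterOther (h : PreSpec G r M md) {m' y : V} (hm' : m' ∈ M)
    (hyr : y ≠ r) (hyM : y ∉ M) (hne : md y ≠ m') : ¬ G.Adj m' y :=
  fun e => hne (h.leaf_nbr hyr hyM (fun er => h.hrM (er ▸ hm')) e).symm

lemma PreSpec.exists_adj_root (h : PreSpec G r M md) (hconn : G.Connected)
    {m : V} (hm : m ∈ M) :
    ∃ x, (x = m ∨ (x ≠ r ∧ x ∉ M ∧ md x = m)) ∧ G.Adj r x := by
  classical
  set K : Set V := {x | x = m ∨ (x ≠ r ∧ x ∉ M ∧ md x = m)} with hK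
  have hrK : r ∉ K := by
    rintro (rfl | ⟨hr, _, _⟩)
    · exact h.hrM hm
    · exact hr rfl
  obtain ⟨w⟩ := hconn m r
  obtain ⟨d, _, hfst, hsnd⟩ := w.exists_boundary_dart K (Or.inl rfl) hrK
  have hadj : G.Adj d.fst d.snd := d.adj
  rcases h.hedge _ _ hadj with h1 | h1 | ⟨hu, hv, hvr, hmd⟩ | ⟨hv, hu, hur, hmd⟩
  · rw [h1] at hfst; exact absurd hfst hrK
  · exact ⟨d.fst, hfst, by rw [← h1]; exact hadj.symm⟩
  · rcases hfst with h2 | ⟨_, h2, _⟩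
    · exact absurd (Or.inr ⟨hvr, hv, by rw [← hmd, h2]⟩) hsnd
    · exact absurd hu h2
  · rcases hfst with h2 | ⟨_, _, h2⟩
    · rw [h2] at hu; exact absurd hm hu
    · exact absurd (Or.inl (by rw [← hmd] at h2; exact h2.symm ▸ rfl)) hsnd

lemma repair (h : PreSpec G r M md) (hconn : G.Connected)
    (nC4 : ¬ HasInducedSubgraphIso G (cycleGraph 4))
    (nP6 : ¬ HasInducedSubgraphIso G (pathGraph 6))
    (nT33 : ¬ HasInducedSubgraphIso G tadpole33) :
    ∃ (r' : V) (M' : Set V) (md' : V → V),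
      PreSpec G r' M' md' ∧ (∀ m ∈ M', G.Adj r' m) := by
  by_cases hB : ∃ m ∈ M, ¬G.Adj r m ∧ ∃ y z,
      (y ≠ r ∧ y ∉ M ∧ md y = m) ∧ (z ≠ r ∧ z ∉ M ∧ md z = m) ∧ y ≠ z
  · -- Case B : some center not adjacent to the root has two leaves
    obtain ⟨m, hmM, hrm, y0, z0, ⟨hy0r, hy0M, hy0md⟩, ⟨hz0r, hz0M, hz0md⟩, hyz⟩ := hB
    have hmr : m ≠ r := fun e => h.hrM (e ▸ hmM)
    obtain ⟨a, ha, hra⟩ := h.exists_adj_root hconn hmM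
    obtain ⟨har, haM, hamd⟩ : a ≠ r ∧ a ∉ M ∧ md a = m := by
      rcases ha with rfl | q
      · exact absurd hra hrm
      · exact q
    have e_am : G.Adj a m := by
      have := h.hadj a har haM; rw [hamd] at this; exact this.symm
    have step1 : ∀ b, b ≠ r → b ∉ M → md b = m → b ≠ a → ¬ G.Adj r b := by
      intro b hbr hbM hbmd hba hrb
      have e_mb : G.Adj m b := by
        have := h.hadj b hbr hbM; rw [hbmd] at this; exact this
      refine absurd ((hasIso_iff G _).mpr
        (hasC4_of (a := r) (b := a) (c := m) (d := b)
          (Ne.symm har) (Ne.symm hmr) (Ne.symm hbr)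
          (fun e => haM (e ▸ hmM)) (Ne.symm hba) (fun e => hbM (e ▸ hmM))
          hra e_am e_mb hrb.symm hrm
          (h.noLeafLeaf har haM hbr hbM))) nC4
    obtain ⟨b0, hb0r, hb0M, hb0md, hb0a⟩ : ∃ b0, b0 ≠ r ∧ b0 ∉ M ∧ md b0 = m ∧ b0 ≠ a := by
      by_cases hy : y0 = a
      · exact ⟨z0, hz0r, hz0M, hz0md, fun e => hyz (hy.trans e.symm)⟩
      · exact ⟨y0, hy0r, hy0M, hy0md, hy⟩
    have nrb0 : ¬ G.Adj r b0 := step1 b0 hb0r hb0M hb0md hb0a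
    have e_mb0 : G.Adj m b0 := by
      have := h.hadj b0 hb0r hb0M; rw [hb0md] at this; exact this
    have step2a : ∀ m', m' ∈ M → m' ≠ m → G.Adj r m' := by
      intro m' hm'M hm'm
      by_contra hrm'
      obtain ⟨y', hy', hry'⟩ := h.exists_adj_root hconn hm'M
      obtain ⟨hy'r, hy'M, hy'md⟩ : y' ≠ r ∧ y' ∉ M ∧ md y' = m' := by
        rcases hy' with rfl | q
        · exact absurd hry' hrm'
        · exact q
      have e_y'm' : G.Adj y' m' := by
        have := h.hadj y' hy'r hy'M; rw [hy'md] at this; exact this.symm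
      have dq0 : b0 ≠ m := fun e => hb0M (e ▸ hmM)
      have dq0s := dq0.symm
      have dq1 : b0 ≠ a := hb0a
      have dq1s := dq1.symm
      have dq2 : b0 ≠ r := hb0r
      have dq2s := dq2.symm
      have dq3 : b0 ≠ y' := fun e => hm'm (by rw [← hy'md, ← e]; exact hb0md)
      have dq3s := dq3.symm
      have dq4 : b0 ≠ m' := fun e => hb0M (e ▸ hm'M)
      have dq4s := dq4.symm
      have dq5 : m ≠ a := fun e => haM (e ▸ hmM)
      have dq5s := dq5.symm
      have dq6 : m ≠ r := hmr
      have dq6s := dq6.symm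
      have dq7 : m ≠ y' := fun e => hy'M (e ▸ hmM)
      have dq7s := dq7.symm
      have dq8 : m ≠ m' := fun e => hm'm e.symm
      have dq8s := dq8.symm
      have dq9 : a ≠ r := har
      have dq9s := dq9.symm
      have dq10 : a ≠ y' := fun e => hm'm (by rw [← hy'md, ← e]; exact hamd)
      have dq10s := dq10.symm
      have dq11 : a ≠ m' := fun e => haM (e ▸ hm'M)
      have dq11s := dq11.symm
      have dq12 : r ≠ y' := hy'r.symm
      have dq12s := dq12.symm
      have dq13 : r ≠ m' := fun e => h.hrM (e ▸ hm'M)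
      have dq13s := dq13.symm
      have dq14 : y' ≠ m' := fun e => hy'M (e ▸ hm'M)
      have dq14s := dq14.symm
      have eq15 : G.Adj b0 m := e_mb0.symm
      have eq15s := eq15.symm
      have eq16 : G.Adj m a := e_am.symm
      have eq16s := eq16.symm
      have eq17 : G.Adj a r := hra.symm
      have eq17s := eq17.symm
      have eq18 : G.Adj r y' := hry'
      have eq18s := eq18.symm
      have eq19 : G.Adj y' m' := e_y'm'
      have eq19s := eq19.symm
      have nq20 : ¬ G.Adj b0 a := h.noLeafLeaf hb0r hb0M har haM
      have nq20s : ¬ G.Adj a b0 := fun e => nq20 e.symm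
      have nq21 : ¬ G.Adj b0 r := fun e => nrb0 e.symm
      have nq21s : ¬ G.Adj r b0 := fun e => nq21 e.symm
      have nq22 : ¬ G.Adj b0 y' := h.noLeafLeaf hb0r hb0M hy'r hy'M
      have nq22s : ¬ G.Adj y' b0 := fun e => nq22 e.symm
      have nq23 : ¬ G.Adj b0 m' := fun e => h.noCenterOther hm'M hb0r hb0M (by rw [hb0md]; exact hm'm.symm) e.symm
      have nq23s : ¬ G.Adj m' b0 := fun e => nq23 e.symm
      have nq24 : ¬ G.Adj m r := fun e => hrm e.symm
      have nq24s : ¬ G.Adj r m := fun e => nq24 e.symm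
      have nq25 : ¬ G.Adj m y' := h.noCenterOther hmM hy'r hy'M (by rw [hy'md]; exact hm'm)
      have nq25s : ¬ G.Adj y' m := fun e => nq25 e.symm
      have nq26 : ¬ G.Adj m m' := h.noMM hmM hm'M
      have nq26s : ¬ G.Adj m' m := fun e => nq26 e.symm
      have nq27 : ¬ G.Adj a y' := h.noLeafLeaf har haM hy'r hy'M
      have nq27s : ¬ G.Adj y' a := fun e => nq27 e.symm
      have nq28 : ¬ G.Adj a m' := fun e => h.noCenterOther hm'M har haM (by rw [hamd]; exact hm'm.symm) e.symm
      have nq28s : ¬ G.Adj m' a := fun e => nq28 e.symm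
      have nq29 : ¬ G.Adj r m' := hrm'
      have nq29s : ¬ G.Adj m' r := fun e => nq29 e.symm
      refine absurd ((hasIso_iff G _).mpr (hasP6_of (v1 := b0) (v2 := m) (v3 := a) (v4 := r) (v5 := y') (v6 := m') ?_ ?_ ?_ ?_ ?_ ?_ ?_ ?_ ?_ ?_ ?_ ?_ ?_ ?_ ?_ ?_ ?_ ?_ ?_ ?_ ?_ ?_ ?_ ?_ ?_ ?_ ?_ ?_ ?_ ?_)) nP6
      all_goals assumption
    have step2b : ∀ y, y ≠ r → y ∉ M → md y = m := by
      intro y hyr hyM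
      by_contra hne
      have hm2M : md y ∈ M := h.hmem y hyr hyM
      have hrm2 : G.Adj r (md y) := step2a (md y) hm2M hne
      have e_ym2 : G.Adj y (md y) := (h.hadj y hyr hyM).symm
      by_cases hry : G.Adj r y
      ·
        have dq0 : y ≠ (md y) := fun e => hyM (e ▸ hm2M)
        have dq0s := dq0.symm
        have dq1 : y ≠ r := hyr
        have dq1s := dq1.symm
        have dq2 : y ≠ a := fun e => hne (by rw [e]; exact hamd)
        have dq2s := dq2.symm
        have dq3 : y ≠ m := fun e => hyM (e ▸ hmM)
        have dq3s := dq3.symm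
        have dq4 : y ≠ b0 := fun e => hne (by rw [e]; exact hb0md)
        have dq4s := dq4.symm
        have dq5 : (md y) ≠ r := fun e => h.hrM (e ▸ hm2M)
        have dq5s := dq5.symm
        have dq6 : (md y) ≠ a := fun e => haM (e ▸ hm2M)
        have dq6s := dq6.symm
        have dq7 : (md y) ≠ m := hne
        have dq7s := dq7.symm
        have dq8 : (md y) ≠ b0 := fun e => hb0M (e ▸ hm2M)
        have dq8s := dq8.symm
        have dq9 : r ≠ a := har.symm
        have dq9s := dq9.symm
        have dq10 : r ≠ m := hmr.symm
        have dq10s := dq10.symm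
        have dq11 : r ≠ b0 := hb0r.symm
        have dq11s := dq11.symm
        have dq12 : a ≠ m := fun e => haM (e.symm ▸ hmM)
        have dq12s := dq12.symm
        have dq13 : a ≠ b0 := hb0a.symm
        have dq13s := dq13.symm
        have dq14 : m ≠ b0 := fun e => hb0M (e ▸ hmM)
        have dq14s := dq14.symm
        have eq15 : G.Adj y (md y) := e_ym2
        have eq15s := eq15.symm
        have eq16 : G.Adj (md y) r := hrm2.symm
        have eq16s := eq16.symm
        have eq17 : G.Adj y r := hry.symm
        have eq17s := eq17.symm
        have eq18 : G.Adj r a := hra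
        have eq18s := eq18.symm
        have eq19 : G.Adj a m := e_am
        have eq19s := eq19.symm
        have eq20 : G.Adj m b0 := e_mb0
        have eq20s := eq20.symm
        have nq21 : ¬ G.Adj y a := h.noLeafLeaf hyr hyM har haM
        have nq21s : ¬ G.Adj a y := fun e => nq21 e.symm
        have nq22 : ¬ G.Adj y m := fun e => h.noCenterOther hmM hyr hyM hne e.symm
        have nq22s : ¬ G.Adj m y := fun e => nq22 e.symm
        have nq23 : ¬ G.Adj y b0 := h.noLeafLeaf hyr hyM hb0r hb0M
        have nq23s : ¬ G.Adj b0 y := fun e => nq23 e.symm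
        have nq24 : ¬ G.Adj (md y) a := h.noCenterOther hm2M har haM (by rw [hamd]; exact fun q => hne q.symm)
        have nq24s : ¬ G.Adj a (md y) := fun e => nq24 e.symm
        have nq25 : ¬ G.Adj (md y) m := h.noMM hm2M hmM
        have nq25s : ¬ G.Adj m (md y) := fun e => nq25 e.symm
        have nq26 : ¬ G.Adj (md y) b0 := h.noCenterOther hm2M hb0r hb0M (by rw [hb0md]; exact fun q => hne q.symm)
        have nq26s : ¬ G.Adj b0 (md y) := fun e => nq26 e.symm
        have nq27 : ¬ G.Adj r m := hrm
        have nq27s : ¬ G.Adj m r := fun e => nq27 e.symm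
        have nq28 : ¬ G.Adj r b0 := nrb0
        have nq28s : ¬ G.Adj b0 r := fun e => nq28 e.symm
        have nq29 : ¬ G.Adj a b0 := h.noLeafLeaf har haM hb0r hb0M
        have nq29s : ¬ G.Adj b0 a := fun e => nq29 e.symm
        refine absurd ((hasIso_iff G _).mpr (hasT33_of (t0 := y) (t1 := md y) (t2 := r) (t3 := a) (t4 := m) (t5 := b0) ?_ ?_ ?_ ?_ ?_ ?_ ?_ ?_ ?_ ?_ ?_ ?_ ?_ ?_ ?_ ?_ ?_ ?_ ?_ ?_ ?_ ?_ ?_ ?_ ?_ ?_ ?_ ?_ ?_ ?_)) nT33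
        all_goals assumption
      ·
        have dq0 : b0 ≠ m := fun e => hb0M (e ▸ hmM)
        have dq0s := dq0.symm
        have dq1 : b0 ≠ a := hb0a
        have dq1s := dq1.symm
        have dq2 : b0 ≠ r := hb0r
        have dq2s := dq2.symm
        have dq3 : b0 ≠ (md y) := fun e => hb0M (e ▸ hm2M)
        have dq3s := dq3.symm
        have dq4 : b0 ≠ y := fun e => hne (by rw [← e]; exact hb0md)
        have dq4s := dq4.symm
        have dq5 : m ≠ a := fun e => haM (e.symm ▸ hmM)
        have dq5s := dq5.symm
        have dq6 : m ≠ r := hmr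
        have dq6s := dq6.symm
        have dq7 : m ≠ (md y) := fun q => hne q.symm
        have dq7s := dq7.symm
        have dq8 : m ≠ y := fun e => hyM (e ▸ hmM)
        have dq8s := dq8.symm
        have dq9 : a ≠ r := har
        have dq9s := dq9.symm
        have dq10 : a ≠ (md y) := fun e => haM (e ▸ hm2M)
        have dq10s := dq10.symm
        have dq11 : a ≠ y := fun e => hne (by rw [← e]; exact hamd)
        have dq11s := dq11.symm
        have dq12 : r ≠ (md y) := fun e => h.hrM (e ▸ hm2M)
        have dq12s := dq12.symm
        have dq13 : r ≠ y := hyr.symm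
        have dq13s := dq13.symm
        have dq14 : (md y) ≠ y := fun e => hyM (e ▸ hm2M)
        have dq14s := dq14.symm
        have eq15 : G.Adj b0 m := e_mb0.symm
        have eq15s := eq15.symm
        have eq16 : G.Adj m a := e_am.symm
        have eq16s := eq16.symm
        have eq17 : G.Adj a r := hra.symm
        have eq17s := eq17.symm
        have eq18 : G.Adj r (md y) := hrm2
        have eq18s := eq18.symm
        have eq19 : G.Adj (md y) y := e_ym2.symm
        have eq19s := eq19.symm
        have nq20 : ¬ G.Adj b0 a := h.noLeafLeaf hb0r hb0M har haM
        have nq20s : ¬ G.Adj a b0 := fun e => nq20 e.symm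
        have nq21 : ¬ G.Adj b0 r := fun e => nrb0 e.symm
        have nq21s : ¬ G.Adj r b0 := fun e => nq21 e.symm
        have nq22 : ¬ G.Adj b0 (md y) := fun e => h.noCenterOther hm2M hb0r hb0M (by rw [hb0md]; exact fun q => hne q.symm) e.symm
        have nq22s : ¬ G.Adj (md y) b0 := fun e => nq22 e.symm
        have nq23 : ¬ G.Adj b0 y := h.noLeafLeaf hb0r hb0M hyr hyM
        have nq23s : ¬ G.Adj y b0 := fun e => nq23 e.symm
        have nq24 : ¬ G.Adj m r := fun e => hrm e.symm
        have nq24s : ¬ G.Adj r m := fun e => nq24 e.symm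
        have nq25 : ¬ G.Adj m (md y) := h.noMM hmM hm2M
        have nq25s : ¬ G.Adj (md y) m := fun e => nq25 e.symm
        have nq26 : ¬ G.Adj m y := h.noCenterOther hmM hyr hyM hne
        have nq26s : ¬ G.Adj y m := fun e => nq26 e.symm
        have nq27 : ¬ G.Adj a (md y) := fun e => h.noCenterOther hm2M har haM (by rw [hamd]; exact fun q => hne q.symm) e.symm
        have nq27s : ¬ G.Adj (md y) a := fun e => nq27 e.symm
        have nq28 : ¬ G.Adj a y := h.noLeafLeaf har haM hyr hyM
        have nq28s : ¬ G.Adj y a := fun e => nq28 e.symm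
        have nq29 : ¬ G.Adj r y := hry
        have nq29s : ¬ G.Adj y r := fun e => nq29 e.symm
        refine absurd ((hasIso_iff G _).mpr (hasP6_of (v1 := b0) (v2 := m) (v3 := a) (v4 := r) (v5 := md y) (v6 := y) ?_ ?_ ?_ ?_ ?_ ?_ ?_ ?_ ?_ ?_ ?_ ?_ ?_ ?_ ?_ ?_ ?_ ?_ ?_ ?_ ?_ ?_ ?_ ?_ ?_ ?_ ?_ ?_ ?_ ?_)) nP6
        all_goals assumption
    -- new tree rooted at a, centers r and m
    refine ⟨a, {r, m}, fun x => if x ∈ M then r else m, ⟨?_, ?_, ?_, ?_⟩, ?_⟩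
    · rintro (e | e)
      · exact har e
      · exact haM (e ▸ hmM)
    · intro v _ _
      by_cases hvM : v ∈ M
      · rw [if_pos hvM]; exact Or.inl rfl
      · rw [if_neg hvM]; exact Or.inr rfl
    · intro v hva hv'
      have hvr : v ≠ r := fun e => hv' (Or.inl e)
      have hvm : v ≠ m := fun e => hv' (Or.inr e)
      by_cases hvM : v ∈ M
      · rw [if_pos hvM]; exact step2a v hvM hvm
      · rw [if_neg hvM]
        have := h.hadj v hvr hvM
        rw [step2b v hvr hvM] at this
        exact this
    · intro u v huv
      rcases h.hedge u v huv with h1 | h1 | ⟨huM, hvM, hvr, hmd⟩ | ⟨hvM, huM, hur, hmd⟩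
      · -- u = r
        subst h1
        by_cases hva : v = a
        · exact Or.inr (Or.inl hva)
        by_cases hvM : v ∈ M
        · by_cases hvm : v = m
          · rw [hvm] at huv; exact absurd huv hrm
          · refine Or.inr (Or.inr (Or.inl ⟨Or.inl rfl, ?_, hva, ?_⟩))
            · rintro (e | e)
              · exact huv.ne' e
              · exact hvm e
            · rw [if_pos hvM]
        · exact absurd huv (step1 v huv.ne' hvM (step2b v huv.ne' hvM) hva)
      · -- v = r
        subst h1
        by_cases hua : u = a
        · exact Or.inl hua
        by_cases huM : u ∈ M
        · by_cases hum : u = m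
          · rw [hum] at huv; exact absurd huv.symm hrm
          · refine Or.inr (Or.inr (Or.inr ⟨Or.inl rfl, ?_, hua, ?_⟩))
            · rintro (e | e)
              · exact huv.ne e
              · exact hum e
            · rw [if_pos huM]
        · exact absurd huv.symm (step1 u huv.ne huM (step2b u huv.ne huM) hua)
      · -- u center of leaf v
        have hum : u = m := by rw [step2b v hvr hvM] at hmd; exact hmd
        by_cases hva : v = a
        · exact Or.inr (Or.inl hva)
        · refine Or.inr (Or.inr (Or.inl ⟨Or.inr hum, ?_, hva, ?_⟩))
          · rintro (e | e)
            · exact hvr e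
            · exact hvM (e ▸ hmM)
          · rw [if_neg hvM]; exact hum
      · -- v center of leaf u
        have hvm : v = m := by rw [step2b u hur huM] at hmd; exact hmd
        by_cases hua : u = a
        · exact Or.inl hua
        · refine Or.inr (Or.inr (Or.inr ⟨Or.inr hvm, ?_, hua, ?_⟩))
          · rintro (e | e)
            · exact hur e
            · exact huM (e ▸ hmM)
          · rw [if_neg huM]; exact hvm
    · rintro x (e | e)
      · rw [e]; exact hra.symm
      · rw [e]; exact e_am
  · -- Case A : every root-nonadjacent center has at most one leaf
    have uniq : ∀ m ∈ M, ¬G.Adj r m → ∀ y z,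
        (y ≠ r ∧ y ∉ M ∧ md y = m) → (z ≠ r ∧ z ∉ M ∧ md z = m) → y = z := by
      intro m hm hrm y z hy hz
      by_contra hne
      exact hB ⟨m, hm, hrm, y, z, hy, hz, hne⟩
    set c : V → V := fun m =>
      if hm : ∃ x, x ≠ r ∧ x ∉ M ∧ md x = m ∧ G.Adj r x then hm.choose else m with hcdef
    have hc : ∀ m ∈ M, ¬G.Adj r m →
        c m ≠ r ∧ c m ∉ M ∧ md (c m) = m ∧ G.Adj r (c m) := by
      intro m hm hrm
      obtain ⟨x, hx, hrx⟩ := h.exists_adj_root hconn hm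
      have hex : ∃ x, x ≠ r ∧ x ∉ M ∧ md x = m ∧ G.Adj r x := by
        rcases hx with rfl | q
        · exact absurd hrx hrm
        · exact ⟨x, q.1, q.2.1, q.2.2, hrx⟩
      rw [hcdef]
      simp only [dif_pos hex]
      exact hex.choose_spec
    have uniqc : ∀ m ∈ M, ¬G.Adj r m → ∀ y, y ≠ r → y ∉ M → md y = m → y = c m := by
      intro m hm hrm y h1 h2 h3
      obtain ⟨q1, q2, q3, _⟩ := hc m hm hrm
      exact uniq m hm hrm y (c m) ⟨h1, h2, h3⟩ ⟨q1, q2, q3⟩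
    refine ⟨r, {x | x ≠ r ∧ ((x ∈ M ∧ G.Adj r x) ∨ (x ∉ M ∧ ¬G.Adj r (md x)))},
      fun v => if v ∈ M then c v else md v, ⟨?_, ?_, ?_, ?_⟩, ?_⟩
    · intro hx; exact hx.1 rfl
    · intro v hvr hvM'
      simp only [Set.mem_setOf_eq] at hvM' ⊢
      by_cases hvM : v ∈ M
      · have hbad : ¬G.Adj r v := by
          intro hrv; exact hvM' ⟨hvr, Or.inl ⟨hvM, hrv⟩⟩
        obtain ⟨q1, q2, q3, q4⟩ := hc v hvM hbad
        rw [if_pos hvM]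
        exact ⟨q1, Or.inr ⟨q2, by rw [q3]; exact hbad⟩⟩
      · have hgood : G.Adj r (md v) := by
          by_contra hng
          exact hvM' ⟨hvr, Or.inr ⟨hvM, hng⟩⟩
        rw [if_neg hvM]
        exact ⟨fun e => h.hrM (e ▸ h.hmem v hvr hvM),
          Or.inl ⟨h.hmem v hvr hvM, hgood⟩⟩
    · intro v hvr hvM'
      simp only [Set.mem_setOf_eq] at hvM'
      by_cases hvM : v ∈ M
      · have hbad : ¬G.Adj r v := by
          intro hrv; exact hvM' ⟨hvr, Or.inl ⟨hvM, hrv⟩⟩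
        obtain ⟨q1, q2, q3, _⟩ := hc v hvM hbad
        rw [if_pos hvM]
        have := h.hadj (c v) q1 q2
        rw [q3] at this
        exact this.symm
      · rw [if_neg hvM]; exact h.hadj v hvr hvM
    · intro u v huv
      rcases h.hedge u v huv with h1 | h1 | ⟨huM, hvM, hvr, hmd⟩ | ⟨hvM, huM, hur, hmd⟩
      · exact Or.inl h1
      · exact Or.inr (Or.inl h1)
      · -- u center of leaf v
        have hur : u ≠ r := fun e => h.hrM (e ▸ huM)
        by_cases hru : G.Adj r u
        · refine Or.inr (Or.inr (Or.inl ⟨⟨hur, Or.inl ⟨huM, hru⟩⟩, ?_, hvr, ?_⟩))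
          · rintro ⟨_, hx | hx⟩
            · exact hvM hx.1
            · exact hx.2 (by rw [← hmd]; exact hru)
          · rw [if_neg hvM]; exact hmd
        · refine Or.inr (Or.inr (Or.inr ⟨⟨hvr, Or.inr ⟨hvM, by rw [← hmd]; exact hru⟩⟩,
            ?_, hur, ?_⟩))
          · rintro ⟨_, hx | hx⟩
            · exact hru hx.2
            · exact hx.1 huM
          · rw [if_pos huM]
            exact uniqc u huM hru v hvr hvM hmd.symm
      · -- v center of leaf u
        have hvr : v ≠ r := fun e => h.hrM (e ▸ hvM)
        by_cases hrv : G.Adj r v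
        · refine Or.inr (Or.inr (Or.inr ⟨⟨hvr, Or.inl ⟨hvM, hrv⟩⟩, ?_, hur, ?_⟩))
          · rintro ⟨_, hx | hx⟩
            · exact huM hx.1
            · exact hx.2 (by rw [← hmd]; exact hrv)
          · rw [if_neg huM]; exact hmd
        · refine Or.inr (Or.inr (Or.inl ⟨⟨hur, Or.inr ⟨huM, by rw [← hmd]; exact hrv⟩⟩,
            ?_, hvr, ?_⟩))
          · rintro ⟨_, hx | hx⟩
            · exact hrv hx.2
            · exact hx.1 hvM
          · rw [if_pos hvM]
            exact uniqc v hvM hrv u hur huM hmd.symm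
    · rintro x ⟨hxr, hx | hx⟩
      · exact hx.2
      · have hmdM : md x ∈ M := h.hmem x hxr hx.1
        have := uniqc (md x) hmdM hx.2 x hxr hx.1 rfl
        rw [this]
        exact (hc (md x) hmdM hx.2).2.2.2

end MTDAux


namespace MTDAux

variable {V : Type} {G : SimpleGraph V}

lemma star_connected (s : Set V) (c : V) (hc : c ∈ s)
    (hadj : ∀ x ∈ s, x ≠ c → G.Adj c x) : (G.induce s).Connected := by
  haveI : Nonempty s := ⟨⟨c, hc⟩⟩
  refine ⟨?_⟩
  have key : ∀ x : s, (G.induce s).Reachable x ⟨c, hc⟩ := by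
    rintro ⟨x, hx⟩
    by_cases hxc : x = c
    · exact (show (⟨x, hx⟩ : s) = ⟨c, hc⟩ from Subtype.ext hxc) ▸ Reachable.refl _
    · exact Adj.reachable (by exact (hadj x hx hxc).symm)
  intro a b
  exact (key a).trans (key b).symm

section Extract

variable [Fintype V]

lemma anc_ncard_le (T : ElimTree G) (hd : T.depth ≤ 3) (v : V) :
    {u | T.anc u v}.ncard ≤ 2 := by
  have h1 : {u | T.anc u v}.ncard + 1 ≤ T.depth :=
    Finset.le_sup (f := fun v => {u | T.anc u v}.ncard + 1) (Finset.mem_univ v)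
  omega

lemma exists_root_aux (T : ElimTree G) :
    ∀ (n : ℕ) (v : V), {u | T.anc u v}.ncard ≤ n →
    ∃ r, (∀ u, ¬ T.anc u r) ∧ (r = v ∨ T.anc r v) := by
  intro n
  induction n with
  | zero =>
    intro v hv
    have hemp : {u | T.anc u v} = ∅ :=
      Set.ncard_eq_zero (Set.toFinite _) |>.mp (Nat.le_zero.mp hv)
    refine ⟨v, fun u hu => ?_, Or.inl rfl⟩
    have : u ∈ {u | T.anc u v} := hu
    rw [hemp] at this
    exact this
  | succ n ih =>
    intro v hv
    by_cases hn : ∃ u, T.anc u v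
    · obtain ⟨u, hu⟩ := hn
      have hss : {w | T.anc w u} ⊂ {w | T.anc w v} := by
        constructor
        · exact fun w hw => T.trans _ _ _ hw hu
        · intro hcon
          exact T.irrefl u (hcon hu)
      have hlt : {w | T.anc w u}.ncard < {w | T.anc w v}.ncard :=
        Set.ncard_lt_ncard hss (Set.toFinite _)
      obtain ⟨r, hr1, hr2⟩ := ih u (by omega)
      refine ⟨r, hr1, Or.inr ?_⟩
      rcases hr2 with rfl | ha
      · exact hu
      · exact T.trans _ _ _ ha hu
    · push_neg at hn
      exact ⟨v, hn, Or.inl rfl⟩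

lemma root_all (T : ElimTree G) (hconn : G.Connected) {r : V}
    (hr : ∀ u, ¬ T.anc u r) : ∀ v, v = r ∨ T.anc r v := by
  have closed : ∀ u v, (u = r ∨ T.anc r u) → G.Adj u v → (v = r ∨ T.anc r v) := by
    intro u v hu hadj
    rcases T.edgeComp u v hadj with h1 | h1
    · rcases hu with rfl | hu
      · exact Or.inr h1
      · exact Or.inr (T.trans _ _ _ hu h1)
    · rcases hu with rfl | hu
      · exact absurd h1 (hr v)
      · rcases T.chainAnc r v u hu h1 with e | h2 | h2
        · exact Or.inl e.symm
        · exact Or.inr h2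
        · exact absurd h2 (hr v)
  have main : ∀ (x y : V), G.Walk x y → (x = r ∨ T.anc r x) → (y = r ∨ T.anc r y) := by
    intro x y w
    induction w with
    | nil => exact id
    | cons hadj p ih => exact fun hx => ih (closed _ _ hx hadj)
  intro v
  obtain ⟨w⟩ := hconn r v
  exact main r v w (Or.inl rfl)

lemma extract (T : ElimTree G) (hd : T.depth ≤ 3) (hconn : G.Connected) :
    ∃ (r : V) (M : Set V) (md : V → V), PreSpec G r M md ∧
      (T.IsMatched → ∀ m ∈ M, G.Adj r m) := by
  classical
  obtain ⟨v0⟩ := hconn.nonempty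
  obtain ⟨r, hroot, -⟩ := exists_root_aux T 2 v0 (anc_ncard_le T hd v0)
  have hall := root_all T hconn hroot
  have hancr : ∀ v, v ≠ r → T.anc r v := fun v hv => (hall v).resolve_left hv
  -- no vertex has three distinct strict ancestors
  have h3 : ∀ x a b c, T.anc a x → T.anc b x → T.anc c x →
      a ≠ b → a ≠ c → b ≠ c → False := by
    intro x a b c ha hb hc hab hac hbc
    have hsub : ({a, b, c} : Set V) ⊆ {u | T.anc u x} := by
      rintro u (rfl | rfl | rfl) <;> assumption
    have hcard : ({a, b, c} : Set V).ncard = 3 := by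
      rw [Set.ncard_insert_of_notMem (by simp [hab, hac]) (Set.toFinite _),
        Set.ncard_pair hbc]
    have hle := Set.ncard_le_ncard hsub (Set.toFinite _)
    have := anc_ncard_le T hd x
    omega
  have uniqAnc : ∀ x u u', T.anc u x → u ≠ r → T.anc u' x → u' ≠ r → u = u' := by
    intro x u u' hu hur hu' hu'r
    by_contra hne
    have hxr : x ≠ r := fun e => hroot u (e ▸ hu)
    exact h3 x r u u' (hancr x hxr) hu hu' (Ne.symm hur) (Ne.symm hu'r) hne
  set M : Set V := {x | T.anc r x ∧ ∀ u, T.anc u x → u = r} with hM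
  set md : V → V := fun v =>
    if hv : ∃ u, T.anc u v ∧ u ≠ r then hv.choose else r with hmddef
  have hmdspec : ∀ v, v ≠ r → v ∉ M → T.anc (md v) v ∧ md v ≠ r := by
    intro v hvr hvM
    have hex : ∃ u, T.anc u v ∧ u ≠ r := by
      by_contra hcon
      push_neg at hcon
      exact hvM ⟨hancr v hvr, fun u hu => hcon u hu⟩
    rw [hmddef]
    simp only [dif_pos hex]
    exact hex.choose_spec
  have hmdM : ∀ v, v ≠ r → v ∉ M → md v ∈ M := by
    intro v hvr hvM
    obtain ⟨h1, h2⟩ := hmdspec v hvr hvM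
    refine ⟨hancr _ h2, fun u hu => ?_⟩
    by_contra hur
    exact h3 v r u (md v) (hancr v hvr) (T.trans _ _ _ hu h1) h1
      (Ne.symm hur) (Ne.symm h2) (fun e => T.irrefl u (e ▸ hu))
  have hrM : r ∉ M := fun hr => T.irrefl r hr.1
  -- the leaves are adjacent to their centers
  have hadjmd : ∀ v, v ≠ r → v ∉ M → G.Adj (md v) v := by
    intro v hvr hvM
    obtain ⟨hm1, hm2⟩ := hmdspec v hvr hvM
    set S : Set V := {w | w = md v ∨ T.anc (md v) w} with hS
    have hvS : v ∈ S := Or.inr hm1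
    have hmS : md v ∈ S := Or.inl rfl
    have hnbr : ∀ x, x ∈ S → G.Adj v x → x = md v := by
      intro x hxS hvx
      rcases T.edgeComp v x hvx with h1 | h1
      · exfalso
        have hxr : x ≠ r := fun e => hroot v (e ▸ h1)
        exact h3 x r (md v) v (hancr x hxr) (T.trans _ _ _ hm1 h1) h1
          (Ne.symm hm2) (Ne.symm hvr) (fun e => T.irrefl v (by rw [e] at hm1; exact hm1))
      · have hxr : x ≠ r := by
          intro e
          rcases hxS with he | he
          · exact hm2 (he.symm.trans e)
          · exact hroot (md v) (e ▸ he)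
        exact uniqAnc v x (md v) h1 hxr hm1 hm2
    have hconnS := T.subtreeConn (md v)
    obtain ⟨w⟩ := hconnS.preconnected ⟨v, hvS⟩ ⟨md v, hmS⟩
    have hstart : (⟨v, hvS⟩ : S) ∈ {x : S | x.1 = v} := rfl
    have hend : (⟨md v, hmS⟩ : S) ∉ {x : S | x.1 = v} := by
      intro he
      have he2 : md v = v := he
      rw [he2] at hm1
      exact T.irrefl v hm1
    obtain ⟨d, -, hfst, hsnd⟩ := w.exists_boundary_dart _ hstart hend
    have hdadj : (G.induce S).Adj d.fst d.snd := d.adj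
    have hadj2 : G.Adj v d.snd.1 := by
      have : G.Adj d.fst.1 d.snd.1 := hdadj
      rwa [show d.fst.1 = v from hfst] at this
    have hend2 := hnbr d.snd.1 d.snd.2 hadj2
    rw [hend2] at hadj2
    exact hadj2.symm
  refine ⟨r, M, md, ⟨hrM, hmdM, hadjmd, ?_⟩, ?_⟩
  · -- edges
    intro u v huv
    by_cases hur : u = r
    · exact Or.inl hur
    by_cases hvr : v = r
    · exact Or.inr (Or.inl hvr)
    rcases T.edgeComp u v huv with h1 | h1
    · have hvM : v ∉ M := fun hv => hur (hv.2 u h1)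
      have := (hmdspec v hvr hvM).1
      have heq : u = md v := uniqAnc v u (md v) h1 hur this (hmdspec v hvr hvM).2
      exact Or.inr (Or.inr (Or.inl ⟨heq ▸ hmdM v hvr hvM, hvM, hvr, heq⟩))
    · have huM : u ∉ M := fun hu => hvr (hu.2 v h1)
      have := (hmdspec u hur huM).1
      have heq : v = md u := uniqAnc u v (md u) h1 hvr this (hmdspec u hur huM).2
      exact Or.inr (Or.inr (Or.inr ⟨heq ▸ hmdM u hur huM, huM, hur, heq⟩))
  · -- matched trees have centers adjacent to the root
    intro hMat m hm
    have hmr : m ≠ r := fun e => hrM (e ▸ hm)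
    by_cases hch : ∃ w, T.anc m w
    · obtain ⟨w, hw⟩ := hch
      have hwr : w ≠ r := fun e => hroot m (e ▸ hw)
      have hwm : w ≠ m := fun e => T.irrefl m (e ▸ hw)
      have hwleaf : ∀ x, ¬ T.anc w x := by
        intro x hx
        have hxr : x ≠ r := fun e => hroot w (e ▸ hx)
        exact h3 x r m w (hancr x hxr) (T.trans _ _ _ hw hx) hx
          (Ne.symm hmr) (Ne.symm hwr) (fun e => T.irrefl w (e ▸ hw))
      have hpair : ([r, m, w] : List V).Pairwise T.anc := by
        refine List.Pairwise.cons ?_ (List.Pairwise.cons ?_ (List.pairwise_singleton _ _))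
        · rintro b hb
          rcases List.mem_pair.mp hb with rfl | rfl
          · exact hm.1
          · exact T.trans _ _ _ hm.1 hw
        · intro b hb
          rw [List.mem_singleton] at hb
          subst hb
          exact hw
      have hmem : ∀ u, u ∈ ([r, m, w] : List V) ↔ (T.anc u w ∨ u = w) := by
        intro u
        constructor
        · intro hu
          simp only [List.mem_cons, List.mem_singleton, List.not_mem_nil,
            or_false] at hu
          rcases hu with rfl | rfl | rfl
          · exact Or.inl (T.trans _ _ _ hm.1 hw)
          · exact Or.inl hw
          · exact Or.inr rfl
        · rintro (hu | rfl)
          · by_cases hur : u = r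
            · subst hur; exact List.mem_cons_self
            · have : u = m := uniqAnc w u m hu hur hw hmr
              subst this
              simp
          · simp
      have := hMat w hwleaf [r, m, w] hpair hmem
      rcases this with ⟨he, -⟩ | ⟨-, p, hodd, hp, hfirst, -⟩
      · exact absurd (by simpa using he : Even 3) (by decide)
      · have hp1 : p = 1 := by
          obtain ⟨k, hk⟩ := hodd
          simp only [List.length_cons, List.length_nil] at hp
          omega
        subst hp1
        have := hfirst 0 (by omega)
        exact this
    · push_neg at hch
      have hpair : ([r, m] : List V).Pairwise T.anc := by
        refine List.Pairwise.cons ?_ (List.pairwise_singleton _ _)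
        intro b hb
        rw [List.mem_singleton] at hb
        subst hb
        exact hm.1
      have hmem : ∀ u, u ∈ ([r, m] : List V) ↔ (T.anc u m ∨ u = m) := by
        intro u
        constructor
        · intro hu
          rcases List.mem_pair.mp hu with rfl | rfl
          · exact Or.inl hm.1
          · exact Or.inr rfl
        · rintro (hu | rfl)
          · rw [hm.2 u hu]; simp
          · simp
      have := hMat m hch [r, m] hpair hmem
      rcases this with ⟨-, hadj⟩ | ⟨ho, -⟩
      · exact hadj 0 (by simp)
      · exact absurd (by simpa using ho : Odd 2) (by decide)

end Extract

end MTDAux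


namespace MTDAux

variable {V : Type} {G : SimpleGraph V}

section Build

variable [Fintype V]

lemma build (hconn : G.Connected) {r : V} {M : Set V} {md : V → V}
    (h : PreSpec G r M md) (hC : ∀ m ∈ M, G.Adj r m) (hW : ∃ w : V, w ≠ r) :
    ∃ T : ElimTree G, T.IsMatched ∧ T.depth ≤ 3 := by
  classical
  set anc : V → V → Prop := fun x y =>
    (x = r ∧ y ≠ r) ∨ (x ∈ M ∧ y ∉ M ∧ y ≠ r ∧ x = md y) with hancdef
  have hirr : ∀ a, ¬ anc a a := by
    rintro a (⟨rfl, h2⟩ | ⟨h1, h2, _⟩)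
    · exact h2 rfl
    · exact h2 h1
  have hnr : ∀ a, ¬ anc a r := by
    rintro a (⟨_, h2⟩ | ⟨_, _, h2, _⟩) <;> exact h2 rfl
  have hnm : ∀ a b, b ∈ M → a ≠ r → ¬ anc a b := by
    rintro a b hb ha (⟨rfl, _⟩ | ⟨_, h2, _⟩)
    · exact ha rfl
    · exact h2 hb
  have hrAnc : ∀ y, y ≠ r → anc r y := fun y hy => Or.inl ⟨rfl, hy⟩
  have hmdAnc : ∀ y, y ≠ r → y ∉ M → anc (md y) y :=
    fun y h1 h2 => Or.inr ⟨h.hmem y h1 h2, h2, h1, rfl⟩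
  have hancElim : ∀ x y, anc x y → x = r ∨ (y ∉ M ∧ y ≠ r ∧ x = md y ∧ x ∈ M) := by
    rintro x y (⟨rfl, _⟩ | ⟨h1, h2, h3, h4⟩)
    · exact Or.inl rfl
    · exact Or.inr ⟨h2, h3, h4, h1⟩
  have htrans : ∀ a b c, anc a b → anc b c → anc a c := by
    rintro a b c (⟨rfl, hb⟩ | ⟨h1, h2, h3, h4⟩) hbc
    · rcases hancElim b c hbc with rfl | ⟨_, hcr, _, _⟩
      · exact absurd rfl hb
      · exact Or.inl ⟨rfl, hcr⟩
    · rcases hancElim b c hbc with rfl | ⟨_, _, _, hM⟩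
      · exact absurd rfl h3
      · exact absurd hM h2
  have hchain : ∀ a b c, anc a c → anc b c → a = b ∨ anc a b ∨ anc b a := by
    intro a b c hac hbc
    rcases hancElim a c hac with rfl | ⟨hc1, hc2, hc3, hc4⟩
    · rcases hancElim b c hbc with rfl | ⟨_, _, _, hb4⟩
      · exact Or.inl rfl
      · exact Or.inr (Or.inl (Or.inl ⟨rfl, fun e => h.hrM (e ▸ hb4)⟩))
    · rcases hancElim b c hbc with rfl | ⟨_, _, hb3, _⟩
      · exact Or.inr (Or.inr (Or.inl ⟨rfl, fun e => h.hrM (e ▸ hc4)⟩))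
      · exact Or.inl (hc3.trans hb3.symm)
  have hedgeC : ∀ u v, G.Adj u v → anc u v ∨ anc v u := by
    intro u v huv
    rcases h.hedge u v huv with rfl | rfl | ⟨h1, h2, h3, h4⟩ | ⟨h1, h2, h3, h4⟩
    · exact Or.inl (Or.inl ⟨rfl, huv.ne'⟩)
    · exact Or.inr (Or.inl ⟨rfl, huv.ne⟩)
    · exact Or.inl (Or.inr ⟨h1, h2, h3, h4⟩)
    · exact Or.inr (Or.inr ⟨h1, h2, h3, h4⟩)
  have hsub : ∀ v, (G.induce {w | w = v ∨ anc v w}).Connected := by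
    intro v
    by_cases hvr : v = r
    · have huniv : {w | w = v ∨ anc v w} = Set.univ := by
        apply Set.eq_univ_of_forall
        intro w
        by_cases hwr : w = r
        · exact Or.inl (hwr.trans hvr.symm)
        · exact Or.inr (by rw [hvr]; exact hrAnc w hwr)
      rw [huniv]
      exact (induceUnivIso G).connected_iff.mpr hconn
    by_cases hvM : v ∈ M
    · apply star_connected _ v (Or.inl rfl)
      rintro x (rfl | hx) hxc
      · exact absurd rfl hxc
      · rcases hancElim v x hx with rfl | ⟨h1, h2, h3, _⟩
        · exact absurd rfl hvr
        · rw [h3]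
          exact h.hadj x h2 h1
    · -- leaves: singleton subtree
      apply star_connected _ v (Or.inl rfl)
      rintro x (rfl | hx) hxc
      · exact absurd rfl hxc
      · exfalso
        rcases hancElim v x hx with rfl | ⟨_, _, _, hM⟩
        · exact hvr rfl
        · exact hvM hM
  set T : ElimTree G :=
    ⟨anc, htrans, hirr, hchain, hedgeC, hsub⟩ with hT
  have hTdepth : T.depth ≤ 3 := by
    apply Finset.sup_le
    intro v _
    have hsub2 : {u | anc u v} ⊆ {r, md v} := by
      intro u hu
      rcases hancElim u v hu with rfl | ⟨_, _, h3, _⟩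
      · exact Or.inl rfl
      · exact Or.inr (h3 ▸ rfl)
    have h1 : {u | anc u v}.ncard ≤ ({r, md v} : Set V).ncard :=
      Set.ncard_le_ncard hsub2 (Set.toFinite _)
    have h2 : ({r, md v} : Set V).ncard ≤ 2 := by
      refine le_trans (Set.ncard_insert_le _ _) ?_
      simp [Set.ncard_singleton]
    have : {u | T.anc u v}.ncard ≤ 2 := le_trans h1 h2
    omega
  refine ⟨T, ?_, hTdepth⟩
  intro v hleaf l hpair hmem
  have hnodup : l.Nodup := by
    refine List.Pairwise.imp ?_ hpair
    intro a b hab e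
    exact hirr a (e ▸ hab)
  by_cases hvr : v = r
  · exfalso
    obtain ⟨w, hw⟩ := hW
    exact hleaf w (hvr ▸ hrAnc w hw)
  by_cases hvM : v ∈ M
  · -- path [r, v]
    have hmem2 : ∀ u, u ∈ l ↔ u = r ∨ u = v := by
      intro u
      rw [hmem u]
      constructor
      · rintro (hu | rfl)
        · rcases hancElim u v hu with rfl | ⟨hM, _⟩
          · exact Or.inl rfl
          · exact absurd hvM hM
        · exact Or.inr rfl
      · rintro (rfl | rfl)
        · exact Or.inl (hrAnc v hvr)
        · exact Or.inr rfl
    have hrl : r ∈ l := (hmem2 r).mpr (Or.inl rfl)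
    have hvl : v ∈ l := (hmem2 v).mpr (Or.inr rfl)
    have hsub3 : l.toFinset ⊆ {r, v} := by
      intro u hu
      rw [List.mem_toFinset] at hu
      rcases (hmem2 u).mp hu with rfl | rfl <;> simp
    have hsub4 : ({r, v} : Finset V) ⊆ l.toFinset := by
      intro u hu
      rw [List.mem_toFinset]
      rcases Finset.mem_insert.mp hu with rfl | hu
      · exact hrl
      · rw [Finset.mem_singleton] at hu
        subst hu
        exact hvl
    have hlen : l.length = 2 := by
      rw [← List.toFinset_card_of_nodup hnodup,
        Finset.Subset.antisymm hsub3 hsub4, Finset.card_insert_of_notMem (by simp [hvr]; exact fun e => hvr e.symm),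
        Finset.card_singleton]
    obtain ⟨x, y, rfl⟩ := List.length_eq_two.mp hlen
    have hx : x = r ∨ x = v := (hmem2 x).mp (by simp)
    have hy : y = r ∨ y = v := (hmem2 y).mp (by simp)
    have haxy : anc x y := List.rel_of_pairwise_cons hpair (by simp)
    have hxr : x = r ∧ y = v := by
      rcases hx with rfl | rfl <;> rcases hy with rfl | rfl
      · exact absurd haxy (hirr _)
      · exact ⟨rfl, rfl⟩
      · exact absurd haxy (hnr _)
      · exact absurd haxy (hirr _)
    rw [hxr.1, hxr.2]
    left
    refine ⟨by simp, ?_⟩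
    intro j hj
    have hj0 : j = 0 := by simp at hj; omega
    subst hj0
    exact hC v hvM
  · -- path [r, md v, v]
    have hmdM := h.hmem v hvr hvM
    have hmdr : md v ≠ r := fun e => h.hrM (e ▸ hmdM)
    have hmdv : md v ≠ v := fun e => hvM (e ▸ hmdM)
    have hrv : r ≠ v := Ne.symm hvr
    have hrmd : r ≠ md v := Ne.symm hmdr
    have hmem2 : ∀ u, u ∈ l ↔ u = r ∨ u = md v ∨ u = v := by
      intro u
      rw [hmem u]
      constructor
      · rintro (hu | rfl)
        · rcases hancElim u v hu with rfl | ⟨_, _, h3, _⟩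
          · exact Or.inl rfl
          · exact Or.inr (Or.inl h3)
        · exact Or.inr (Or.inr rfl)
      · rintro (rfl | rfl | rfl)
        · exact Or.inl (hrAnc v hvr)
        · exact Or.inl (hmdAnc v hvr hvM)
        · exact Or.inr rfl
    have hrl : r ∈ l := (hmem2 r).mpr (Or.inl rfl)
    have hml : md v ∈ l := (hmem2 (md v)).mpr (Or.inr (Or.inl rfl))
    have hvl : v ∈ l := (hmem2 v).mpr (Or.inr (Or.inr rfl))
    have hsub3 : l.toFinset ⊆ {r, md v, v} := by
      intro u hu
      rw [List.mem_toFinset] at hu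
      rcases (hmem2 u).mp hu with rfl | rfl | rfl <;> simp
    have hsub4 : ({r, md v, v} : Finset V) ⊆ l.toFinset := by
      intro u hu
      rw [List.mem_toFinset]
      rcases Finset.mem_insert.mp hu with rfl | hu
      · exact hrl
      rcases Finset.mem_insert.mp hu with rfl | hu
      · exact hml
      rw [Finset.mem_singleton] at hu
      subst hu
      exact hvl
    have hcard : ({r, md v, v} : Finset V).card = 3 := by
      rw [Finset.card_insert_of_notMem (by simp [hrmd, hrv]),
        Finset.card_insert_of_notMem (by simp [hmdv]), Finset.card_singleton]
    have hlen : l.length = 3 := by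
      rw [← List.toFinset_card_of_nodup hnodup,
        Finset.Subset.antisymm hsub3 hsub4, hcard]
    obtain ⟨x, y, z, rfl⟩ := List.length_eq_three.mp hlen
    have hx : x = r ∨ x = md v ∨ x = v := (hmem2 x).mp (by simp)
    have hy : y = r ∨ y = md v ∨ y = v := (hmem2 y).mp (by simp)
    have hz : z = r ∨ z = md v ∨ z = v := (hmem2 z).mp (by simp)
    have haxy : anc x y := List.rel_of_pairwise_cons hpair (by simp)
    have haxz : anc x z := List.rel_of_pairwise_cons hpair (by simp)
    have hayz : anc y z :=
      List.rel_of_pairwise_cons (List.pairwise_cons.mp hpair).2 (by simp)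
    have hkey : x = r ∧ y = md v ∧ z = v := by
      rcases hx with rfl | rfl | rfl <;> rcases hy with rfl | rfl | rfl <;>
        rcases hz with rfl | rfl | rfl <;>
        first
          | exact ⟨rfl, rfl, rfl⟩
          | exact absurd haxy (hirr _)
          | exact absurd haxz (hirr _)
          | exact absurd hayz (hirr _)
          | exact absurd haxy (hnr _)
          | exact absurd haxz (hnr _)
          | exact absurd hayz (hnr _)
          | exact absurd haxy (hnm _ _ hmdM hvr)
          | exact absurd haxz (hnm _ _ hmdM hvr)
          | exact absurd hayz (hnm _ _ hmdM hvr)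
    rw [hkey.1, hkey.2.1, hkey.2.2]
    right
    refine ⟨by simp only [List.length_cons, List.length_nil]; decide, 1,
      ⟨0, by omega⟩, by simp only [List.length_cons, List.length_nil]; omega, ?_, ?_⟩
    · intro j hj
      have hj0 : j = 0 := by omega
      subst hj0
      exact hC (md v) hmdM
    · intro b hb
      have hb0 : b = 0 := by simp only [List.length_cons, List.length_nil] at hb; omega
      subst hb0
      exact h.hadj v hvr hvM

end Build

end MTDAux



/-- A connected graph of treedepth exactly 3 has matched treedepth 3 iff it
has no induced `C₄`, `P₆`, or `T₃,₃`. -/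
theorem stmt4 {V : Type} [Fintype V] (G : SimpleGraph V) (hG : G.Connected)
    (htd : treedepth G = 3) :
    mtd G = 3 ↔
      (¬ HasInducedSubgraphIso G (SimpleGraph.cycleGraph 4) ∧
       ¬ HasInducedSubgraphIso G (SimpleGraph.pathGraph 6) ∧
       ¬ HasInducedSubgraphIso G tadpole33) := by
  classical
  haveI hVne : Nonempty V := hG.nonempty
  have htdne : {d | ∃ T : ElimTree G, T.depth = d}.Nonempty := by
    by_contra hemp
    rw [Set.not_nonempty_iff_eq_empty] at hemp
    unfold treedepth at htd
    rw [hemp, Nat.sInf_empty] at htd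
    exact absurd htd (by omega)
  have h3td : (3 : ℕ) ∈ {d | ∃ T : ElimTree G, T.depth = d} := by
    have h1 := Nat.sInf_mem htdne
    have h2 : treedepth G = sInf {d | ∃ T : ElimTree G, T.depth = d} := rfl
    rwa [← h2, htd] at h1
  obtain ⟨T0, hT0⟩ := h3td
  constructor
  · intro hmtd
    have hmtdne : {d | ∃ T : ElimTree G, T.IsMatched ∧ T.depth = d}.Nonempty := by
      by_contra hemp
      rw [Set.not_nonempty_iff_eq_empty] at hemp
      unfold mtd at hmtd
      rw [hemp, Nat.sInf_empty] at hmtd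
      exact absurd hmtd (by omega)
    have h3m : (3 : ℕ) ∈ {d | ∃ T : ElimTree G, T.IsMatched ∧ T.depth = d} := by
      have h1 := Nat.sInf_mem hmtdne
      have h2 : mtd G = sInf {d | ∃ T : ElimTree G, T.IsMatched ∧ T.depth = d} := rfl
      rwa [← h2, hmtd] at h1
    obtain ⟨T, hTm, hTd⟩ := h3m
    obtain ⟨r, M, md, hPre, hmat⟩ := MTDAux.extract T (le_of_eq hTd) hG
    have hC := hmat hTm
    refine ⟨?_, ?_, ?_⟩
    · intro hiso
      obtain ⟨f, hinj, hf⟩ := (MTDAux.hasIso_iff G _).mp hiso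
      exact MTDAux.noC4_core hPre hC
        (fun e => absurd (hinj e) (by decide))
        (fun e => absurd (hinj e) (by decide))
        ((hf 0 1).mpr (by decide)) ((hf 1 2).mpr (by decide))
        ((hf 2 3).mpr (by decide)) ((hf 3 0).mpr (by decide))
        (fun e => absurd ((hf 0 2).mp e) (by decide))
        (fun e => absurd ((hf 1 3).mp e) (by decide))
    · intro hiso
      obtain ⟨f, hinj, hf⟩ := (MTDAux.hasIso_iff G _).mp hiso
      exact MTDAux.noP6_core hPre hC
        (fun e => absurd (hinj e) (by decide))
        (fun e => absurd (hinj e) (by decide))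
        (fun e => absurd (hinj e) (by decide))
        (fun e => absurd (hinj e) (by decide))
        (fun e => absurd (hinj e) (by decide))
        (fun e => absurd (hinj e) (by decide))
        (fun e => absurd (hinj e) (by decide))
        (fun e => absurd (hinj e) (by decide))
        (fun e => absurd (hinj e) (by decide))
        (fun e => absurd (hinj e) (by decide))
        ((hf 0 1).mpr (by rw [SimpleGraph.pathGraph_adj]; decide))
        ((hf 1 2).mpr (by rw [SimpleGraph.pathGraph_adj]; decide))
        ((hf 2 3).mpr (by rw [SimpleGraph.pathGraph_adj]; decide))
        ((hf 3 4).mpr (by rw [SimpleGraph.pathGraph_adj]; decide))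
        ((hf 4 5).mpr (by rw [SimpleGraph.pathGraph_adj]; decide))
        (fun e => absurd ((hf 1 3).mp e) (by rw [SimpleGraph.pathGraph_adj]; decide))
        (fun e => absurd ((hf 2 4).mp e) (by rw [SimpleGraph.pathGraph_adj]; decide))
    · intro hiso
      obtain ⟨f, hinj, hf⟩ := (MTDAux.hasIso_iff G _).mp hiso
      exact MTDAux.noT33_core hPre hC
        (fun e => absurd (hinj e) (by decide))
        (fun e => absurd (hinj e) (by decide))
        (fun e => absurd (hinj e) (by decide))
        (fun e => absurd (hinj e) (by decide))
        (fun e => absurd (hinj e) (by decide))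
        (fun e => absurd (hinj e) (by decide))
        (fun e => absurd (hinj e) (by decide))
        (fun e => absurd (hinj e) (by decide))
        (fun e => absurd (hinj e) (by decide))
        (fun e => absurd (hinj e) (by decide))
        (fun e => absurd (hinj e) (by decide))
        ((hf 0 1).mpr (by rw [MTDAux.tadpole33_adj_iff]; decide))
        ((hf 1 2).mpr (by rw [MTDAux.tadpole33_adj_iff]; decide))
        ((hf 0 2).mpr (by rw [MTDAux.tadpole33_adj_iff]; decide))
        ((hf 2 3).mpr (by rw [MTDAux.tadpole33_adj_iff]; decide))
        ((hf 3 4).mpr (by rw [MTDAux.tadpole33_adj_iff]; decide))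
        ((hf 4 5).mpr (by rw [MTDAux.tadpole33_adj_iff]; decide))
        (fun e => absurd ((hf 2 4).mp e) (by rw [MTDAux.tadpole33_adj_iff]; decide))
  · rintro ⟨nC4, nP6, nT33⟩
    obtain ⟨r0, M0, md0, hPre0, -⟩ := MTDAux.extract T0 (le_of_eq hT0) hG
    obtain ⟨r, M, md, hPre, hC⟩ := MTDAux.repair hPre0 hG nC4 nP6 nT33
    have hW : ∃ w : V, w ≠ r := by
      have hne : (Finset.univ : Finset V).Nonempty := Finset.univ_nonempty
      obtain ⟨v, -, hv⟩ := Finset.exists_mem_eq_sup Finset.univ hne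
        (fun v => {u | T0.anc u v}.ncard + 1)
      have hv3 : {u | T0.anc u v}.ncard + 1 = 3 := by
        have h2 : T0.depth = Finset.univ.sup (fun v => {u | T0.anc u v}.ncard + 1) := rfl
        rw [← hv, ← h2, hT0]
      have hcne : {u | T0.anc u v}.ncard ≠ 0 := by omega
      obtain ⟨u, hu⟩ := Set.nonempty_of_ncard_ne_zero hcne
      have huv : u ≠ v := fun e => T0.irrefl v (e ▸ hu)
      by_cases hur : v = r
      · exact ⟨u, fun e => huv (e.trans hur.symm)⟩
      · exact ⟨v, hur⟩
    obtain ⟨T', hT'm, hT'd⟩ := MTDAux.build hG hPre hC hW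
    have hmem' : T'.depth ∈ {d | ∃ T : ElimTree G, T.IsMatched ∧ T.depth = d} :=
      ⟨T', hT'm, rfl⟩
    have hge : ∀ d ∈ {d | ∃ T : ElimTree G, T.IsMatched ∧ T.depth = d}, 3 ≤ d := by
      rintro d ⟨T'', -, hd⟩
      have hmem2 : d ∈ {d | ∃ T : ElimTree G, T.depth = d} := ⟨T'', hd⟩
      have h1 := Nat.sInf_le hmem2
      have h2 : treedepth G = sInf {d | ∃ T : ElimTree G, T.depth = d} := rfl
      rw [← h2, htd] at h1
      exact h1
    have hle : mtd G ≤ 3 := le_trans (Nat.sInf_le hmem') hT'd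
    have hge2 : 3 ≤ mtd G := le_csInf ⟨_, hmem'⟩ hge
    omega
end
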